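/- arXiv:2107.07257 — 12 statements merged into one kernel-verified Lean document; each statement's English description precedes it below -/
import Mathlib

section
/- Fix design points 0 ≤ x₁ < ⋯ < xₙ ≤ 1 and data Y₁,…,Yₙ ∈ ℝ. For every m ∈ [0,1], the function f ↦ Σᵢ (Yᵢ − f(xᵢ))² attains its infimum over the class F^m of functions [0,1] → ℝ that are convex on [0,m], concave on [m,1], and non-decreasing on [0,1]; moreover any two minimizers agree at x₁,…,xₙ. -/
/-!
The traces `(f (x 1), …, f (x n))` of the functions `f` of class `F^m` form a convex set `K`, and
the least squares criterion is `‖Y - trace f‖ ^ 2`; so once `K` is closed, the estimators are the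
traces of the nearest point of `K` to `Y`, which exists and is unique by the parallelogram law.

`K` is closed because it is cut out by finitely many non-strict inequalities in the values:
monotonicity, increasing chord slopes among design points left of `m`, decreasing ones right of
`m`, and every chord on the left, extended to `m`, lying below every chord on the right, extended
to `m`. Conversely, values satisfying these inequalities are interpolated by the maximum of the
chords through consecutive points on the left of `m`, glued at `m` to the minimum of such chords on
the right.
-/

open Set

section Secant

variable {s : Set ℝ} {f : ℝ → ℝ} {a b c : ℝ}

theorem ConvexOn.add_secant_mul_le_of_le_left (hf : ConvexOn ℝ s f) (ha : a ∈ s) (hb : b ∈ s)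
    (hc : c ∈ s) (hab : a < b) (hca : c ≤ a) :
    f a + (f b - f a) / (b - a) * (c - a) ≤ f c := by
  rcases hca.eq_or_lt with rfl | hca
  · simp
  have hsec := mul_le_mul_of_nonpos_right
    (hf.secant_mono ha hc hb hca.ne hab.ne' (hca.le.trans hab.le)) (sub_nonpos.2 hca.le)
  rw [div_mul_cancel₀ _ (sub_ne_zero.2 hca.ne)] at hsec
  linarith

theorem ConvexOn.add_secant_mul_le_of_right_le (hf : ConvexOn ℝ s f) (ha : a ∈ s) (hb : b ∈ s)
    (hc : c ∈ s) (hab : a < b) (hbc : b ≤ c) :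
    f a + (f b - f a) / (b - a) * (c - a) ≤ f c := by
  have hac : a < c := hab.trans_le hbc
  have hsec := mul_le_mul_of_nonneg_right
    (hf.secant_mono ha hb hc hab.ne' hac.ne' hbc) (sub_nonneg.2 hac.le)
  rw [div_mul_cancel₀ _ (sub_ne_zero.2 hac.ne')] at hsec
  linarith

theorem ConcaveOn.le_add_secant_mul_of_le_left (hf : ConcaveOn ℝ s f) (ha : a ∈ s) (hb : b ∈ s)
    (hc : c ∈ s) (hab : a < b) (hca : c ≤ a) :
    f c ≤ f a + (f b - f a) / (b - a) * (c - a) := by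
  have := hf.neg.add_secant_mul_le_of_le_left ha hb hc hab hca
  simp only [Pi.neg_apply, show -f b - -f a = -(f b - f a) by ring, neg_div] at this
  linarith

end Secant

theorem ConvexOn.update_right_endpoint {g : ℝ → ℝ} {a b c : ℝ} (hg : ConvexOn ℝ (Icc a b) g)
    (hc : g b ≤ c) : ConvexOn ℝ (Icc a b) (Function.update g b c) := by
  have hle : ∀ y, g y ≤ Function.update g b c y := by
    intro y
    rcases eq_or_ne y b with rfl | hy
    · simpa using hc
    · simp [hy]
  refine ⟨convex_Icc a b, fun p hp q hq α β hα hβ hαβ => ?_⟩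
  rcases eq_or_ne (α • p + β • q) b with hz | hz
  · rw [smul_eq_mul, smul_eq_mul] at hz
    -- the segment can only reach the right endpoint `b` from points at `b` itself
    have hsum : α * (b - p) + β * (b - q) = 0 := by linear_combination b * hαβ - hz
    obtain ⟨hαp, hβq⟩ := (add_eq_zero_iff_of_nonneg (mul_nonneg hα (sub_nonneg.2 hp.2))
      (mul_nonneg hβ (sub_nonneg.2 hq.2))).1 hsum
    have hα' : α * (Function.update g b c p - c) = 0 := by
      rcases mul_eq_zero.1 hαp with h | h
      · simp [h]
      · simp [show p = b by linarith]
    have hβ' : β * (Function.update g b c q - c) = 0 := by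
      rcases mul_eq_zero.1 hβq with h | h
      · simp [h]
      · simp [show q = b by linarith]
    rw [smul_eq_mul, smul_eq_mul, hz, Function.update_self]
    exact (show α * Function.update g b c p + β * Function.update g b c q = c by
      linear_combination hα' + hβ' + c * hαβ).ge
  · rw [Function.update_of_ne hz]
    exact (hg.2 hp hq hα hβ hαβ).trans (add_le_add (smul_le_smul_of_nonneg_left (hle p) hα)
      (smul_le_smul_of_nonneg_left (hle q) hβ))

theorem exists_forall_norm_sub_le_of_isClosed_of_convex {E : Type*} [NormedAddCommGroup E]
    [InnerProductSpace ℝ E] [CompleteSpace E] {K : Set E} (hne : K.Nonempty) (hcl : IsClosed K)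
    (hcv : Convex ℝ K) (u : E) : ∃ w ∈ K, ∀ w' ∈ K, ‖u - w‖ ≤ ‖u - w'‖ := by
  obtain ⟨w, hw, hmin⟩ := exists_norm_eq_iInf_of_complete_convex hne hcl.isComplete hcv u
  exact ⟨w, hw, fun w' hw' =>
    hmin ▸ ciInf_le ⟨0, forall_mem_range.2 fun _ => norm_nonneg _⟩ (⟨w', hw'⟩ : K)⟩

theorem Convex.eq_of_forall_norm_sub_le {E : Type*} [NormedAddCommGroup E]
    [InnerProductSpace ℝ E] {K : Set E} (hK : Convex ℝ K) {u w₁ w₂ : E} (h₁ : w₁ ∈ K)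
    (h₂ : w₂ ∈ K) (hmin₁ : ∀ w ∈ K, ‖u - w₁‖ ≤ ‖u - w‖) (hmin₂ : ∀ w ∈ K, ‖u - w₂‖ ≤ ‖u - w‖) :
    w₁ = w₂ := by
  set z := (2⁻¹ : ℝ) • w₁ + (2⁻¹ : ℝ) • w₂
  have hz : z ∈ K := hK h₁ h₂ (by norm_num) (by norm_num) (by norm_num)
  have hpar := parallelogram_law_with_norm ℝ (u - w₁) (u - w₂)
  rw [show u - w₁ + (u - w₂) = (2 : ℝ) • (u - z) by module,
    show u - w₁ - (u - w₂) = w₂ - w₁ by abel, norm_smul, Real.norm_two] at hpar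
  have h₁z := hmin₁ z hz
  have h₂z := hmin₂ z hz
  have hsq : ‖w₂ - w₁‖ ^ 2 ≤ 0 := by
    nlinarith [norm_nonneg (u - w₁), norm_nonneg (u - w₂)]
  exact (sub_eq_zero.1 (norm_eq_zero.1 (pow_eq_zero_iff two_ne_zero |>.1
    (le_antisymm hsq (sq_nonneg _))))).symm

namespace SShape

def IsSShape (m : ℝ) (f : ℝ → ℝ) : Prop :=
  ConvexOn ℝ (Icc 0 m) f ∧ ConcaveOn ℝ (Icc m 1) f ∧ MonotoneOn f (Icc 0 1)

theorem convex_setOf_isSShape (m : ℝ) : Convex ℝ {f : ℝ → ℝ | IsSShape m f} := by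
  rintro f ⟨hf₁, hf₂, hf₃⟩ g ⟨hg₁, hg₂, hg₃⟩ a b ha hb -
  refine ⟨(hf₁.smul ha).add (hg₁.smul hb), (hf₂.smul ha).add (hg₂.smul hb), ?_⟩
  exact fun y hy z hz hyz => add_le_add (smul_le_smul_of_nonneg_left (hf₃ hy hz hyz) ha)
    (smul_le_smul_of_nonneg_left (hg₃ hy hz hyz) hb)

theorem isSShape_const (m c : ℝ) : IsSShape m fun _ => c :=
  ⟨convexOn_const c (convex_Icc 0 m), concaveOn_const c (convex_Icc m 1), monotoneOn_const⟩

theorem isSShape_piecewise {m : ℝ} {g h : ℝ → ℝ} (hgc : ConvexOn ℝ (Icc 0 m) g)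
    (hgm : MonotoneOn g (Icc 0 m)) (hhc : ConcaveOn ℝ (Icc m 1) h) (hhm : MonotoneOn h (Icc m 1))
    (hgh : g m ≤ h m) : IsSShape m ((Iio m).piecewise g h) := by
  refine ⟨(hgc.update_right_endpoint hgh).congr fun y hy => ?_, hhc.congr fun y hy => ?_, ?_⟩
  · rcases hy.2.eq_or_lt with rfl | hy'
    · simp
    · simp [hy', hy'.ne]
  · simp [not_lt.2 hy.1]
  · intro p hp q hq hpq
    by_cases hqm : q < m
    · simpa [hqm, hpq.trans_lt hqm] using hgm ⟨hp.1, (hpq.trans_lt hqm).le⟩ ⟨hq.1, hqm.le⟩ hpq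
    by_cases hpm : p < m
    · simp only [piecewise_eq_of_mem _ _ _ (show p ∈ Iio m from hpm),
        piecewise_eq_of_notMem _ _ _ (show q ∉ Iio m from hqm)]
      calc g p ≤ g m := hgm ⟨hp.1, hpm.le⟩ ⟨hp.1.trans hpm.le, le_rfl⟩ hpm.le
        _ ≤ h m := hgh
        _ ≤ h q := hhm ⟨le_rfl, (not_lt.1 hqm).trans hq.2⟩ ⟨not_lt.1 hqm, hq.2⟩ (not_lt.1 hqm)
    · simpa [hpm, hqm] using hhm ⟨not_lt.1 hpm, hp.2⟩ ⟨not_lt.1 hqm, hq.2⟩ hpq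

variable (t : ℕ → ℝ) (m : ℝ) (n : ℕ)

noncomputable def chordSlope (v : ℕ → ℝ) (i j : ℕ) : ℝ := (v j - v i) / (t j - t i)

noncomputable def chordLine (v : ℕ → ℝ) (i j : ℕ) (y : ℝ) : ℝ :=
  v i + chordSlope t v i j * (y - t i)

/-- The inequalities cutting out the traces on `t 0 < ⋯ < t (n - 1)` of the functions of class
`F^m`. In the last one `i = j` and `k = l` are allowed: as `0 / 0 = 0`, `chordLine t v i i` is the
constant `v i`. -/
def SShapedValues (v : ℕ → ℝ) : Prop :=
  (∀ ⦃j k⦄, j ≤ k → k < n → v j ≤ v k) ∧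
  (∀ ⦃i j k⦄, i < j → j < k → k < n → t k ≤ m → chordSlope t v i j ≤ chordSlope t v j k) ∧
  (∀ ⦃i j k⦄, i < j → j < k → k < n → m ≤ t i → chordSlope t v j k ≤ chordSlope t v i j) ∧
  (∀ ⦃i j k l⦄, i ≤ j → j < n → t j ≤ m → m ≤ t k → k ≤ l → l < n →
    chordLine t v i j m ≤ chordLine t v k l m)

variable {t m n} {v : ℕ → ℝ} {i j k : ℕ}

@[simp]
theorem chordLine_self (y : ℝ) : chordLine t v i i y = v i := by
  simp [chordLine, chordSlope]

@[simp]
theorem chordLine_apply_left : chordLine t v i j (t i) = v i := by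
  simp [chordLine]

theorem chordSlope_mul (hij : t i ≠ t j) : chordSlope t v i j * (t j - t i) = v j - v i :=
  div_mul_cancel₀ _ (sub_ne_zero.2 hij.symm)

theorem chordLine_apply_right (hij : t i ≠ t j) : chordLine t v i j (t j) = v j := by
  unfold chordLine
  linear_combination chordSlope_mul (v := v) hij

theorem chordLine_apply_sub_of_left (hki : t k ≠ t i) :
    chordLine t v i j (t k) - v k = (chordSlope t v k i - chordSlope t v i j) * (t i - t k) := by
  unfold chordLine
  linear_combination -chordSlope_mul (v := v) hki

theorem chordLine_apply_sub_of_right (hij : t i ≠ t j) (hjk : t j ≠ t k) :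
    chordLine t v i j (t k) - v k = (chordSlope t v i j - chordSlope t v j k) * (t k - t j) := by
  unfold chordLine
  linear_combination chordSlope_mul (v := v) hij + chordSlope_mul (v := v) hjk

theorem chordSlope_nonneg (ht : t i ≤ t j) (hv : v i ≤ v j) : 0 ≤ chordSlope t v i j :=
  div_nonneg (sub_nonneg.2 hv) (sub_nonneg.2 ht)

theorem convexOn_chordLine : ConvexOn ℝ univ (chordLine t v i j) :=
  ⟨convex_univ, fun y _ z _ a b _ _ hab => le_of_eq <| by
    simp only [chordLine, smul_eq_mul]
    linear_combination (chordSlope t v i j * t i - v i) * hab⟩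

theorem concaveOn_chordLine : ConcaveOn ℝ univ (chordLine t v i j) :=
  ⟨convex_univ, fun y _ z _ a b _ _ hab => le_of_eq <| by
    simp only [chordLine, smul_eq_mul]
    linear_combination (v i - chordSlope t v i j * t i) * hab⟩

theorem monotone_chordLine (hs : 0 ≤ chordSlope t v i j) : Monotone (chordLine t v i j) :=
  fun _ _ hyz => by unfold chordLine; gcongr

theorem chordLine_congr {v' : ℕ → ℝ} (hi : v i = v' i) (hj : v j = v' j) :
    chordLine t v i j = chordLine t v' i j := by
  funext y
  simp only [chordLine, chordSlope, hi, hj]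

@[fun_prop]
theorem continuous_chordSlope (i j : ℕ) : Continuous fun v : ℕ → ℝ => chordSlope t v i j := by
  unfold chordSlope; fun_prop

@[fun_prop]
theorem continuous_chordLine (i j : ℕ) (y : ℝ) :
    Continuous fun v : ℕ → ℝ => chordLine t v i j y := by
  unfold chordLine; fun_prop

variable (t m n) in
theorem isClosed_setOf_sShapedValues : IsClosed {v : ℕ → ℝ | SShapedValues t m n v} := by
  simp only [SShapedValues, ofPred_and, ofPred_forall]
  refine .inter ?_ (.inter ?_ (.inter ?_ ?_)) <;> repeat' (apply isClosed_iInter; intro)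
  all_goals apply isClosed_le <;> fun_prop

theorem SShapedValues.congr {v' : ℕ → ℝ} (h : ∀ j < n, v j = v' j)
    (hv : SShapedValues t m n v) : SShapedValues t m n v' := by
  obtain ⟨hmono, hcvx, hccv, hcross⟩ := hv
  have hs : ∀ ⦃i j⦄, i < n → j < n → chordSlope t v i j = chordSlope t v' i j :=
    fun i j hi hj => by simp only [chordSlope, h i hi, h j hj]
  refine ⟨fun j k hjk hk => ?_, fun i j k hij hjk hk hkm => ?_, fun i j k hij hjk hk hmi => ?_,
    fun i j k l hij hj hjm hmk hkl hl => ?_⟩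
  · rw [← h j (by omega), ← h k hk]
    exact hmono hjk hk
  · rw [← hs (by omega) (by omega), ← hs (by omega) hk]
    exact hcvx hij hjk hk hkm
  · rw [← hs (by omega) hk, ← hs (by omega) (by omega)]
    exact hccv hij hjk hk hmi
  · rw [← chordLine_congr (h i (by omega)) (h j hj), ← chordLine_congr (h k (by omega)) (h l hl)]
    exact hcross hij hj hjm hmk hkl hl

section Trace

variable {f : ℝ → ℝ} (hf : IsSShape m f) (hm : m ∈ Icc 0 1) (ht : StrictMonoOn t (Iio n))
  (ht01 : ∀ j < n, t j ∈ Icc 0 1)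
include hf hm ht ht01

theorem IsSShape.chordLine_le (hij : i ≤ j) (hj : j < n) (hjm : t j ≤ m) :
    chordLine t (fun l => f (t l)) i j m ≤ f m := by
  have hi := (ht01 i (hij.trans_lt hj)).1
  rcases hij.eq_or_lt with rfl | hij
  · exact (chordLine_self _).trans_le (hf.2.2 (ht01 i hj) hm hjm)
  · have htij : t i < t j := ht (hij.trans hj) hj hij
    exact hf.1.add_secant_mul_le_of_right_le ⟨hi, htij.le.trans hjm⟩ ⟨hi.trans htij.le, hjm⟩
      ⟨hm.1, le_rfl⟩ htij hjm

theorem IsSShape.le_chordLine (hkl : k ≤ l) (hl : l < n) (hmk : m ≤ t k) :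
    f m ≤ chordLine t (fun l => f (t l)) k l m := by
  have hl1 := (ht01 l hl).2
  rcases hkl.eq_or_lt with rfl | hkl
  · rw [chordLine_self]
    exact hf.2.2 hm (ht01 k hl) hmk
  · have htkl : t k < t l := ht (hkl.trans hl) hl hkl
    exact hf.2.1.le_add_secant_mul_of_le_left ⟨hmk, htkl.le.trans hl1⟩ ⟨hmk.trans htkl.le, hl1⟩
      ⟨le_rfl, hm.2⟩ htkl hmk

theorem IsSShape.sShapedValues : SShapedValues t m n fun j => f (t j) := by
  refine ⟨fun j k hjk hk => ?_, fun i j k hij hjk hk hkm => ?_, fun i j k hij hjk hk hmi => ?_,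
    fun i j k l hij hj hjm hmk hkl hl => ?_⟩
  · exact hf.2.2 (ht01 j (hjk.trans_lt hk)) (ht01 k hk) (ht.monotoneOn (hjk.trans_lt hk) hk hjk)
  · have hj : j < n := hjk.trans hk
    have hti := (ht01 i (hij.trans hj)).1
    have htik : t i < t k := ht (hij.trans hj) hk (hij.trans hjk)
    exact hf.1.slope_mono_adjacent ⟨hti, htik.le.trans hkm⟩ ⟨hti.trans htik.le, hkm⟩
      (ht (hij.trans hj) hj hij) (ht hj hk hjk)
  · have hj : j < n := hjk.trans hk
    have htk := (ht01 k hk).2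
    have htik : t i < t k := ht (hij.trans hj) hk (hij.trans hjk)
    exact hf.2.1.slope_anti_adjacent ⟨hmi, htik.le.trans htk⟩ ⟨hmi.trans htik.le, htk⟩
      (ht (hij.trans hj) hj hij) (ht hj hk hjk)
  · exact (hf.chordLine_le hm ht ht01 hij hj hjm).trans (hf.le_chordLine hm ht ht01 hkl hl hmk)

end Trace

variable (t m n) in
noncomputable def lowerIdx : Finset ℕ := (Finset.range n).filter (t · < m)

variable (t m n) in
noncomputable def upperIdx : Finset ℕ := (Finset.range n).filter (m ≤ t ·)

@[simp]
theorem mem_lowerIdx : j ∈ lowerIdx t m n ↔ j < n ∧ t j < m := by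
  simp [lowerIdx]

@[simp]
theorem mem_upperIdx : j ∈ upperIdx t m n ↔ j < n ∧ m ≤ t j := by
  simp [upperIdx]

/- At the first (last) design point the truncated index makes the chord to the left (right)
neighbour the constant line through that point. -/
variable (t m n) in
noncomputable def lowerEnvelope (v : ℕ → ℝ) (hA : (lowerIdx t m n).Nonempty) : ℝ → ℝ :=
  (lowerIdx t m n).sup' hA fun l => chordLine t v (l - 1) l

variable (t m n) in
noncomputable def upperEnvelope (v : ℕ → ℝ) (hB : (upperIdx t m n).Nonempty) : ℝ → ℝ :=
  (upperIdx t m n).inf' hB fun l => chordLine t v l (min (l + 1) (n - 1))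

theorem chordLine_apply_of_le (ht : StrictMonoOn t (Iio n)) (hij : i ≤ j) (hj : j < n) :
    chordLine t v i j (t j) = v j := by
  rcases hij.eq_or_lt with rfl | hij
  · exact chordLine_self _
  · exact chordLine_apply_right (ht (hij.trans hj) hj hij).ne

theorem chordSlope_nonneg_of_le (ht : StrictMonoOn t (Iio n)) (hv : SShapedValues t m n v)
    (hij : i ≤ j) (hj : j < n) : 0 ≤ chordSlope t v i j :=
  chordSlope_nonneg (ht.monotoneOn (hij.trans_lt hj) hj hij) (hv.1 hij hj)

theorem convexOn_lowerEnvelope (hA : (lowerIdx t m n).Nonempty) :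
    ConvexOn ℝ univ (lowerEnvelope t m n v hA) :=
  Finset.sup'_induction hA _ (fun _ h₁ _ h₂ => h₁.sup h₂) fun _ _ => convexOn_chordLine

theorem concaveOn_upperEnvelope (hB : (upperIdx t m n).Nonempty) :
    ConcaveOn ℝ univ (upperEnvelope t m n v hB) :=
  Finset.inf'_induction hB _ (fun _ h₁ _ h₂ => h₁.inf h₂) fun _ _ => concaveOn_chordLine

section Envelope

variable (ht : StrictMonoOn t (Iio n)) (hv : SShapedValues t m n v)
include ht hv

theorem chordLine_pred_le {l : ℕ} (hl : l ∈ lowerIdx t m n) (hj : j ∈ lowerIdx t m n) :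
    chordLine t v (l - 1) l (t j) ≤ v j := by
  obtain ⟨⟨hln, hlm⟩, ⟨hjn, hjm⟩⟩ := And.intro (mem_lowerIdx.1 hl) (mem_lowerIdx.1 hj)
  obtain ⟨hmono, hcvx, -, -⟩ := hv
  rcases Nat.eq_zero_or_pos l with rfl | hl0
  · simpa using hmono (Nat.zero_le j) hjn
  have hil : l - 1 < l := by omega
  have hin : l - 1 < n := hil.trans hln
  rcases lt_trichotomy j (l - 1) with hji | rfl | hij
  · have htji : t j < t (l - 1) := ht (hji.trans hin) hin hji
    have hid := chordLine_apply_sub_of_left (v := v) (j := l) htji.ne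
    have := mul_nonpos_of_nonpos_of_nonneg (sub_nonpos.2 (hcvx hji hil hln hlm.le))
      (sub_nonneg.2 htji.le)
    linarith
  · simp
  rcases (show l ≤ j by omega).eq_or_lt with rfl | hlj
  · exact (chordLine_apply_right (ht hin hln hil).ne).le
  · have hid := chordLine_apply_sub_of_right (v := v) (ht hin hln hil).ne (ht hln hjn hlj).ne
    have := mul_nonpos_of_nonpos_of_nonneg (sub_nonpos.2 (hcvx hil hlj hjn hjm.le))
      (sub_nonneg.2 (ht hln hjn hlj).le)
    linarith

theorem le_chordLine_succ {l : ℕ} (hl : l ∈ upperIdx t m n) (hj : j ∈ upperIdx t m n) :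
    v j ≤ chordLine t v l (min (l + 1) (n - 1)) (t j) := by
  obtain ⟨⟨hln, hlm⟩, ⟨hjn, hjm⟩⟩ := And.intro (mem_upperIdx.1 hl) (mem_upperIdx.1 hj)
  obtain ⟨hmono, -, hccv, -⟩ := hv
  rcases (show l + 1 < n ∨ l + 1 = n by omega) with hsucc | hlast
  swap
  · rw [show min (l + 1) (n - 1) = l by omega, chordLine_self]
    exact hmono (by omega) hln
  rw [show min (l + 1) (n - 1) = l + 1 by omega]
  have hl1 : l < l + 1 := l.lt_succ_self
  rcases lt_trichotomy j l with hjl | rfl | hlj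
  · have htjl : t j < t l := ht (hjl.trans hln) hln hjl
    have hid := chordLine_apply_sub_of_left (v := v) (j := l + 1) htjl.ne
    have := mul_nonneg (sub_nonneg.2 (hccv hjl hl1 hsucc hjm)) (sub_nonneg.2 htjl.le)
    linarith
  · simp
  rcases (show l + 1 ≤ j by omega).eq_or_lt with rfl | hlj
  · exact (chordLine_apply_right (ht hln hsucc hl1).ne).ge
  · have hid := chordLine_apply_sub_of_right (v := v) (ht hln hsucc hl1).ne (ht hsucc hjn hlj).ne
    have := mul_nonneg (sub_nonneg.2 (hccv hl1 hlj hjn hlm)) (sub_nonneg.2 (ht hsucc hjn hlj).le)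
    linarith

theorem monotone_lowerEnvelope (hA : (lowerIdx t m n).Nonempty) :
    Monotone (lowerEnvelope t m n v hA) :=
  Finset.sup'_induction hA _ (fun _ h₁ _ h₂ => h₁.sup h₂) fun l hl => monotone_chordLine
    (chordSlope_nonneg_of_le ht hv (Nat.sub_le l 1) (mem_lowerIdx.1 hl).1)

theorem lowerEnvelope_apply (hA : (lowerIdx t m n).Nonempty) (hj : j ∈ lowerIdx t m n) :
    lowerEnvelope t m n v hA (t j) = v j := by
  rw [lowerEnvelope, Finset.sup'_apply]
  refine le_antisymm (Finset.sup'_le _ _ fun l hl => chordLine_pred_le ht hv hl hj) ?_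
  calc v j = chordLine t v (j - 1) j (t j) :=
        (chordLine_apply_of_le ht (Nat.sub_le j 1) (mem_lowerIdx.1 hj).1).symm
    _ ≤ _ := Finset.le_sup' (fun l => chordLine t v (l - 1) l (t j)) hj

theorem monotone_upperEnvelope (hB : (upperIdx t m n).Nonempty) :
    Monotone (upperEnvelope t m n v hB) :=
  Finset.inf'_induction hB _ (fun _ h₁ _ h₂ => h₁.inf h₂) fun l hl => by
    have hln := (mem_upperIdx.1 hl).1
    exact monotone_chordLine (chordSlope_nonneg_of_le ht hv (by omega) (by omega))

theorem upperEnvelope_apply (hB : (upperIdx t m n).Nonempty) (hj : j ∈ upperIdx t m n) :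
    upperEnvelope t m n v hB (t j) = v j := by
  rw [upperEnvelope, Finset.inf'_apply]
  refine le_antisymm ?_ (Finset.le_inf' _ _ fun l hl => le_chordLine_succ ht hv hl hj)
  exact (Finset.inf'_le (fun l => chordLine t v l (min (l + 1) (n - 1)) (t j)) hj).trans_eq
    chordLine_apply_left

omit ht in
theorem lowerEnvelope_le_upperEnvelope (hA : (lowerIdx t m n).Nonempty)
    (hB : (upperIdx t m n).Nonempty) : lowerEnvelope t m n v hA m ≤ upperEnvelope t m n v hB m := by
  rw [lowerEnvelope, upperEnvelope, Finset.sup'_apply, Finset.inf'_apply]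
  refine Finset.sup'_le _ _ fun l hl => Finset.le_inf' _ _ fun k hk => ?_
  rw [mem_lowerIdx] at hl
  rw [mem_upperIdx] at hk
  exact hv.2.2.2 (Nat.sub_le l 1) hl.1 hl.2.le hk.2 (by omega) (by omega)

theorem SShapedValues.exists_isSShape : ∃ f, IsSShape m f ∧ ∀ j < n, f (t j) = v j := by
  obtain ⟨g, h, ⟨hgc, hgm, hgv⟩, ⟨hhc, hhm, hhv⟩, hgh⟩ : ∃ g h : ℝ → ℝ,
      (ConvexOn ℝ univ g ∧ Monotone g ∧ ∀ j ∈ lowerIdx t m n, g (t j) = v j) ∧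
      (ConcaveOn ℝ univ h ∧ Monotone h ∧ ∀ j ∈ upperIdx t m n, h (t j) = v j) ∧ g m ≤ h m := by
    rcases (lowerIdx t m n).eq_empty_or_nonempty with hA | hA <;>
      rcases (upperIdx t m n).eq_empty_or_nonempty with hB | hB
    · exact ⟨fun _ => 0, fun _ => 0, ⟨convexOn_const 0 convex_univ, monotone_const, by simp [hA]⟩,
        ⟨concaveOn_const 0 convex_univ, monotone_const, by simp [hB]⟩, le_rfl⟩
    · exact ⟨fun _ => upperEnvelope t m n v hB m, upperEnvelope t m n v hB,
        ⟨convexOn_const _ convex_univ, monotone_const, by simp [hA]⟩,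
        ⟨concaveOn_upperEnvelope hB, monotone_upperEnvelope ht hv hB,
          fun _ => upperEnvelope_apply ht hv hB⟩, le_rfl⟩
    · exact ⟨lowerEnvelope t m n v hA, fun _ => lowerEnvelope t m n v hA m,
        ⟨convexOn_lowerEnvelope hA, monotone_lowerEnvelope ht hv hA,
          fun _ => lowerEnvelope_apply ht hv hA⟩,
        ⟨concaveOn_const _ convex_univ, monotone_const, by simp [hB]⟩, le_rfl⟩
    · exact ⟨lowerEnvelope t m n v hA, upperEnvelope t m n v hB,
        ⟨convexOn_lowerEnvelope hA, monotone_lowerEnvelope ht hv hA,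
          fun _ => lowerEnvelope_apply ht hv hA⟩,
        ⟨concaveOn_upperEnvelope hB, monotone_upperEnvelope ht hv hB,
          fun _ => upperEnvelope_apply ht hv hB⟩, lowerEnvelope_le_upperEnvelope hv hA hB⟩
  refine ⟨(Iio m).piecewise g h, isSShape_piecewise (hgc.subset (subset_univ _) (convex_Icc 0 m))
    (hgm.monotoneOn _) (hhc.subset (subset_univ _) (convex_Icc m 1)) (hhm.monotoneOn _) hgh,
    fun j hj => ?_⟩
  by_cases hjm : t j < m
  · rw [piecewise_eq_of_mem _ _ _ (show t j ∈ Iio m from hjm)]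
    exact hgv j (mem_lowerIdx.2 ⟨hj, hjm⟩)
  · rw [piecewise_eq_of_notMem _ _ _ (show t j ∉ Iio m from hjm)]
    exact hhv j (mem_upperIdx.2 ⟨hj, not_lt.1 hjm⟩)

end Envelope

variable (t n) in
noncomputable def traceVec (f : ℝ → ℝ) : EuclideanSpace ℝ (Fin n) := WithLp.toLp 2 fun j => f (t j)

variable (t m n) in
def traceSet : Set (EuclideanSpace ℝ (Fin n)) := traceVec t n '' {f | IsSShape m f}

variable (t m n) in
theorem convex_traceSet : Convex ℝ (traceSet t m n) := by
  rintro _ ⟨f, hf, rfl⟩ _ ⟨g, hg, rfl⟩ a b ha hb hab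
  exact ⟨a • f + b • g, convex_setOf_isSShape m hf hg ha hb hab, rfl⟩

variable (t m n) in
theorem traceSet_nonempty : (traceSet t m n).Nonempty :=
  ⟨_, fun _ => 0, isSShape_const m 0, rfl⟩

theorem isClosed_traceSet (hm : m ∈ Icc 0 1) (ht : StrictMonoOn t (Iio n))
    (ht01 : ∀ j < n, t j ∈ Icc 0 1) : IsClosed (traceSet t m n) := by
  let toSeq : EuclideanSpace ℝ (Fin n) → ℕ → ℝ := fun w j => if h : j < n then w ⟨j, h⟩ else 0
  have hcont : Continuous toSeq := continuous_pi fun j => by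
    by_cases h : j < n <;> simp only [toSeq, h, dite_true, dite_false] <;> fun_prop
  convert (isClosed_setOf_sShapedValues t m n).preimage hcont
  ext w
  constructor
  · rintro ⟨f, hf, rfl⟩
    exact (hf.sShapedValues hm ht ht01).congr fun j hj => by simp [toSeq, traceVec, hj]
  · intro hw
    obtain ⟨f, hf, hfw⟩ := hw.exists_isSShape ht
    exact ⟨f, hf, by ext j; simpa [toSeq, traceVec] using hfw j j.2⟩

theorem sum_Icc_sq_sub_eq_norm_sq (x Y : ℕ → ℝ) (f : ℝ → ℝ) :
    ∑ i ∈ Finset.Icc 1 n, (Y i - f (x i)) ^ 2 =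
      ‖WithLp.toLp 2 (fun j : Fin n => Y (j + 1)) - traceVec (fun j => x (j + 1)) n f‖ ^ 2 := by
  rw [EuclideanSpace.norm_sq_eq, ← Finset.Ico_add_one_right_eq_Icc, Finset.sum_Ico_eq_sum_range,
    Nat.add_sub_cancel, Finset.sum_range]
  simp [traceVec, add_comm]

end SShape

open SShape

/-- Existence of an S-shaped least squares estimator with prescribed inflection
point `m`, and its uniqueness at the design points. -/
theorem stmt2 (n : ℕ) (x Y : ℕ → ℝ)
    (hx : ∀ i, 1 ≤ i → i < n → x i < x (i + 1))
    (hx0 : 0 ≤ x 1) (hx1 : x n ≤ 1)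
    (m : ℝ) (hm : m ∈ Set.Icc (0 : ℝ) 1) :
    let Fm : (ℝ → ℝ) → Prop := fun f =>
      ConvexOn ℝ (Set.Icc 0 m) f ∧ ConcaveOn ℝ (Set.Icc m 1) f ∧
        MonotoneOn f (Set.Icc (0 : ℝ) 1)
    let S : (ℝ → ℝ) → ℝ := fun f => ∑ i ∈ Finset.Icc 1 n, (Y i - f (x i)) ^ 2
    (∃ f, Fm f ∧ ∀ g, Fm g → S f ≤ S g) ∧
    (∀ f g, Fm f → Fm g → (∀ h, Fm h → S f ≤ S h) → (∀ h, Fm h → S g ≤ S h) →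
      ∀ i ∈ Finset.Icc 1 n, f (x i) = g (x i)) := by
  intro Fm S
  set t : ℕ → ℝ := fun j => x (j + 1)
  have ht : StrictMonoOn t (Iio n) :=
    strictMonoOn_of_lt_succ ordConnected_Iio fun j _ _ hj => hx (j + 1) (by omega) hj
  have ht01 : ∀ j < n, t j ∈ Icc 0 1 := fun j hj =>
    ⟨hx0.trans (ht.monotoneOn (j.zero_le.trans_lt hj) hj j.zero_le),
      (ht.monotoneOn hj (Nat.sub_one_lt_of_lt hj) (by omega)).trans
        (by simpa [t, Nat.sub_add_cancel (j.zero_le.trans_lt hj)] using hx1)⟩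
  set u : EuclideanSpace ℝ (Fin n) := WithLp.toLp 2 fun j => Y (j + 1)
  have hS_le : ∀ f g, S f ≤ S g ↔ ‖u - traceVec t n f‖ ≤ ‖u - traceVec t n g‖ := fun f g => by
    rw [show S f = _ from sum_Icc_sq_sub_eq_norm_sq x Y f,
      show S g = _ from sum_Icc_sq_sub_eq_norm_sq x Y g]
    exact pow_le_pow_iff_left₀ (norm_nonneg _) (norm_nonneg _) two_ne_zero
  obtain ⟨_, ⟨f, hf, rfl⟩, hmin⟩ := exists_forall_norm_sub_le_of_isClosed_of_convex
    (traceSet_nonempty t m n) (isClosed_traceSet hm ht ht01) (convex_traceSet t m n) u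
  refine ⟨⟨f, hf, fun g hg => (hS_le f g).2 (hmin _ ⟨g, hg, rfl⟩)⟩,
    fun f g hf hg hfmin hgmin i hi => ?_⟩
  have hfg : traceVec t n f = traceVec t n g :=
    (convex_traceSet t m n).eq_of_forall_norm_sub_le ⟨f, hf, rfl⟩ ⟨g, hg, rfl⟩
      (by rintro _ ⟨h, hh, rfl⟩; exact (hS_le f h).1 (hfmin h hh))
      (by rintro _ ⟨h, hh, rfl⟩; exact (hS_le g h).1 (hgmin h hh))
  obtain ⟨hi1, hin⟩ := Finset.mem_Icc.1 hi
  simpa [traceVec, t, Nat.sub_add_cancel hi1] using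
    congrArg (fun w : EuclideanSpace ℝ (Fin n) => w ⟨i - 1, by omega⟩) hfg
end

section
/- Fix design points 0 ≤ x₁ < ⋯ < xₙ ≤ 1 and data Y₁,…,Yₙ ∈ ℝ. Let F = ⋃_{m ∈ [0,1]} F^m be the class of all S-shaped functions on [0,1]. Then f ↦ Σᵢ (Yᵢ − f(xᵢ))² attains its infimum over F, and there exists a minimizer with an inflection point in {x₁,…,xₙ}. -/
/-!
Evaluated at the nodes, an S-shaped function gives a nondecreasing vector whose chord slopes
increase up to some node `x j` and decrease from it on; only the chord straddling the inflection
point needs an argument, and it is at least as steep as one of its neighbours. Conversely, such a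
vector is interpolated by the maximum of its chord lines left of `x j`, glued to the minimum of its
chord lines right of `x j`, an S-shaped function with inflection point `x j`. Minimizing over `F`
is thus least squares over a finite union of closed cones, which has a minimizer by compactness.
-/

open Set

section

variable {x v : ℕ → ℝ} {n j p q r k i : ℕ}

noncomputable def chordSlope (x v : ℕ → ℝ) (i : ℕ) : ℝ :=
  (v (i + 1) - v i) / (x (i + 1) - x i)

noncomputable def chordLine (x v : ℕ → ℝ) (k : ℕ) (t : ℝ) : ℝ :=
  v k + chordSlope x v k * (t - x k)

lemma chordSlope_neg : chordSlope x (-v) = -chordSlope x v := by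
  ext i
  simp only [chordSlope, Pi.neg_apply]
  ring

lemma chordSlope_nonneg (hx : x k < x (k + 1)) (hv : v k ≤ v (k + 1)) : 0 ≤ chordSlope x v k :=
  div_nonneg (sub_nonneg.2 hv) (sub_nonneg.2 hx.le)

lemma chordSlope_comp (g : ℝ → ℝ) : chordSlope x (g ∘ x) k = slope g (x k) (x (k + 1)) := by
  simp [chordSlope, slope_def_field]

lemma chordLine_apply_self : chordLine x v k (x k) = v k := by
  simp [chordLine]

lemma chordLine_apply_add_one (h : x k ≠ x (k + 1)) :
    chordLine x v k (x (k + 1)) = v (k + 1) := by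
  have : x (k + 1) - x k ≠ 0 := sub_ne_zero.2 h.symm
  simp only [chordLine, chordSlope]
  field_simp
  ring

lemma sub_chordLine_add_one (h : x i ≠ x (i + 1)) :
    v (i + 1) - chordLine x v k (x (i + 1)) =
      v i - chordLine x v k (x i) + (chordSlope x v i - chordSlope x v k) * (x (i + 1) - x i) := by
  have : x (i + 1) - x i ≠ 0 := sub_ne_zero.2 h.symm
  simp only [chordLine, chordSlope]
  field_simp
  ring

lemma convexOn_chordLine : ConvexOn ℝ univ (chordLine x v k) :=
  ⟨convex_univ, fun a _ b _ μ ν _ _ hμν => le_of_eq <| by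
    simp only [chordLine, smul_eq_mul]
    linear_combination (chordSlope x v k * x k - v k) * hμν⟩

lemma chordLine_le (hx : StrictMonoOn x (Icc p q)) (hs : MonotoneOn (chordSlope x v) (Ico p q))
    (hk : k ∈ Ico p q) (hi : i ∈ Icc p q) : chordLine x v k (x i) ≤ v i := by
  set D : ℕ → ℝ := fun i => v i - chordLine x v k (x i)
  have hgap : ∀ a ∈ Ico p q, x a < x (a + 1) := fun a ha =>
    hx ⟨ha.1, ha.2.le⟩ ⟨ha.1.trans a.le_succ, ha.2⟩ a.lt_succ_self
  have hstep : ∀ a ∈ Ico p q,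
      D (a + 1) = D a + (chordSlope x v a - chordSlope x v k) * (x (a + 1) - x a) :=
    fun a ha => sub_chordLine_add_one (hgap a ha).ne
  have hDk : D k = 0 := by simp [D, chordLine_apply_self]
  suffices 0 ≤ D i by simpa [D] using this
  -- `D` increases right of `k` and decreases left of it
  rcases le_total k i with hki | hik
  · have hmono : MonotoneOn D (Icc k q) := monotoneOn_of_le_add_one ordConnected_Icc
      fun a _ ha ha' => by
        have haI : a ∈ Ico p q := ⟨hk.1.trans ha.1, by have := ha'.2; lia⟩
        rw [hstep a haI]
        have := hs hk haI ha.1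
        nlinarith [hgap a haI]
    exact hDk ▸ hmono ⟨le_rfl, hk.2.le⟩ ⟨hki, hi.2⟩ hki
  · have hanti : AntitoneOn D (Icc p k) := antitoneOn_of_add_one_le ordConnected_Icc
      fun a _ ha ha' => by
        have haI : a ∈ Ico p q := ⟨ha.1, by have := ha'.2; have := hk.2; lia⟩
        rw [hstep a haI]
        have := hs haI hk (by have := ha'.2; lia)
        nlinarith [hgap a haI]
    exact hDk ▸ hanti ⟨hi.1, hik⟩ ⟨hk.1, le_rfl⟩ hik

/-- The index `none` stands for the constant `v r`, which keeps the maximum nonempty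
when `p = q`. -/
noncomputable def chordEnvelope (x v : ℕ → ℝ) (p q r : ℕ) : ℝ → ℝ :=
  (Finset.Ico p q).insertNone.sup' Finset.insertNone_nonempty
    fun o => o.elim (fun _ => v r) (chordLine x v)

lemma convexOn_chordEnvelope : ConvexOn ℝ univ (chordEnvelope x v p q r) :=
  Finset.sup'_induction _ _ (fun _ h₁ _ h₂ => h₁.sup h₂) fun o _ => by
    cases o
    · exact convexOn_const _ convex_univ
    · exact convexOn_chordLine

lemma monotone_chordEnvelope (hs : ∀ k ∈ Ico p q, 0 ≤ chordSlope x v k) :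
    Monotone (chordEnvelope x v p q r) :=
  Finset.sup'_induction _ _ (fun _ h₁ _ h₂ => h₁.sup h₂) fun o ho => by
    cases o with
    | none => exact monotone_const
    | some k =>
      intro a b hab
      have := hs k (Finset.mem_Ico.1 (Finset.some_mem_insertNone.1 ho))
      simp only [Option.elim, chordLine]
      gcongr

lemma antitone_chordEnvelope (hs : ∀ k ∈ Ico p q, chordSlope x v k ≤ 0) :
    Antitone (chordEnvelope x v p q r) :=
  Finset.sup'_induction _ _ (fun _ h₁ _ h₂ => h₁.sup h₂) fun o ho => by
    cases o with
    | none => exact antitone_const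
    | some k =>
      intro a b hab
      have := hs k (Finset.mem_Ico.1 (Finset.some_mem_insertNone.1 ho))
      simp only [Option.elim, chordLine]
      nlinarith

lemma chordEnvelope_apply (hx : StrictMonoOn x (Icc p q))
    (hs : MonotoneOn (chordSlope x v) (Ico p q)) (hr : r ∈ Icc p q)
    (hmin : IsMinOn v (Icc p q) r) (hi : i ∈ Icc p q) : chordEnvelope x v p q r (x i) = v i := by
  simp only [chordEnvelope, Finset.sup'_apply]
  apply le_antisymm
  · refine Finset.sup'_le _ _ fun o ho => ?_
    cases o with
    | none => exact hmin hi
    | some k => exact chordLine_le hx hs (by simpa using Finset.some_mem_insertNone.1 ho) hi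
  · by_cases hir : i = r
    · subst hir
      exact Finset.le_sup'_of_le _ Finset.none_mem_insertNone le_rfl
    rcases lt_or_eq_of_le hi.2 with hiq | rfl
    · exact Finset.le_sup'_of_le _ (Finset.some_mem_insertNone.2 (by simp [hi.1, hiq]))
        chordLine_apply_self.ge
    · obtain ⟨k, rfl⟩ : ∃ k, i = k + 1 := ⟨i - 1, by have := hr.2; have := hr.1; lia⟩
      have hk : k ∈ Ico p (k + 1) := ⟨by have := hr.1; have := hr.2; lia, by lia⟩
      exact Finset.le_sup'_of_le _ (Finset.some_mem_insertNone.2 (by simpa using hk))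
        (chordLine_apply_add_one (hx ⟨hk.1, hk.2.le⟩ hi (by lia)).ne).ge

/-- The cone `Γ^{x_j}` for the nodes `x 1, …, x n`. -/
def sShapedCone (x : ℕ → ℝ) (n j : ℕ) : Set (ℕ → ℝ) :=
  {v | MonotoneOn v (Icc 1 n) ∧ MonotoneOn (chordSlope x v) (Ico 1 j) ∧
    AntitoneOn (chordSlope x v) (Ico j n)}

lemma isClosed_sShapedCone : IsClosed (sShapedCone x n j) := by
  have hcont : Continuous fun v : ℕ → ℝ => chordSlope x v :=
    continuous_pi fun i => by unfold chordSlope; fun_prop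
  exact isClosed_monotoneOn.inter
    ((isClosed_monotoneOn.preimage hcont).inter (isClosed_antitoneOn.preimage hcont))

lemma mem_sShapedCone_of_eqOn {w : ℕ → ℝ} (hj : j ∈ Icc 1 n) (hvw : EqOn v w (Icc 1 n))
    (hv : v ∈ sShapedCone x n j) : w ∈ sShapedCone x n j := by
  have hs : EqOn (chordSlope x v) (chordSlope x w) (Ico 1 n) := fun k hk => by
    simp only [chordSlope, hvw ⟨hk.1, hk.2.le⟩, hvw ⟨by have := hk.1; lia, hk.2⟩]
  exact ⟨hv.1.congr hvw, hv.2.1.congr (hs.mono (Ico_subset_Ico_right hj.2)),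
    hv.2.2.congr (hs.mono (Ico_subset_Ico_left hj.1))⟩

theorem exists_sShaped_interpolant (hx : StrictMonoOn x (Icc 1 n)) (hj : j ∈ Icc 1 n)
    (hv : v ∈ sShapedCone x n j) :
    ∃ f : ℝ → ℝ, ConvexOn ℝ (Iic (x j)) f ∧ ConcaveOn ℝ (Ici (x j)) f ∧
      Monotone f ∧ ∀ i ∈ Icc 1 n, f (x i) = v i := by
  obtain ⟨hmono, hconv, hconc⟩ := hv
  set E₁ := chordEnvelope x v 1 j 1
  set E₂ := chordEnvelope x (-v) j n n
  have hslope : ∀ k ∈ Ico 1 n, 0 ≤ chordSlope x v k := fun k hk =>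
    chordSlope_nonneg (hx ⟨hk.1, hk.2.le⟩ ⟨by lia, hk.2⟩ (by lia))
      (hmono ⟨hk.1, hk.2.le⟩ ⟨by lia, hk.2⟩ (by lia))
  have hE₁ : ∀ i ∈ Icc 1 j, E₁ (x i) = v i := fun i hi =>
    chordEnvelope_apply (hx.mono (Icc_subset_Icc_right hj.2)) hconv ⟨le_rfl, hj.1⟩
      (fun i hi => hmono ⟨le_rfl, hj.1.trans hj.2⟩ ⟨hi.1, hi.2.trans hj.2⟩ hi.1) hi
  have hE₂ : ∀ i ∈ Icc j n, E₂ (x i) = -v i := fun i hi =>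
    chordEnvelope_apply (hx.mono (Icc_subset_Icc_left hj.1)) (chordSlope_neg ▸ hconc.neg)
      ⟨hj.2, le_rfl⟩ (fun i hi => neg_le_neg <|
        hmono ⟨hj.1.trans hi.1, hi.2⟩ ⟨hj.1.trans hj.2, le_rfl⟩ hi.2) hi
  have hglue : E₁ (x j) = -E₂ (x j) := by
    rw [hE₁ j ⟨hj.1, le_rfl⟩, hE₂ j ⟨le_rfl, hj.2⟩, neg_neg]
  set f : ℝ → ℝ := fun t => if t ≤ x j then E₁ t else -E₂ t
  have hf₁ : EqOn E₁ f (Iic (x j)) := fun t ht => (if_pos ht).symm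
  have hf₂ : EqOn (-E₂) f (Ici (x j)) := fun t ht => by
    rcases eq_or_lt_of_le (mem_Ici.1 ht) with rfl | h
    · simp [f, hglue]
    · simp [f, not_le.2 h]
  refine ⟨f, ?_, ?_, ?_, fun i hi => ?_⟩
  · exact (convexOn_chordEnvelope.subset (subset_univ _) (convex_Iic _)).congr hf₁
  · exact (convexOn_chordEnvelope.neg.subset (subset_univ _) (convex_Ici _)).congr hf₂
  · refine MonotoneOn.Iic_union_Ici (((monotone_chordEnvelope ?_).monotoneOn _).congr hf₁)
      (((antitone_chordEnvelope ?_).neg.monotoneOn _).congr hf₂)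
    · exact fun k hk => hslope k (Ico_subset_Ico_right hj.2 hk)
    · intro k hk
      rw [chordSlope_neg, Pi.neg_apply, neg_nonpos]
      exact hslope k (Ico_subset_Ico_left hj.1 hk)
  · rcases le_total i j with hij | hji
    · rw [← hf₁ (hx.monotoneOn hi hj hij), hE₁ i ⟨hi.1, hij⟩]
    · rw [← hf₂ (hx.monotoneOn hj hi hji), Pi.neg_apply, hE₂ i ⟨hji, hi.2⟩, neg_neg]

lemma ConvexOn.monotoneOn_chordSlope {s : Set ℝ} {g : ℝ → ℝ} (hg : ConvexOn ℝ s g)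
    (hx : StrictMonoOn x (Icc p q)) (hxs : ∀ i ∈ Icc p q, x i ∈ s) :
    MonotoneOn (chordSlope x (g ∘ x)) (Ico p q) :=
  monotoneOn_of_le_add_one ordConnected_Ico fun a _ ha ha' => by
    have h₀ : a ∈ Icc p q := ⟨ha.1, ha.2.le⟩
    have h₁ : a + 1 ∈ Icc p q := ⟨ha'.1, ha'.2.le⟩
    have h₂ : a + 2 ∈ Icc p q := ⟨by have := ha.1; lia, ha'.2⟩
    exact hg.slope_mono_adjacent (hxs a h₀) (hxs (a + 2) h₂) (hx h₀ h₁ (by lia))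
      (hx h₁ h₂ (by lia))

lemma ConcaveOn.antitoneOn_chordSlope {s : Set ℝ} {g : ℝ → ℝ} (hg : ConcaveOn ℝ s g)
    (hx : StrictMonoOn x (Icc p q)) (hxs : ∀ i ∈ Icc p q, x i ∈ s) :
    AntitoneOn (chordSlope x (g ∘ x)) (Ico p q) := by
  have := hg.neg.monotoneOn_chordSlope hx hxs
  rw [show (-g) ∘ x = -(g ∘ x) from rfl, chordSlope_neg] at this
  simpa using this.neg

lemma min_slope_le_slope (g : ℝ → ℝ) {a b c : ℝ} (hab : a < b) (hbc : b < c) :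
    min (slope g a b) (slope g b c) ≤ slope g a c := by
  rw [← sub_div_sub_smul_slope_add_sub_div_sub_smul_slope g a b c, smul_eq_mul, smul_eq_mul]
  have hw : (b - a) / (c - a) + (c - b) / (c - a) = 1 := by
    field_simp [(sub_pos.2 (hab.trans hbc)).ne']
    ring
  have hw₁ : 0 ≤ (b - a) / (c - a) := div_nonneg (by linarith) (by linarith)
  have hw₂ : 0 ≤ (c - b) / (c - a) := div_nonneg (by linarith) (by linarith)
  calc min (slope g a b) (slope g b c)
      = ((b - a) / (c - a) + (c - b) / (c - a)) * min (slope g a b) (slope g b c) := by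
        rw [hw, one_mul]
    _ ≤ _ := by
        rw [add_mul]
        gcongr
        exacts [min_le_left _ _, min_le_right _ _]

lemma min_slope_le_slope_of_convexOn_concaveOn {g : ℝ → ℝ} {m a b c d : ℝ}
    (hconv : ConvexOn ℝ (Icc a m) g) (hconc : ConcaveOn ℝ (Icc m d) g)
    (hab : a < b) (hbm : b < m) (hmc : m ≤ c) (hcd : c < d) :
    min (slope g a b) (slope g c d) ≤ slope g b c := by
  have h₁ : slope g a b ≤ slope g b m := by
    simpa only [slope_def_field] using hconv.slope_mono_adjacent ⟨le_rfl, (hab.trans hbm).le⟩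
      ⟨(hab.trans hbm).le, le_rfl⟩ hab hbm
  rcases eq_or_lt_of_le hmc with rfl | hmc
  · exact min_le_of_left_le h₁
  have h₂ : slope g c d ≤ slope g m c := by
    simpa only [slope_def_field] using hconc.slope_anti_adjacent ⟨le_rfl, (hmc.trans hcd).le⟩
      ⟨(hmc.trans hcd).le, le_rfl⟩ hmc hcd
  exact (min_le_min h₁ h₂).trans (min_slope_le_slope g hbm hmc)

theorem exists_comp_mem_sShapedCone {g : ℝ → ℝ} {m : ℝ} (hn : 1 ≤ n)
    (hx : StrictMonoOn x (Icc 1 n))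
    (hx01 : ∀ i ∈ Icc 1 n, x i ∈ Icc (0 : ℝ) 1) (hconv : ConvexOn ℝ (Icc 0 m) g)
    (hconc : ConcaveOn ℝ (Icc m 1) g) (hmono : MonotoneOn g (Icc 0 1)) :
    ∃ j ∈ Icc 1 n, g ∘ x ∈ sShapedCone x n j := by
  -- `c` is the number of nodes left of `m`; only the chord `[x c, x (c + 1)]` can straddle `m`
  set c := Nat.findGreatest (fun i => x i < m) n with hcdef
  have hcn : c ≤ n := Nat.findGreatest_le n
  have hlt : ∀ i ∈ Icc 1 c, x i < m := fun i hi =>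
    (hx.monotoneOn ⟨hi.1, hi.2.trans hcn⟩ ⟨hi.1.trans hi.2, hcn⟩ hi.2).trans_lt
      (Nat.findGreatest_of_ne_zero hcdef.symm (by have := hi.1; have := hi.2; lia))
  have hleft : ∀ i ∈ Icc 1 c, x i ∈ Icc 0 m := fun i hi =>
    ⟨(hx01 i ⟨hi.1, hi.2.trans hcn⟩).1, (hlt i hi).le⟩
  have hright : ∀ i ∈ Icc (c + 1) n, x i ∈ Icc m 1 := fun i hi =>
    ⟨not_lt.1 (Nat.findGreatest_is_greatest (P := fun i => x i < m) (by have := hi.1; lia) hi.2),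
      (hx01 i ⟨by have := hi.1; lia, hi.2⟩).2⟩
  clear_value c
  have hA := hconv.monotoneOn_chordSlope (hx.mono (Icc_subset_Icc_right hcn)) hleft
  have hB := hconc.antitoneOn_chordSlope (hx.mono (Icc_subset_Icc_left (by lia))) hright
  have hgx : MonotoneOn (g ∘ x) (Icc 1 n) := hmono.comp hx.monotoneOn fun i hi => hx01 i hi
  rcases Nat.eq_zero_or_pos c with hc0 | hc0
  · exact ⟨1, ⟨le_rfl, hn⟩, hgx, by simp [MonotoneOn], by simpa [hc0] using hB⟩
  by_cases hup : c + 2 ≤ n ∧ chordSlope x (g ∘ x) c < chordSlope x (g ∘ x) (c + 1)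
  · refine ⟨c + 1, ⟨by lia, by lia⟩, hgx, ?_, hB⟩
    refine monotoneOn_of_le_add_one ordConnected_Ico fun a _ ha ha' => ?_
    rcases lt_or_eq_of_le (Nat.le_of_lt_succ ha'.2) with hac | rfl
    · exact hA ⟨ha.1, by lia⟩ ⟨ha'.1, hac⟩ (by lia)
    have hxa : ∀ i, a ≤ i → i ≤ a + 3 → i ∈ Icc 1 n := fun i h₁ h₂ =>
      ⟨ha.1.trans h₁, h₂.trans (by lia)⟩
    have hstraddle := min_slope_le_slope_of_convexOn_concaveOn (g := g) (m := m)
      (hconv.subset (Icc_subset_Icc (hx01 a (hxa a le_rfl (by lia))).1 le_rfl) (convex_Icc _ _))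
      (hconc.subset (Icc_subset_Icc le_rfl (hx01 (a + 3) (hxa _ (by lia) le_rfl)).2)
        (convex_Icc _ _))
      (hx (hxa a le_rfl (by lia)) (hxa (a + 1) (by lia) (by lia)) (by lia))
      (hlt (a + 1) ⟨by lia, le_rfl⟩) (hright (a + 2) ⟨le_rfl, by lia⟩).1
      (hx (hxa (a + 2) (by lia) (by lia)) (hxa (a + 3) (by lia) le_rfl) (by lia))
    simp only [← chordSlope_comp] at hstraddle
    exact (min_le_iff.1 hstraddle).resolve_right (not_le.2 hup.2)
  · refine ⟨c, ⟨hc0, hcn⟩, hgx, hA, ?_⟩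
    refine antitoneOn_of_add_one_le ordConnected_Ico fun a _ ha ha' => ?_
    rcases eq_or_lt_of_le ha.1 with rfl | hca
    · exact not_lt.1 fun h => hup ⟨ha'.2, h⟩
    · exact hB ⟨hca, ha.2⟩ ⟨by lia, ha'.2⟩ (by lia)

end

theorem exists_isMinOn_sum_sq {ι : Type*} {I : Finset ι} {s : Set (ι → ℝ)} (hs : IsClosed s)
    (hne : s.Nonempty) (hI : ∀ v ∈ s, ∀ w, EqOn v w I → w ∈ s) (Y : ι → ℝ) :
    ∃ v ∈ s, IsMinOn (fun w => ∑ i ∈ I, (Y i - w i) ^ 2) s v := by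
  classical
  set Φ : (ι → ℝ) → ℝ := fun w => ∑ i ∈ I, (Y i - w i) ^ 2
  -- zeroing the coordinates outside `I` preserves `s` and `Φ`, and maps sublevel sets into a box
  set T : (ι → ℝ) → ι → ℝ := fun w i => if i ∈ I then w i else 0
  have hT : ∀ w ∈ s, T w ∈ s := fun w hw => hI w hw _ fun i hi => (if_pos hi).symm
  have hΦT : ∀ w, Φ (T w) = Φ w := fun w => Finset.sum_congr rfl fun i hi => by simp [T, hi]
  obtain ⟨v₀, hv₀⟩ := hne
  set a : ι → ℝ := fun i => if i ∈ I then Y i - √(Φ v₀) else 0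
  set b : ι → ℝ := fun i => if i ∈ I then Y i + √(Φ v₀) else 0
  have hbox : ∀ w, Φ w ≤ Φ v₀ → T w ∈ Icc a b := fun w hw => by
    have hdev : ∀ i ∈ I, |Y i - w i| ≤ √(Φ v₀) := fun i hi => Real.abs_le_sqrt <|
      (Finset.single_le_sum (f := fun i => (Y i - w i) ^ 2) (fun _ _ => sq_nonneg _) hi).trans hw
    refine ⟨fun i => ?_, fun i => ?_⟩ <;> by_cases hi : i ∈ I <;>
      simp only [a, b, T, hi, if_true, if_false, le_refl] <;> linarith [abs_le.1 (hdev i hi)]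
  have hΦ : Continuous Φ := by fun_prop
  obtain ⟨v, hv, hmin⟩ := (isCompact_Icc.inter_left hs).exists_isMinOn
    ⟨T v₀, hT v₀ hv₀, hbox v₀ le_rfl⟩ hΦ.continuousOn
  refine ⟨v, hv.1, fun w hw => ?_⟩
  by_cases hw' : Φ w ≤ Φ v₀
  · simpa [hΦT] using hmin ⟨hT w hw, hbox w hw'⟩
  · calc Φ v ≤ Φ (T v₀) := hmin ⟨hT v₀ hv₀, hbox v₀ le_rfl⟩
      _ = Φ v₀ := hΦT v₀
      _ ≤ Φ w := le_of_not_ge hw'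

/-- Existence of an S-shaped least squares estimator over the whole class `F`,
with an inflection point at one of the design points. -/
theorem stmt3 (n : ℕ) (hn : 1 ≤ n) (x Y : ℕ → ℝ)
    (hx : ∀ i, 1 ≤ i → i < n → x i < x (i + 1))
    (hx0 : 0 ≤ x 1) (hx1 : x n ≤ 1) :
    let Fm : ℝ → (ℝ → ℝ) → Prop := fun m f =>
      ConvexOn ℝ (Set.Icc 0 m) f ∧ ConcaveOn ℝ (Set.Icc m 1) f ∧
        MonotoneOn f (Set.Icc (0 : ℝ) 1)
    let F : (ℝ → ℝ) → Prop := fun f => ∃ m ∈ Set.Icc (0 : ℝ) 1, Fm m f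
    let S : (ℝ → ℝ) → ℝ := fun f => ∑ i ∈ Finset.Icc 1 n, (Y i - f (x i)) ^ 2
    ∃ f, F f ∧ (∀ g, F g → S f ≤ S g) ∧ ∃ j ∈ Finset.Icc 1 n, Fm (x j) f := by
  intro Fm F S
  have hxs : StrictMonoOn x (Icc 1 n) :=
    strictMonoOn_of_lt_add_one ordConnected_Icc fun i _ hi hi' => hx i hi.1 hi'.2
  have hx01 : ∀ i ∈ Icc 1 n, x i ∈ Icc (0 : ℝ) 1 := fun i hi =>
    ⟨hx0.trans (hxs.monotoneOn ⟨le_rfl, hn⟩ hi hi.1),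
      (hxs.monotoneOn hi ⟨hn, le_rfl⟩ hi.2).trans hx1⟩
  obtain ⟨v, hvΓ, hvmin⟩ := exists_isMinOn_sum_sq (I := Finset.Icc 1 n)
    (s := ⋃ j ∈ Icc 1 n, sShapedCone x n j)
    ((finite_Icc 1 n).isClosed_biUnion fun j _ => isClosed_sShapedCone)
    ⟨0, mem_iUnion₂.2
      ⟨1, ⟨le_rfl, hn⟩, by simp [sShapedCone, chordSlope, MonotoneOn, AntitoneOn]⟩⟩
    (fun v hv w hvw => by
      obtain ⟨j, hj, hv⟩ := mem_iUnion₂.1 hv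
      exact mem_iUnion₂.2 ⟨j, hj, mem_sShapedCone_of_eqOn hj (by simpa using hvw) hv⟩) Y
  obtain ⟨j, hj, hv⟩ := mem_iUnion₂.1 hvΓ
  obtain ⟨f, hconv, hconc, hmono, hfv⟩ := exists_sShaped_interpolant hxs hj hv
  have hFm : Fm (x j) f := ⟨hconv.subset Icc_subset_Iic_self (convex_Icc _ _),
    hconc.subset Icc_subset_Ici_self (convex_Icc _ _), hmono.monotoneOn _⟩
  have hSf : S f = ∑ i ∈ Finset.Icc 1 n, (Y i - v i) ^ 2 :=
    Finset.sum_congr rfl fun i hi => by rw [hfv i (by simpa using hi)]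
  refine ⟨f, ⟨x j, hx01 j hj, hFm⟩, fun g ⟨_, _, hg⟩ => ?_, j, by simpa using hj, hFm⟩
  obtain ⟨k, hk, hgk⟩ := exists_comp_mem_sShapedCone hn hxs hx01 hg.1 hg.2.1 hg.2.2
  exact hSf ▸ hvmin (mem_iUnion₂.2 ⟨k, hk, hgk⟩)
end

section
/- Let Θ ⊆ ℝⁿ be a closed convex set, Y ∈ ℝⁿ, w ∈ [0,∞)ⁿ a weight vector, and θ̂ a minimizer of θ ↦ Σᵢ wᵢ(Yᵢ − θᵢ)² over Θ. Suppose θ̂ ± η𝟙 ∈ Θ for some η > 0, where 𝟙 = (1,…,1). Suppose further that for some index k and some ε ∈ {−1, 1} and η' > 0, both θ̂ + εη'𝟙^{[1:k]} ∈ Θ and θ̂ + εη'𝟙^{[k:n]} ∈ Θ, where 𝟙^{[a:b]} has ones in coordinates a through b and zeros elsewhere. Define w̲_k := [Σ_{i<k} wᵢ(Yᵢ − θ̂ᵢ)] / (θ̂_k − Y_k) · 1{θ̂_k ≠ Y_k} and w̄_k := [Σ_{i>k} wᵢ(Yᵢ − θ̂ᵢ)] / (θ̂_k − Y_k) · 1{θ̂_k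 ≠ Y_k}. Then w̲_k, w̄_k ∈ [0, w_k] and w̲_k + w̄_k ≤ w_k, with equality when Y_k ≠ θ̂_k. -/
/-!
Testing the variational inequality of the weighted projection against the directions `±𝟙`
shows that the residuals `rᵢ = wᵢ (Yᵢ - θ̂ᵢ)` sum to zero, and testing it against
`ε 𝟙^{[1:k]}` and `ε 𝟙^{[k:n]}` shows that the sums `A` of the residuals below `k` and `C` of
those above `k` both have the sign of `ε`. Since `A + C = w_k (θ̂_k - Y_k)`, the two quotients
`A / (θ̂_k - Y_k)` and `C / (θ̂_k - Y_k)` have a common sign and the nonnegative sum `w_k`,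
so both are nonnegative.
-/

open Filter Topology Finset

theorem nonpos_of_forall_mul_le_mul_sq {a b : ℝ}
    (h : ∀ t : ℝ, 0 < t → t ≤ 1 → a * t ≤ b * t ^ 2) : a ≤ 0 := by
  have hlim : Tendsto (fun t : ℝ => b * t) (𝓝[>] 0) (𝓝 0) := by
    simpa using ((continuous_const_mul b).tendsto 0).mono_left nhdsWithin_le_nhds
  refine ge_of_tendsto hlim ?_
  filter_upwards [Ioc_mem_nhdsGT one_pos] with t ⟨ht0, ht1⟩
  exact le_of_mul_le_mul_right (by nlinarith [h t ht0 ht1]) ht0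

theorem nonneg_of_mul_nonneg_of_add_nonneg {s a c : ℝ} (hs : s ≠ 0) (ha : 0 ≤ s * a)
    (hc : 0 ≤ s * c) (hac : 0 ≤ a + c) : 0 ≤ a ∧ 0 ≤ c := by
  rcases hs.lt_or_gt with hs | hs
  · have := nonpos_of_mul_nonneg_right ha hs
    have := nonpos_of_mul_nonneg_right hc hs
    constructor <;> linarith
  · exact ⟨nonneg_of_mul_nonneg_right ha hs, nonneg_of_mul_nonneg_right hc hs⟩

theorem div_nonneg_of_add_eq_mul {ε d m a c : ℝ} (hε : ε ≠ 0) (hd : d ≠ 0) (hm : 0 ≤ m)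
    (ha : 0 ≤ ε * a) (hc : 0 ≤ ε * c) (hac : a + c = m * d) :
    0 ≤ a / d ∧ 0 ≤ c / d ∧ a / d + c / d = m := by
  have hsum : a / d + c / d = m := by rw [← add_div, hac, mul_div_cancel_right₀ _ hd]
  have hscale (x : ℝ) : ε * d * (x / d) = ε * x := by field_simp
  obtain ⟨had, hcd⟩ := nonneg_of_mul_nonneg_of_add_nonneg (mul_ne_zero hε hd)
    (by rwa [hscale]) (by rwa [hscale]) (hsum ▸ hm)
  exact ⟨had, hcd, hsum⟩

section LinearOrder

variable {ι M : Type*} [Fintype ι] [LinearOrder ι] [AddCommMonoid M]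

theorem sum_filter_le_eq_sum_filter_lt_add (f : ι → M) (k : ι) :
    ∑ i ∈ univ.filter (· ≤ k), f i = ∑ i ∈ univ.filter (· < k), f i + f k := by
  have : univ.filter (· ≤ k) = insert k (univ.filter (· < k)) := by
    ext i; simp [le_iff_lt_or_eq, or_comm]
  rw [this, sum_insert (by simp), add_comm]

theorem sum_filter_ge_eq_add_sum_filter_gt (f : ι → M) (k : ι) :
    ∑ i ∈ univ.filter (k ≤ ·), f i = f k + ∑ i ∈ univ.filter (k < ·), f i := by
  have : univ.filter (k ≤ ·) = insert k (univ.filter (k < ·)) := by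
    ext i; simp [le_iff_lt_or_eq, eq_comm, or_comm]
  rw [this, sum_insert (by simp)]

theorem sum_filter_lt_add_add_sum_filter_gt (f : ι → M) (k : ι) :
    ∑ i ∈ univ.filter (· < k), f i + f k + ∑ i ∈ univ.filter (k < ·), f i = ∑ i, f i := by
  rw [add_assoc, ← sum_filter_ge_eq_add_sum_filter_gt, ← sum_filter_add_sum_filter_not univ (· < k) f]
  simp only [not_lt]

end LinearOrder

section WeightedLeastSquares

variable {ι : Type*} [Fintype ι] {Θ : Set (EuclideanSpace ℝ ι)} {Y θh : EuclideanSpace ℝ ι}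
  {w : ι → ℝ}

theorem sum_weighted_residual_mul_le_zero (hconv : Convex ℝ Θ) (hθΘ : θh ∈ Θ)
    (hmin : ∀ θ ∈ Θ, ∑ i, w i * (Y i - θh i) ^ 2 ≤ ∑ i, w i * (Y i - θ i) ^ 2)
    {p : EuclideanSpace ℝ ι} (hp : p ∈ Θ) :
    ∑ i, w i * (Y i - θh i) * (p i - θh i) ≤ 0 := by
  suffices h : ∀ t : ℝ, 0 < t → t ≤ 1 →
      (2 * ∑ i, w i * (Y i - θh i) * (p i - θh i)) * t
        ≤ (∑ i, w i * (p i - θh i) ^ 2) * t ^ 2 by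
    linarith [nonpos_of_forall_mul_le_mul_sq h]
  intro t ht0 ht1
  have hexpand : ∑ i, w i * (Y i - ((1 - t) • θh + t • p) i) ^ 2
      = ∑ i, w i * (Y i - θh i) ^ 2
        - (2 * ∑ i, w i * (Y i - θh i) * (p i - θh i)) * t
        + (∑ i, w i * (p i - θh i) ^ 2) * t ^ 2 := by
    simp only [mul_sum, sum_mul, ← sum_sub_distrib, ← sum_add_distrib, PiLp.add_apply,
      PiLp.smul_apply, smul_eq_mul]
    exact sum_congr rfl fun i _ => by ring
  have := hmin _ (hconv hθΘ hp (sub_nonneg.2 ht1) ht0.le (sub_add_cancel 1 t))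
  linarith

theorem sum_weighted_residual_mul_le_zero_of_add_mem (hconv : Convex ℝ Θ) (hθΘ : θh ∈ Θ)
    (hmin : ∀ θ ∈ Θ, ∑ i, w i * (Y i - θh i) ^ 2 ≤ ∑ i, w i * (Y i - θ i) ^ 2)
    (c : ι → ℝ) (hc : WithLp.toLp 2 (fun i => θh i + c i) ∈ Θ) :
    ∑ i, w i * (Y i - θh i) * c i ≤ 0 := by
  simpa using sum_weighted_residual_mul_le_zero hconv hθΘ hmin hc

theorem sum_filter_weighted_residual_mul_le_zero (hconv : Convex ℝ Θ) (hθΘ : θh ∈ Θ)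
    (hmin : ∀ θ ∈ Θ, ∑ i, w i * (Y i - θh i) ^ 2 ≤ ∑ i, w i * (Y i - θ i) ^ 2)
    (p : ι → Prop) [DecidablePred p] (a : ℝ)
    (h : WithLp.toLp 2 (fun i => θh i + if p i then a else 0) ∈ Θ) :
    (∑ i ∈ univ.filter p, w i * (Y i - θh i)) * a ≤ 0 := by
  simpa only [mul_ite, mul_zero, ← sum_filter, ← sum_mul] using
    sum_weighted_residual_mul_le_zero_of_add_mem hconv hθΘ hmin _ h

end WeightedLeastSquares

theorem stmt4_general (n : ℕ) (Θ : Set (EuclideanSpace ℝ (Fin n)))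
    (hconv : Convex ℝ Θ)
    (Y : EuclideanSpace ℝ (Fin n)) (w : Fin n → ℝ) (hw : ∀ i, 0 ≤ w i)
    (θh : EuclideanSpace ℝ (Fin n)) (hθΘ : θh ∈ Θ)
    (hmin : ∀ θ ∈ Θ, ∑ i, w i * (Y i - θh i) ^ 2 ≤ ∑ i, w i * (Y i - θ i) ^ 2)
    (η : ℝ) (hη : 0 < η)
    (hplus : (show EuclideanSpace ℝ (Fin n) from WithLp.toLp 2 (fun i => θh i + η)) ∈ Θ)
    (hminus : (show EuclideanSpace ℝ (Fin n) from WithLp.toLp 2 (fun i => θh i - η)) ∈ Θ)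
    (k : Fin n) (ε : ℝ) (hε : ε = 1 ∨ ε = -1) (η' : ℝ) (hη' : 0 < η')
    (h1 : (show EuclideanSpace ℝ (Fin n) from
      WithLp.toLp 2 (fun i => θh i + if i ≤ k then ε * η' else 0)) ∈ Θ)
    (h2 : (show EuclideanSpace ℝ (Fin n) from
      WithLp.toLp 2 (fun i => θh i + if k ≤ i then ε * η' else 0)) ∈ Θ) :
    let wlow : ℝ := if θh k = Y k then 0 else
      (∑ i ∈ Finset.univ.filter (· < k), w i * (Y i - θh i)) / (θh k - Y k)
    let whigh : ℝ := if θh k = Y k then 0 else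
      (∑ i ∈ Finset.univ.filter (k < ·), w i * (Y i - θh i)) / (θh k - Y k)
    0 ≤ wlow ∧ wlow ≤ w k ∧ 0 ≤ whigh ∧ whigh ≤ w k ∧ wlow + whigh ≤ w k ∧
      (Y k ≠ θh k → wlow + whigh = w k) := by
  intro wlow whigh
  set r : Fin n → ℝ := fun i => w i * (Y i - θh i)
  set A := ∑ i ∈ univ.filter (· < k), r i
  set C := ∑ i ∈ univ.filter (k < ·), r i
  have hup := sum_weighted_residual_mul_le_zero_of_add_mem hconv hθΘ hmin (fun _ => η) hplus
  have hdown := sum_weighted_residual_mul_le_zero_of_add_mem hconv hθΘ hmin (fun _ => -η)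
    (by simpa [sub_eq_add_neg] using hminus)
  have hlow := sum_filter_weighted_residual_mul_le_zero hconv hθΘ hmin (· ≤ k) _ h1
  have hhigh := sum_filter_weighted_residual_mul_le_zero hconv hθΘ hmin (k ≤ ·) _ h2
  rw [sum_filter_le_eq_sum_filter_lt_add] at hlow
  rw [sum_filter_ge_eq_add_sum_filter_gt] at hhigh
  rw [← sum_mul] at hup hdown
  have htotal : A + r k + C = 0 := by
    rw [sum_filter_lt_add_add_sum_filter_gt]
    exact le_antisymm (nonpos_of_mul_nonpos_left hup hη)
      (nonneg_of_mul_nonpos_left hdown (neg_neg_of_pos hη))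
  have hA : 0 ≤ ε * A := by
    have := nonpos_of_mul_nonpos_left (a := ε * (r k + C)) (by linarith) hη'
    linear_combination this - ε * htotal
  have hC : 0 ≤ ε * C := by
    have := nonpos_of_mul_nonpos_left (a := ε * (A + r k)) (by linarith) hη'
    linear_combination this - ε * htotal
  have hε0 : ε ≠ 0 := by rcases hε with rfl | rfl <;> norm_num
  by_cases hk : θh k = Y k
  · simp [wlow, whigh, hk, hw k]
  obtain ⟨hlow, hhigh, hsum⟩ := div_nonneg_of_add_eq_mul hε0 (sub_ne_zero.2 hk) (hw k) hA hC
    (by linear_combination htotal)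
  simp only [wlow, whigh, if_neg hk]
  exact ⟨hlow, by linarith, hhigh, by linarith, hsum.le, fun _ => hsum⟩

/-- Boundary weight lemma (Lemma S1(a) of the paper): the boundary-adjusted
weights at a splitting index `k` lie in `[0, w k]` and sum to at most `w k`,
with equality when `Y k ≠ θ̂ k`. -/
theorem stmt4 (n : ℕ) (Θ : Set (EuclideanSpace ℝ (Fin n)))
    (hclosed : IsClosed Θ) (hconv : Convex ℝ Θ)
    (Y : EuclideanSpace ℝ (Fin n)) (w : Fin n → ℝ) (hw : ∀ i, 0 ≤ w i)
    (θh : EuclideanSpace ℝ (Fin n)) (hθΘ : θh ∈ Θ)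
    (hmin : ∀ θ ∈ Θ, ∑ i, w i * (Y i - θh i) ^ 2 ≤ ∑ i, w i * (Y i - θ i) ^ 2)
    (η : ℝ) (hη : 0 < η)
    (hplus : (show EuclideanSpace ℝ (Fin n) from WithLp.toLp 2 (fun i => θh i + η)) ∈ Θ)
    (hminus : (show EuclideanSpace ℝ (Fin n) from WithLp.toLp 2 (fun i => θh i - η)) ∈ Θ)
    (k : Fin n) (ε : ℝ) (hε : ε = 1 ∨ ε = -1) (η' : ℝ) (hη' : 0 < η')
    (h1 : (show EuclideanSpace ℝ (Fin n) from
      WithLp.toLp 2 (fun i => θh i + if i ≤ k then ε * η' else 0)) ∈ Θ)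
    (h2 : (show EuclideanSpace ℝ (Fin n) from
      WithLp.toLp 2 (fun i => θh i + if k ≤ i then ε * η' else 0)) ∈ Θ) :
    let wlow : ℝ := if θh k = Y k then 0 else
      (∑ i ∈ Finset.univ.filter (· < k), w i * (Y i - θh i)) / (θh k - Y k)
    let whigh : ℝ := if θh k = Y k then 0 else
      (∑ i ∈ Finset.univ.filter (k < ·), w i * (Y i - θh i)) / (θh k - Y k)
    0 ≤ wlow ∧ wlow ≤ w k ∧ 0 ≤ whigh ∧ whigh ≤ w k ∧ wlow + whigh ≤ w k ∧
      (Y k ≠ θh k → wlow + whigh = w k) :=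
  stmt4_general n Θ hconv Y w hw θh hθΘ hmin η hη hplus hminus k ε hε η' hη' h1 h2
end

section
/- Fix j ∈ ℕ, design points x₁ < ⋯ < x_j, and let Λʲ = {z ∈ ℝʲ : 0 ≤ (z₂−z₁)/(x₂−x₁) ≤ ⋯ ≤ (z_j−z_{j−1})/(x_j−x_{j−1})} be the cone of increasing convex sequences. For k < j, let ẑ ∈ ℝᵏ be the projection of (Y₁,…,Y_k) onto the cone of increasing convex sequences based on x₁,…,x_k, extend it linearly to coordinates k+1,…,j with the last slope, obtaining v ∈ Λʲ, and set v(0) = (Y₁,…,Y_k, v_{k+1},…,v_j). Then the Euclidean projection of v(0) onto Λʲ equals v. -/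
/-!
Only the first `k` coordinates of `v(0)` differ from those of `v`, so for every `u ∈ Λʲ` the
squared distance from `v(0)` to `u` is at least its part on the first `k` coordinates. The
restriction of `u` lies in the `k`-point cone, where `ẑ` is the nearest point to `(Y₁,…,Y_k)`,
and that bound is exactly the distance from `v(0)` to `v`. The linear extension keeps the slopes
increasing because past `k` every slope equals the last one of `ẑ`.
-/

open Finset

noncomputable def secantSlope (x z : ℕ → ℝ) (i : ℕ) : ℝ := (z i - z (i - 1)) / (x i - x (i - 1))

/-- Indices start at `1`: the sequence is `z 1, …, z m` on the design points `x 1, …, x m`. -/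
def IsIncConvex (x : ℕ → ℝ) (m : ℕ) (z : ℕ → ℝ) : Prop :=
  0 ≤ secantSlope x z 2 ∧ ∀ i, 2 ≤ i → i < m → secantSlope x z i ≤ secantSlope x z (i + 1)

theorem IsIncConvex.mono {x z : ℕ → ℝ} {m n : ℕ} (hmn : m ≤ n) (hz : IsIncConvex x n z) :
    IsIncConvex x m z :=
  ⟨hz.1, fun i hi him => hz.2 i hi (him.trans_le hmn)⟩

theorem secantSlope_congr {x z w : ℕ → ℝ} {i : ℕ} (hi : z i = w i) (hi' : z (i - 1) = w (i - 1)) :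
    secantSlope x z i = secantSlope x w i := by
  simp only [secantSlope, hi, hi']

theorem secantSlope_eq_of_affine {x v : ℕ → ℝ} {k i : ℕ} {c s : ℝ}
    (hv : ∀ n, k ≤ n → v n = c + s * (x n - x k)) (hki : k < i) (hx : x (i - 1) ≠ x i) :
    secantSlope x v i = s := by
  have hne : x i - x (i - 1) ≠ 0 := sub_ne_zero.2 hx.symm
  rw [secantSlope, hv i hki.le, hv (i - 1) (by omega)]
  field_simp
  ring

theorem IsIncConvex.of_affine_extension {x z v : ℕ → ℝ} {k : ℕ} (m : ℕ) (hk : 2 ≤ k)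
    (hx : ∀ i, 1 ≤ i → x i < x (i + 1)) (hz : IsIncConvex x k z)
    (heq : ∀ i, 1 ≤ i → i ≤ k → v i = z i)
    (hext : ∀ i, k ≤ i → v i = z k + secantSlope x z k * (x i - x k)) :
    IsIncConvex x m v := by
  have hslope_le : ∀ i, 2 ≤ i → i ≤ k → secantSlope x v i = secantSlope x z i := fun i hi hik =>
    secantSlope_congr (heq i (by omega) hik) (heq (i - 1) (by omega) (by omega))
  have hslope_gt : ∀ i, k < i → secantSlope x v i = secantSlope x z k := fun i hki =>
    secantSlope_eq_of_affine hext hki (Nat.sub_add_cancel (by omega : 1 ≤ i) ▸ hx (i - 1) (by omega)).ne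
  refine ⟨(hslope_le 2 le_rfl hk).symm ▸ hz.1, fun i hi _ => ?_⟩
  rcases lt_trichotomy i k with hik | rfl | hki
  · rw [hslope_le i hi hik.le, hslope_le (i + 1) (by omega) hik]
    exact hz.2 i hi hik
  · rw [hslope_le i hi le_rfl, hslope_gt (i + 1) (Nat.lt_succ_self i)]
  · rw [hslope_gt i hki, hslope_gt (i + 1) (by omega)]

theorem sum_sq_sub_le_of_eq_on_Ioc {a b u : ℕ → ℝ} {k j : ℕ} (hkj : k ≤ j)
    (hab : ∀ i ∈ Ioc k j, a i = b i)
    (hle : ∑ i ∈ Icc 1 k, (a i - b i) ^ 2 ≤ ∑ i ∈ Icc 1 k, (a i - u i) ^ 2) :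
    ∑ i ∈ Icc 1 j, (a i - b i) ^ 2 ≤ ∑ i ∈ Icc 1 j, (a i - u i) ^ 2 := by
  have hIcc : ∀ n, Icc 1 n = Ioc 0 n := fun n => Icc_add_one_left_eq_Ioc 0 n
  rw [hIcc, ← sum_Ioc_consecutive _ (Nat.zero_le k) hkj,
    ← sum_Ioc_consecutive _ (Nat.zero_le k) hkj, ← hIcc]
  have htail : ∑ i ∈ Ioc k j, (a i - b i) ^ 2 = 0 :=
    sum_eq_zero fun i hi => by rw [hab i hi, sub_self, sq, mul_zero]
  have htail_nonneg : 0 ≤ ∑ i ∈ Ioc k j, (a i - u i) ^ 2 := sum_nonneg fun i _ => sq_nonneg _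
  linarith

/-- Sequential update property for increasing convex regression: extending the
increasing convex LSE on the first `k` points linearly with its last slope
gives the projection of `v(0) = (Y₁,…,Y_k, v_{k+1},…,v_j)` onto the cone `Λʲ`
of increasing convex sequences based on `x₁,…,x_j`. -/
theorem stmt6 (j k : ℕ) (hk : 2 ≤ k) (hkj : k < j)
    (x Y : ℕ → ℝ) (hx : ∀ i, 1 ≤ i → x i < x (i + 1)) :
    let cone : ℕ → (ℕ → ℝ) → Prop := fun m z =>
      0 ≤ (z 2 - z 1) / (x 2 - x 1) ∧
      ∀ i, 2 ≤ i → i < m →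
        (z i - z (i - 1)) / (x i - x (i - 1)) ≤ (z (i + 1) - z i) / (x (i + 1) - x i)
    ∀ zh : ℕ → ℝ, cone k zh →
      (∀ z : ℕ → ℝ, cone k z →
        ∑ i ∈ Finset.Icc 1 k, (Y i - zh i) ^ 2 ≤ ∑ i ∈ Finset.Icc 1 k, (Y i - z i) ^ 2) →
      ∀ v : ℕ → ℝ,
        (∀ i, 1 ≤ i → i ≤ k → v i = zh i) →
        (∀ i, k ≤ i →
          v i = zh k + (zh k - zh (k - 1)) / (x k - x (k - 1)) * (x i - x k)) →
        let v0 : ℕ → ℝ := fun i => if i ≤ k then Y i else v i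
        cone j v ∧ ∀ u : ℕ → ℝ, cone j u →
          ∑ i ∈ Finset.Icc 1 j, (v0 i - v i) ^ 2 ≤ ∑ i ∈ Finset.Icc 1 j, (v0 i - u i) ^ 2 := by
  intro cone zh hzh hmin v hv_eq hv_ext v0
  change IsIncConvex x k zh at hzh
  change ∀ z, IsIncConvex x k z → _ at hmin
  change IsIncConvex x j v ∧ ∀ u, IsIncConvex x j u → _
  refine ⟨hzh.of_affine_extension j hk hx hv_eq hv_ext, fun u hu => ?_⟩
  have hv0 : ∀ i ∈ Icc 1 k, v0 i = Y i := fun i hi => if_pos (mem_Icc.1 hi).2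
  refine sum_sq_sub_le_of_eq_on_Ioc hkj.le (fun i hi => if_neg (mem_Ioc.1 hi).1.not_ge) ?_
  calc ∑ i ∈ Icc 1 k, (v0 i - v i) ^ 2 = ∑ i ∈ Icc 1 k, (Y i - zh i) ^ 2 :=
        sum_congr rfl fun i hi => by rw [hv0 i hi, hv_eq i (mem_Icc.1 hi).1 (mem_Icc.1 hi).2]
    _ ≤ ∑ i ∈ Icc 1 k, (Y i - u i) ^ 2 := hmin u (hu.mono hkj.le)
    _ = ∑ i ∈ Icc 1 k, (v0 i - u i) ^ 2 := sum_congr rfl fun i hi => by rw [hv0 i hi]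
end

section
/- Let ŷ ∈ ℝⁿ denote the least squares convex regression fit: the projection of Y ∈ ℝⁿ onto the cone K = {θ ∈ ℝⁿ : (θ₂−θ₁)/(x₂−x₁) ≤ ⋯ ≤ (θₙ−θ_{n−1})/(xₙ−x_{n−1})} of convex sequences based on fixed points x₁ < ⋯ < xₙ. Suppose x_k is a kink of ŷ (i.e., the slope increases strictly at x_k). Let x̄_L = k⁻¹Σ_{i=1}^k xᵢ and x̄ = n⁻¹Σ_{i=1}^n xᵢ. Then Σ_{i=1}^k (xᵢ − x̄_L)Yᵢ / Σ_{i=1}^k (xᵢ − x̄_L)² ≤ Σ_{i=1}^n (xᵢ − x̄)Yᵢ / Σ_{i=1}^n (xᵢ − x̄)², i.e., the slope of the least-squares regression line fitted to the first k points is at most the slope of the regression line fitted to all n points, with 2 ≤ k ≤ n. -/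
/-!
The fit `ŷ` satisfies the variational inequality `∑ (Yᵢ - ŷᵢ) dᵢ ≤ 0` for every direction `d`
along which `ŷ + t d` stays convex for small `t > 0`. Affine directions give that the residuals
are orthogonal to `1` and `x`, so the full-sample regression slopes of `Y` and `ŷ` coincide.
At a kink the concave wedge `-(x_k - x)₊` is admissible too, so the residuals are orthogonal to
`(x_k - x)₊`; comparing with the hinge `(x_{k+1} - x)₊` shows that the residuals on the first `k`
points have nonpositive sum. Together these give that the slope of `Y` on the first `k` points
is at most that of `ŷ`.

It remains to compare the slopes of the convex sequence `ŷ` itself. By summation by parts, the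
regression slope on the first `N` points is a weighted average of the consecutive slopes `sₘ`
with weights `m (x̄_N - x̄_m) (x_{m+1} - x_m) > 0`, where `x̄_m` is the mean of the first `m`
points. Prefix means increase, so the ratio of the weights for `N = n` to those for `N = k` is
increasing in `m`, and a weighted Chebyshev inequality for the increasing sequence `sₘ` finishes.
-/

open Finset Filter Topology

theorem Finset.sum_mul_sum_le_sum_mul_sum_of_ratio_monotoneOn {ι : Type*} [LinearOrder ι]
    (s : Finset ι) {a b f : ι → ℝ} (hab : ∀ i ∈ s, ∀ j ∈ s, i ≤ j → a j * b i ≤ a i * b j)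
    (hf : MonotoneOn f s) :
    (∑ i ∈ s, a i * f i) * ∑ i ∈ s, b i ≤ (∑ i ∈ s, b i * f i) * ∑ i ∈ s, a i := by
  have hterm : ∀ i ∈ s, ∀ j ∈ s, 0 ≤ (a i * b j - a j * b i) * (f j - f i) := by
    intro i hi j hj
    rcases le_total i j with hij | hji
    · exact mul_nonneg (sub_nonneg.2 (hab i hi j hj hij)) (sub_nonneg.2 (hf hi hj hij))
    · exact mul_nonneg_of_nonpos_of_nonpos (sub_nonpos.2 (hab j hj i hi hji))
        (sub_nonpos.2 (hf hj hi hji))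
  have hdiff : (∑ i ∈ s, b i * f i) * ∑ i ∈ s, a i - (∑ i ∈ s, a i * f i) * ∑ i ∈ s, b i
      = ∑ i ∈ s, ∑ j ∈ s, a i * b j * (f j - f i) := by
    rw [mul_comm, sum_mul_sum, sum_mul_sum, ← sum_sub_distrib]
    refine sum_congr rfl fun i _ => ?_
    rw [← sum_sub_distrib]
    exact sum_congr rfl fun j _ => by ring
  have hswap : ∑ i ∈ s, ∑ j ∈ s, a i * b j * (f j - f i)
      = ∑ i ∈ s, ∑ j ∈ s, a j * b i * (f i - f j) := sum_comm
  have hsym : ∑ i ∈ s, ∑ j ∈ s, (a i * b j - a j * b i) * (f j - f i)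
      = ∑ i ∈ s, ∑ j ∈ s, a i * b j * (f j - f i)
        + ∑ i ∈ s, ∑ j ∈ s, a j * b i * (f i - f j) := by
    rw [← sum_add_distrib]
    refine sum_congr rfl fun i _ => ?_
    rw [← sum_add_distrib]
    exact sum_congr rfl fun j _ => by ring
  have hnonneg := sum_nonneg fun i hi => sum_nonneg fun j hj => hterm i hi j hj
  linarith

theorem Finset.sum_Icc_mul_eq_sub_sum_range (w u : ℕ → ℝ) (N : ℕ) :
    ∑ i ∈ Icc 1 N, w i * u i
      = (∑ i ∈ Icc 1 N, w i) * u N - ∑ m ∈ range N, (∑ i ∈ Icc 1 m, w i) * (u (m + 1) - u m) := by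
  induction N with
  | zero => simp
  | succ N ih =>
    rw [sum_Icc_succ_top (by omega), sum_Icc_succ_top (by omega), ih, sum_range_succ]
    ring

namespace ConvexRegression

noncomputable def gridSlope (x u : ℕ → ℝ) (m : ℕ) : ℝ := (u (m + 1) - u m) / (x (m + 1) - x m)

def ConvexSeq (x : ℕ → ℝ) (n : ℕ) (u : ℕ → ℝ) : Prop :=
  ∀ i, 2 ≤ i → i < n →
    (u i - u (i - 1)) / (x i - x (i - 1)) ≤ (u (i + 1) - u i) / (x (i + 1) - x i)

def IsConvexFit (x : ℕ → ℝ) (n : ℕ) (Y yh : ℕ → ℝ) : Prop :=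
  ConvexSeq x n yh ∧
    ∀ z, ConvexSeq x n z → ∑ i ∈ Icc 1 n, (Y i - yh i) ^ 2 ≤ ∑ i ∈ Icc 1 n, (Y i - z i) ^ 2

/-- For increasing `x` this is `(x_c - xᵢ)₊`; cutting off by index rather than by value makes
its slopes computable without monotonicity. -/
def hinge (x : ℕ → ℝ) (c i : ℕ) : ℝ := if i ≤ c then x c - x i else 0

noncomputable def mean (x : ℕ → ℝ) (N : ℕ) : ℝ := (∑ i ∈ Icc 1 N, x i) / N

noncomputable def cov (x u : ℕ → ℝ) (N : ℕ) : ℝ := ∑ i ∈ Icc 1 N, (x i - mean x N) * u i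

noncomputable def var (x : ℕ → ℝ) (N : ℕ) : ℝ := ∑ i ∈ Icc 1 N, (x i - mean x N) ^ 2

noncomputable def weight (x : ℕ → ℝ) (N m : ℕ) : ℝ := m * (mean x N - mean x m) * (x (m + 1) - x m)

variable {x u d Y yh : ℕ → ℝ} {n k : ℕ}

theorem lt_succ_of_strictMonoOn (hx : StrictMonoOn x (Set.Icc 1 n)) {m : ℕ} (hm : 1 ≤ m)
    (hmn : m < n) : x m < x (m + 1) :=
  hx ⟨hm, hmn.le⟩ ⟨by omega, hmn⟩ m.lt_succ_self

theorem convexSeq_iff :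
    ConvexSeq x n u ↔ ∀ m, 1 ≤ m → m + 1 < n → gridSlope x u m ≤ gridSlope x u (m + 1) := by
  constructor
  · intro hu m hm hmn
    simpa [gridSlope] using hu (m + 1) (by omega) hmn
  · intro hu i hi hin
    obtain ⟨m, rfl⟩ : ∃ m, i = m + 1 := ⟨i - 1, by omega⟩
    simpa [gridSlope] using hu m (by omega) hin

theorem ConvexSeq.monotoneOn (hu : ConvexSeq x n u) :
    MonotoneOn (gridSlope x u) (Set.Ico 1 n) :=
  monotoneOn_of_le_add_one Set.ordConnected_Ico fun m _ hm hm1 =>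
    convexSeq_iff.1 hu m hm.1 hm1.2

theorem gridSlope_add_mul (t : ℝ) (m : ℕ) :
    gridSlope x (fun i => u i + t * d i) m = gridSlope x u m + t * gridSlope x d m := by
  simp only [gridSlope]
  ring

theorem gridSlope_neg (m : ℕ) : gridSlope x (fun i => -u i) m = -gridSlope x u m := by
  simp only [gridSlope]
  ring

theorem gridSlope_affine (a b : ℝ) {m : ℕ} (hm : x (m + 1) ≠ x m) :
    gridSlope x (fun i => a + b * x i) m = b := by
  simp only [gridSlope]
  field_simp [sub_ne_zero.2 hm]
  ring

theorem gridSlope_hinge (c : ℕ) {m : ℕ} (hm : x (m + 1) ≠ x m) :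
    gridSlope x (hinge x c) m = if m < c then -1 else 0 := by
  have hΔ : x (m + 1) - x m ≠ 0 := sub_ne_zero.2 hm
  simp only [gridSlope, hinge]
  split_ifs <;> first | omega | skip
  · field_simp
    ring
  · obtain rfl : m = c := by omega
    simp
  · simp

theorem ConvexSeq.add_mul (hu : ConvexSeq x n u) (hd : ConvexSeq x n d) {t : ℝ} (ht : 0 ≤ t) :
    ConvexSeq x n fun i => u i + t * d i := by
  refine convexSeq_iff.2 fun m hm hmn => ?_
  rw [gridSlope_add_mul, gridSlope_add_mul]
  have := mul_le_mul_of_nonneg_left (convexSeq_iff.1 hd m hm hmn) ht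
  linarith [convexSeq_iff.1 hu m hm hmn]

theorem convexSeq_affine (hx : StrictMonoOn x (Set.Icc 1 n)) (a b : ℝ) :
    ConvexSeq x n fun i => a + b * x i := by
  refine convexSeq_iff.2 fun m hm hmn => ?_
  rw [gridSlope_affine a b (lt_succ_of_strictMonoOn hx hm (by omega)).ne',
    gridSlope_affine a b (lt_succ_of_strictMonoOn hx (by omega) hmn).ne']

theorem convexSeq_hinge (hx : StrictMonoOn x (Set.Icc 1 n)) (c : ℕ) :
    ConvexSeq x n (hinge x c) := by
  refine convexSeq_iff.2 fun m hm hmn => ?_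
  rw [gridSlope_hinge c (lt_succ_of_strictMonoOn hx hm (by omega)).ne',
    gridSlope_hinge c (lt_succ_of_strictMonoOn hx (by omega) hmn).ne']
  split_ifs <;> first | omega | norm_num

theorem IsConvexFit.sum_mul_nonpos_of_eventually (hfit : IsConvexFit x n Y yh)
    (hd : ∀ᶠ t in 𝓝[>] (0 : ℝ), ConvexSeq x n fun i => yh i + t * d i) :
    ∑ i ∈ Icc 1 n, (Y i - yh i) * d i ≤ 0 := by
  set c := ∑ i ∈ Icc 1 n, (Y i - yh i) * d i
  set D := ∑ i ∈ Icc 1 n, d i ^ 2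
  have hlim : Tendsto (fun t : ℝ => t * D / 2) (𝓝[>] 0) (𝓝 0) := by
    have : Tendsto (fun t : ℝ => t * D / 2) (𝓝 0) (𝓝 (0 * D / 2)) :=
      ((continuous_id.mul continuous_const).div_const 2).tendsto 0
    simpa using this.mono_left nhdsWithin_le_nhds
  refine ge_of_tendsto hlim ?_
  filter_upwards [hd, self_mem_nhdsWithin] with t ht (htpos : 0 < t)
  have hexpand : ∑ i ∈ Icc 1 n, (Y i - (yh i + t * d i)) ^ 2
      = ∑ i ∈ Icc 1 n, (Y i - yh i) ^ 2 - 2 * t * c + t ^ 2 * D := by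
    simp only [c, D, mul_sum, ← sum_sub_distrib, ← sum_add_distrib]
    exact sum_congr rfl fun i _ => by ring
  have hmin := hfit.2 _ ht
  have : t * (2 * c) ≤ t * (t * D) := by nlinarith
  linarith [le_of_mul_le_mul_left this htpos]

theorem IsConvexFit.sum_mul_nonpos (hfit : IsConvexFit x n Y yh) (hd : ConvexSeq x n d) :
    ∑ i ∈ Icc 1 n, (Y i - yh i) * d i ≤ 0 :=
  hfit.sum_mul_nonpos_of_eventually <|
    eventually_mem_nhdsWithin.mono fun _ ht => hfit.1.add_mul hd (le_of_lt ht)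

theorem IsConvexFit.sum_mul_affine_eq_zero (hfit : IsConvexFit x n Y yh)
    (hx : StrictMonoOn x (Set.Icc 1 n)) (a b : ℝ) :
    ∑ i ∈ Icc 1 n, (Y i - yh i) * (a + b * x i) = 0 := by
  have hneg := hfit.sum_mul_nonpos (convexSeq_affine hx (-a) (-b))
  have hpos := hfit.sum_mul_nonpos (convexSeq_affine hx a b)
  simp only [neg_mul, ← neg_add, mul_neg, sum_neg_distrib] at hneg
  linarith

theorem IsConvexFit.sum_mul_hinge_eq_zero (hfit : IsConvexFit x n Y yh)
    (hx : StrictMonoOn x (Set.Icc 1 n)) (hkink : gridSlope x yh (k - 1) < gridSlope x yh k) :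
    ∑ i ∈ Icc 1 n, (Y i - yh i) * hinge x k i = 0 := by
  have hwedge : ∀ᶠ t in 𝓝[>] (0 : ℝ), ConvexSeq x n fun i => yh i + t * -hinge x k i := by
    filter_upwards [Ioo_mem_nhdsGT (sub_pos.2 hkink)] with t ht
    refine convexSeq_iff.2 fun m hm hmn => ?_
    have hyh := convexSeq_iff.1 hfit.1 m hm hmn
    rw [gridSlope_add_mul, gridSlope_add_mul, gridSlope_neg, gridSlope_neg,
      gridSlope_hinge k (lt_succ_of_strictMonoOn hx hm (by omega)).ne',
      gridSlope_hinge k (lt_succ_of_strictMonoOn hx (by omega) hmn).ne']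
    split_ifs with h1 h2 h2
    · linarith
    · obtain rfl : m = k - 1 := by omega
      rw [Nat.sub_add_cancel (by omega)] at hyh ⊢
      linarith [ht.2]
    · omega
    · linarith
  have hneg := hfit.sum_mul_nonpos_of_eventually hwedge
  have hpos := hfit.sum_mul_nonpos (convexSeq_hinge hx k)
  simp only [mul_neg, sum_neg_distrib] at hneg
  linarith

theorem sum_Icc_ite_le (f : ℕ → ℝ) (hkn : k ≤ n) :
    ∑ i ∈ Icc 1 n, (if i ≤ k then f i else 0) = ∑ i ∈ Icc 1 k, f i := by
  rw [← sum_filter]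
  congr 1
  ext i
  simp only [mem_filter, mem_Icc]
  omega

theorem IsConvexFit.sum_residual_nonpos (hfit : IsConvexFit x n Y yh)
    (hx : StrictMonoOn x (Set.Icc 1 n)) (hk : 1 ≤ k) (hkn : k < n)
    (hkink : gridSlope x yh (k - 1) < gridSlope x yh k) :
    ∑ i ∈ Icc 1 k, (Y i - yh i) ≤ 0 := by
  have hstep : ∀ i, hinge x (k + 1) i - hinge x k i = if i ≤ k then x (k + 1) - x k else 0 := by
    intro i
    simp only [hinge]
    split_ifs <;> first | omega | skip
    · ring
    · obtain rfl : i = k + 1 := by omega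
      ring
    · ring
  have hdiff : ∑ i ∈ Icc 1 n, (Y i - yh i) * hinge x (k + 1) i
      - ∑ i ∈ Icc 1 n, (Y i - yh i) * hinge x k i
      = (x (k + 1) - x k) * ∑ i ∈ Icc 1 k, (Y i - yh i) := by
    rw [← sum_sub_distrib, mul_sum, ← sum_Icc_ite_le _ hkn.le]
    refine sum_congr rfl fun i _ => ?_
    rw [← mul_sub, hstep]
    split_ifs <;> ring
  have hhinge := hfit.sum_mul_nonpos (convexSeq_hinge hx (k + 1))
  rw [hfit.sum_mul_hinge_eq_zero hx hkink, sub_zero] at hdiff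
  exact nonpos_of_mul_nonpos_right (hdiff ▸ hhinge) (sub_pos.2 (lt_succ_of_strictMonoOn hx hk hkn))

theorem natCast_mul_mean (x : ℕ → ℝ) (N : ℕ) : (N : ℝ) * mean x N = ∑ i ∈ Icc 1 N, x i := by
  rcases N.eq_zero_or_pos with rfl | hN
  · simp
  · exact mul_div_cancel₀ _ (by positivity)

theorem sum_Icc_sub_mean (x : ℕ → ℝ) (N m : ℕ) :
    ∑ i ∈ Icc 1 m, (x i - mean x N) = m * (mean x m - mean x N) := by
  rw [sum_sub_distrib, sum_const, Nat.card_Icc, ← natCast_mul_mean, nsmul_eq_mul]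
  push_cast
  ring

theorem mean_le_of_forall_le {N : ℕ} {c : ℝ} (hN : 1 ≤ N) (h : ∀ i ∈ Icc 1 N, x i ≤ c) :
    mean x N ≤ c := by
  rw [mean, div_le_iff₀ (by exact_mod_cast hN)]
  simpa [mul_comm] using sum_le_card_nsmul _ _ _ h

theorem mean_lt_of_forall_lt {N : ℕ} {c : ℝ} (hN : 1 ≤ N) (h : ∀ i ∈ Icc 1 N, x i < c) :
    mean x N < c := by
  rw [mean, div_lt_iff₀ (by exact_mod_cast hN)]
  simpa [mul_comm] using sum_lt_sum_of_nonempty ⟨1, by simp [hN]⟩ h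

theorem strictMonoOn_mean (hx : StrictMonoOn x (Set.Icc 1 n)) :
    StrictMonoOn (mean x) (Set.Icc 1 n) := by
  refine strictMonoOn_of_lt_add_one Set.ordConnected_Icc fun m _ hm hm1 => ?_
  have hlt : mean x m < x (m + 1) := mean_lt_of_forall_lt hm.1 fun i hi => by
    simp only [mem_Icc] at hi
    exact hx ⟨hi.1, by have := hm1.2; omega⟩ hm1 (by omega)
  have hsucc : ((m : ℝ) + 1) * mean x (m + 1) = m * mean x m + x (m + 1) := by
    rw [natCast_mul_mean, ← Nat.cast_add_one, natCast_mul_mean, sum_Icc_succ_top (by omega)]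
  nlinarith

theorem cov_eq_sum_Ico (x u : ℕ → ℝ) (N : ℕ) :
    cov x u N = ∑ m ∈ Ico 1 N, m * (mean x N - mean x m) * (u (m + 1) - u m) := by
  rw [cov, sum_Icc_mul_eq_sub_sum_range]
  simp only [sum_Icc_sub_mean, sub_self, mul_zero, zero_mul, zero_sub]
  rcases N.eq_zero_or_pos with rfl | hN
  · simp
  rw [range_eq_Ico, sum_eq_sum_Ico_succ_bot hN]
  simp only [Nat.cast_zero, zero_mul, zero_add, ← sum_neg_distrib]
  exact sum_congr rfl fun m _ => by ring

theorem var_eq_sum_weight (x : ℕ → ℝ) (N : ℕ) : var x N = ∑ m ∈ Ico 1 N, weight x N m := by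
  have hcov : var x N = cov x x N := by
    have hzero := sum_Icc_sub_mean x N N
    rw [sub_self, mul_zero] at hzero
    have : var x N = cov x x N - mean x N * ∑ i ∈ Icc 1 N, (x i - mean x N) := by
      simp only [var, cov, mul_sum, ← sum_sub_distrib]
      exact sum_congr rfl fun i _ => by ring
    rw [this, hzero, mul_zero, sub_zero]
  rw [hcov, cov_eq_sum_Ico]
  rfl

theorem cov_eq_sum_weight_mul_gridSlope (hx : StrictMonoOn x (Set.Icc 1 n)) {N : ℕ} (hN : N ≤ n) :
    cov x u N = ∑ m ∈ Ico 1 N, weight x N m * gridSlope x u m := by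
  rw [cov_eq_sum_Ico]
  refine sum_congr rfl fun m hm => ?_
  simp only [mem_Ico] at hm
  have hΔ := (sub_pos.2 (lt_succ_of_strictMonoOn hx hm.1 (by omega))).ne'
  simp only [weight, gridSlope]
  field_simp

theorem weight_pos (hx : StrictMonoOn x (Set.Icc 1 n)) {N m : ℕ} (hm : 1 ≤ m) (hmN : m < N)
    (hN : N ≤ n) : 0 < weight x N m := by
  have hmean := strictMonoOn_mean hx ⟨hm, by omega⟩ ⟨by omega, hN⟩ hmN
  have hΔ := lt_succ_of_strictMonoOn hx hm (by omega)
  have : (0 : ℝ) < m := by exact_mod_cast hm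
  unfold weight
  exact mul_pos (mul_pos this (sub_pos.2 hmean)) (sub_pos.2 hΔ)

theorem var_pos (hx : StrictMonoOn x (Set.Icc 1 n)) {N : ℕ} (hN : 2 ≤ N) (hNn : N ≤ n) :
    0 < var x N := by
  rw [var_eq_sum_weight]
  exact sum_pos (fun m hm => weight_pos hx (mem_Ico.1 hm).1 (mem_Ico.1 hm).2 hNn)
    ⟨1, by simp; omega⟩

theorem weight_mul_weight_le (hx : StrictMonoOn x (Set.Icc 1 n)) {m l : ℕ} (hm : 1 ≤ m)
    (hml : m ≤ l) (hlk : l < k) (hkn : k ≤ n) :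
    weight x k l * weight x n m ≤ weight x k m * weight x n l := by
  have hmono := (strictMonoOn_mean hx).monotoneOn
  have hkn' : mean x k ≤ mean x n := hmono ⟨by omega, hkn⟩ ⟨by omega, le_rfl⟩ hkn
  have hml' : mean x m ≤ mean x l := hmono ⟨hm, by omega⟩ ⟨by omega, by omega⟩ hml
  have hΔm := lt_succ_of_strictMonoOn hx hm (by omega)
  have hΔl := lt_succ_of_strictMonoOn hx (m := l) (by omega) (by omega)
  have hid : weight x k m * weight x n l - weight x k l * weight x n m
      = (m * l * (x (m + 1) - x m) * (x (l + 1) - x l))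
        * ((mean x n - mean x k) * (mean x l - mean x m)) := by
    simp only [weight]
    ring
  have : 0 ≤ (m * l * (x (m + 1) - x m) * (x (l + 1) - x l) : ℝ)
      * ((mean x n - mean x k) * (mean x l - mean x m)) := by
    apply mul_nonneg
    · have := sub_pos.2 hΔm
      have := sub_pos.2 hΔl
      positivity
    · exact mul_nonneg (sub_nonneg.2 hkn') (sub_nonneg.2 hml')
  linarith

theorem cov_div_var_le_of_convexSeq (hx : StrictMonoOn x (Set.Icc 1 n)) (hu : ConvexSeq x n u)
    (hk : 2 ≤ k) (hkn : k ≤ n) : cov x u k / var x k ≤ cov x u n / var x n := by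
  set a : ℕ → ℝ := fun m => if m < k then weight x k m else 0
  have hsum : ∀ g : ℕ → ℝ, ∑ m ∈ Ico 1 n, (if m < k then g m else 0) = ∑ m ∈ Ico 1 k, g m := by
    intro g
    rw [← sum_filter]
    congr 1
    ext m
    simp only [mem_filter, mem_Ico]
    omega
  have hcross : ∀ m ∈ Ico 1 n, ∀ l ∈ Ico 1 n, m ≤ l → a l * weight x n m ≤ a m * weight x n l := by
    intro m hm l hl hml
    simp only [mem_Ico] at hm hl
    by_cases hlk : l < k
    · simp only [a, if_pos hlk, if_pos (hml.trans_lt hlk)]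
      exact weight_mul_weight_le hx hm.1 hml hlk hkn
    · have ham : 0 ≤ a m := by
        simp only [a]
        split_ifs with hmk
        · exact (weight_pos hx hm.1 hmk hkn).le
        · exact le_rfl
      simp only [a, if_neg hlk, zero_mul]
      exact mul_nonneg ham (weight_pos hx hl.1 hl.2 le_rfl).le
  have hcheb := sum_mul_sum_le_sum_mul_sum_of_ratio_monotoneOn (Ico 1 n) hcross
    (f := gridSlope x u) (by simpa using hu.monotoneOn)
  simp only [a, ite_mul, zero_mul, hsum] at hcheb
  rw [div_le_div_iff₀ (var_pos hx hk hkn) (var_pos hx (by omega) le_rfl),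
    cov_eq_sum_weight_mul_gridSlope hx hkn, cov_eq_sum_weight_mul_gridSlope hx le_rfl,
    var_eq_sum_weight, var_eq_sum_weight]
  exact hcheb

theorem IsConvexFit.cov_le_cov (hfit : IsConvexFit x n Y yh) (hx : StrictMonoOn x (Set.Icc 1 n))
    (hk : 1 ≤ k) (hkn : k < n) (hkink : gridSlope x yh (k - 1) < gridSlope x yh k) :
    cov x Y k ≤ cov x yh k := by
  have hsum := hfit.sum_residual_nonpos hx hk hkn hkink
  have hwedge : ∑ i ∈ Icc 1 k, (Y i - yh i) * (x k - x i) = 0 := by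
    rw [← hfit.sum_mul_hinge_eq_zero hx hkink, ← sum_Icc_ite_le _ hkn.le]
    refine sum_congr rfl fun i _ => ?_
    simp only [hinge, mul_ite, mul_zero]
  have hmean : mean x k ≤ x k := mean_le_of_forall_le hk fun i hi => by
    simp only [mem_Icc] at hi
    exact hx.monotoneOn ⟨hi.1, by omega⟩ ⟨hk, hkn.le⟩ hi.2
  have hdiff : cov x Y k - cov x yh k
      = (x k - mean x k) * ∑ i ∈ Icc 1 k, (Y i - yh i)
        - ∑ i ∈ Icc 1 k, (Y i - yh i) * (x k - x i) := by
    simp only [cov, mul_sum, ← sum_sub_distrib]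
    exact sum_congr rfl fun i _ => by ring
  nlinarith [mul_nonpos_of_nonneg_of_nonpos (sub_nonneg.2 hmean) hsum]

theorem IsConvexFit.cov_eq_cov (hfit : IsConvexFit x n Y yh) (hx : StrictMonoOn x (Set.Icc 1 n)) :
    cov x Y n = cov x yh n := by
  have h := hfit.sum_mul_affine_eq_zero hx (-mean x n) 1
  rw [← sub_eq_zero, cov, cov, ← sum_sub_distrib, ← h]
  exact sum_congr rfl fun i _ => by ring

end ConvexRegression

open ConvexRegression

theorem stmt7_general (n k : ℕ) (hk : 2 ≤ k) (hkn : k < n)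
    (x Y yh : ℕ → ℝ)
    (hx : ∀ i, 1 ≤ i → i < n → x i < x (i + 1))
    (hconv : ∀ i, 2 ≤ i → i < n →
      (yh i - yh (i - 1)) / (x i - x (i - 1)) ≤ (yh (i + 1) - yh i) / (x (i + 1) - x i))
    (hmin : ∀ z : ℕ → ℝ,
      (∀ i, 2 ≤ i → i < n →
        (z i - z (i - 1)) / (x i - x (i - 1)) ≤ (z (i + 1) - z i) / (x (i + 1) - x i)) →
      ∑ i ∈ Finset.Icc 1 n, (Y i - yh i) ^ 2 ≤ ∑ i ∈ Finset.Icc 1 n, (Y i - z i) ^ 2)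
    (hkink : (yh k - yh (k - 1)) / (x k - x (k - 1)) < (yh (k + 1) - yh k) / (x (k + 1) - x k)) :
    let xbarL : ℝ := (∑ i ∈ Finset.Icc 1 k, x i) / k
    let xbar : ℝ := (∑ i ∈ Finset.Icc 1 n, x i) / n
    (∑ i ∈ Finset.Icc 1 k, (x i - xbarL) * Y i) / (∑ i ∈ Finset.Icc 1 k, (x i - xbarL) ^ 2) ≤
      (∑ i ∈ Finset.Icc 1 n, (x i - xbar) * Y i) / (∑ i ∈ Finset.Icc 1 n, (x i - xbar) ^ 2) := by
  intro xbarL xbar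
  show cov x Y k / var x k ≤ cov x Y n / var x n
  have hxmono : StrictMonoOn x (Set.Icc 1 n) :=
    strictMonoOn_of_lt_add_one Set.ordConnected_Icc fun i _ hi hi1 => hx i hi.1 hi1.2
  have hfit : IsConvexFit x n Y yh := ⟨hconv, hmin⟩
  have hkink' : gridSlope x yh (k - 1) < gridSlope x yh k := by
    simpa [gridSlope, Nat.sub_add_cancel (by omega : 1 ≤ k)] using hkink
  calc cov x Y k / var x k ≤ cov x yh k / var x k :=
        div_le_div_of_nonneg_right (hfit.cov_le_cov hxmono (by omega) hkn hkink')
          (var_pos hxmono hk hkn.le).le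
    _ ≤ cov x yh n / var x n := cov_div_var_le_of_convexSeq hxmono hconv hk hkn.le
    _ = cov x Y n / var x n := by rw [hfit.cov_eq_cov hxmono]

/-- Lemma S5 of the paper: if `x_k` is a kink of the convex least squares fit,
then the slope of the regression line fitted to the first `k` points is at most
the slope of the regression line fitted to all `n` points. -/
theorem stmt7 (n k : ℕ) (hk : 2 ≤ k) (hkn : k < n)
    (x Y yh : ℕ → ℝ)
    (hx : ∀ i, 1 ≤ i → i < n → x i < x (i + 1))
    (hx01 : ∀ i, 1 ≤ i → i ≤ n → x i ∈ Set.Icc (0 : ℝ) 1)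
    (hconv : ∀ i, 2 ≤ i → i < n →
      (yh i - yh (i - 1)) / (x i - x (i - 1)) ≤ (yh (i + 1) - yh i) / (x (i + 1) - x i))
    (hmin : ∀ z : ℕ → ℝ,
      (∀ i, 2 ≤ i → i < n →
        (z i - z (i - 1)) / (x i - x (i - 1)) ≤ (z (i + 1) - z i) / (x (i + 1) - x i)) →
      ∑ i ∈ Finset.Icc 1 n, (Y i - yh i) ^ 2 ≤ ∑ i ∈ Finset.Icc 1 n, (Y i - z i) ^ 2)
    (hkink : (yh k - yh (k - 1)) / (x k - x (k - 1)) < (yh (k + 1) - yh k) / (x (k + 1) - x k)) :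
    let xbarL : ℝ := (∑ i ∈ Finset.Icc 1 k, x i) / k
    let xbar : ℝ := (∑ i ∈ Finset.Icc 1 n, x i) / n
    (∑ i ∈ Finset.Icc 1 k, (x i - xbarL) * Y i) / (∑ i ∈ Finset.Icc 1 k, (x i - xbarL) ^ 2) ≤
      (∑ i ∈ Finset.Icc 1 n, (x i - xbar) * Y i) / (∑ i ∈ Finset.Icc 1 n, (x i - xbar) ^ 2) :=
  stmt7_general n k hk hkn x Y yh hx hconv hmin hkink
end

section
/- Suppose (f_n) is a sequence of increasing convex real-valued functions on [0,1) such that lim_{n→∞} f_n(x) exists (in ℝ) for all x ∈ (0,1). Then lim_{n→∞} f_n(0) also exists, the pointwise limit f: [0,1) → ℝ is convex and increasing, and f_n → f uniformly on [0,w] for every w ∈ [0,1). -/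
/-!
On `(0,1)` the limit `h` is increasing, and it is bounded below since convexity gives
`f n 0 ≥ 2 f n (1/4) - f n (1/2)`; hence `h` has a right limit `L` at `0`. Convexity and
monotonicity squeeze `2 f n x - f n (2x) ≤ f n 0 ≤ f n x` for small `x > 0`; letting `n → ∞` and
then `x → 0⁺` both bounds tend to `L`, so `f n 0 → L`. Monotonicity and convexity pass to
pointwise limits. A convex increasing function on `[0,1)` is Lipschitz on every `[0,w]`, and
pointwise convergence of increasing functions to a continuous limit on a compact interval is
uniform (Pólya).
-/

open Filter Set Topology

theorem tendsto_of_forall_eventually_between {ι κ α : Type*} [TopologicalSpace α] [LinearOrder α]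
    [OrderTopology α] {l : Filter ι} {p : Filter κ} [p.NeBot] {a : ι → α} {lo hi : κ → ι → α}
    {u v : κ → α} {L : α} (hbetween : ∀ᶠ x in p, ∀ n, lo x n ≤ a n ∧ a n ≤ hi x n)
    (hlo : ∀ᶠ x in p, Tendsto (lo x) l (𝓝 (u x))) (hhi : ∀ᶠ x in p, Tendsto (hi x) l (𝓝 (v x)))
    (hu : Tendsto u p (𝓝 L)) (hv : Tendsto v p (𝓝 L)) : Tendsto a l (𝓝 L) := by
  refine tendsto_order.2 ⟨fun b hb => ?_, fun b hb => ?_⟩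
  · obtain ⟨x, hbx, hx, hlox⟩ :=
      ((hu.eventually (eventually_gt_nhds hb)).and (hbetween.and hlo)).exists
    exact (hlox.eventually (eventually_gt_nhds hbx)).mono fun n hn => hn.trans_le (hx n).1
  · obtain ⟨x, hxb, hx, hhix⟩ :=
      ((hv.eventually (eventually_lt_nhds hb)).and (hbetween.and hhi)).exists
    exact (hhix.eventually (eventually_lt_nhds hxb)).mono fun n hn => (hx n).2.trans_lt hn

theorem convexOn_of_frequently_convexOn_of_tendsto {ι E : Type*} [AddCommGroup E] [Module ℝ E]
    {l : Filter ι} {F : ι → E → ℝ} {g : E → ℝ} {s : Set E}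
    (hF : ∃ᶠ i in l, ConvexOn ℝ s (F i))
    (hlim : ∀ x ∈ s, Tendsto (fun i => F i x) l (𝓝 (g x))) : ConvexOn ℝ s g := by
  obtain ⟨i, hi⟩ := hF.exists
  refine ⟨hi.1, fun x hx y hy a b ha hb hab => ?_⟩
  exact le_of_tendsto_of_tendsto_of_frequently (hlim _ (hi.1 hx hy ha hb hab))
    (((hlim x hx).const_smul a).add ((hlim y hy).const_smul b))
    (hF.mono fun i hi => hi.2 hx hy ha hb hab)

theorem ConvexOn.map_midpoint_le {s : Set ℝ} {f : ℝ → ℝ} (hf : ConvexOn ℝ s f) {a b : ℝ}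
    (ha : a ∈ s) (hb : b ∈ s) : f ((a + b) / 2) ≤ (f a + f b) / 2 := by
  have h := hf.2 ha hb (by norm_num : (0 : ℝ) ≤ 1 / 2) (by norm_num : (0 : ℝ) ≤ 1 / 2)
    (by norm_num)
  simp only [smul_eq_mul] at h
  rw [show (a + b) / 2 = 1 / 2 * a + 1 / 2 * b by ring]
  linarith

theorem exists_tendsto_zero_of_convexOn_monotoneOn {ι : Type*} {l : Filter ι} [l.NeBot]
    {f : ι → ℝ → ℝ} (hmono : ∀ n, MonotoneOn (f n) (Ico 0 1))
    (hconv : ∀ n, ConvexOn ℝ (Ico 0 1) (f n))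
    (hlim : ∀ x ∈ Ioo (0 : ℝ) 1, ∃ L, Tendsto (fun n => f n x) l (𝓝 L)) :
    ∃ L, Tendsto (fun n => f n 0) l (𝓝 L) := by
  choose! h hh using hlim
  have hsandwich : ∀ n, ∀ x ∈ Ioo (0 : ℝ) (1 / 2),
      2 * f n x - f n (2 * x) ≤ f n 0 ∧ f n 0 ≤ f n x := by
    rintro n x ⟨hx0, hx1⟩
    have hmid := (hconv n).map_midpoint_le (a := 0) (b := 2 * x) ⟨le_rfl, one_pos⟩
      ⟨by linarith, by linarith⟩
    rw [zero_add, mul_div_cancel_left₀ x two_ne_zero] at hmid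
    exact ⟨by linarith, hmono n ⟨le_rfl, one_pos⟩ ⟨hx0.le, by linarith⟩ hx0.le⟩
  have hmono_h : MonotoneOn h (Ioo 0 1) := monotoneOn_of_frequently_monotoneOn_of_tendsto
    (Frequently.of_forall fun n => (hmono n).mono Ioo_subset_Ico_self) hh
  have hbdd : BddBelow (h '' Ioo 0 1) := by
    refine ⟨2 * h (1 / 4) - h (1 / 2), ?_⟩
    rintro _ ⟨y, hy, rfl⟩
    refine le_of_tendsto_of_tendsto' (((hh _ (by norm_num)).const_mul 2).sub (hh _ (by norm_num)))
      (hh y hy) fun n => ?_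
    have hquarter := (hsandwich n (1 / 4) (by norm_num)).1
    norm_num at hquarter
    linarith [hmono n ⟨le_rfl, one_pos⟩ (Ioo_subset_Ico_self hy) hy.1.le]
  have hright := hmono_h.tendsto_nhdsWithin_Ioo_right (by norm_num) hbdd
  have hdouble : Tendsto (fun x : ℝ => 2 * x) (𝓝[>] 0) (𝓝[>] 0) := by
    refine tendsto_nhdsWithin_iff.2 ⟨?_, eventually_nhdsWithin_of_forall fun x (hx : 0 < x) => ?_⟩
    · simpa using ((continuous_const_mul (2 : ℝ)).tendsto 0).mono_left nhdsWithin_le_nhds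
    · exact mul_pos two_pos hx
  have hsmall : ∀ᶠ x in 𝓝[>] (0 : ℝ), x ∈ Ioo 0 (1 / 2) := Ioo_mem_nhdsGT (by norm_num)
  have hlower : Tendsto (fun x => 2 * h x - h (2 * x)) (𝓝[>] 0) (𝓝 (sInf (h '' Ioo 0 1))) := by
    simpa [two_mul] using (hright.const_mul 2).sub (hright.comp hdouble)
  refine ⟨_, tendsto_of_forall_eventually_between (p := 𝓝[>] (0 : ℝ))
    (hsmall.mono fun x hx n => hsandwich n x hx) ?_ ?_ hlower hright⟩
  · filter_upwards [hsmall] with x ⟨hx0, hx1⟩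
    exact ((hh x ⟨hx0, by linarith⟩).const_mul 2).sub (hh (2 * x) ⟨by linarith, by linarith⟩)
  · filter_upwards [hsmall] with x ⟨hx0, hx1⟩
    exact hh x ⟨hx0, by linarith⟩

theorem ConvexOn.lipschitzOnWith_of_monotoneOn {g : ℝ → ℝ} {a w c : ℝ}
    (hconv : ConvexOn ℝ (Icc a c) g) (hmono : MonotoneOn g (Icc a c)) (hwc : w < c) :
    LipschitzOnWith (Real.toNNReal ((g c - g a) / (c - w))) g (Icc a w) := by
  refine LipschitzOnWith.of_le_add_mul' _ fun x hx y hy => ?_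
  have hc : c ∈ Icc a c := ⟨hx.1.trans (hx.2.trans hwc.le), le_rfl⟩
  have hIcc : Icc a w ⊆ Icc a c := Icc_subset_Icc_right hwc.le
  have hslope_nonneg : 0 ≤ (g c - g a) / (c - w) :=
    div_nonneg (sub_nonneg.2 (hmono ⟨le_rfl, hc.1⟩ hc hc.1)) (sub_pos.2 hwc).le
  rcases le_or_gt x y with hxy | hyx
  · exact le_add_of_le_of_nonneg (hmono (hIcc hx) (hIcc hy) hxy)
      (mul_nonneg hslope_nonneg dist_nonneg)
  · have hslope : (g x - g y) / (x - y) ≤ (g c - g a) / (c - w) :=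
      calc (g x - g y) / (x - y) ≤ (g c - g x) / (c - x) :=
            hconv.slope_mono_adjacent (hIcc hy) hc hyx (hx.2.trans_lt hwc)
        _ ≤ (g c - g a) / (c - w) :=
            div_le_div₀ (sub_nonneg.2 (hmono ⟨le_rfl, hc.1⟩ hc hc.1))
              (sub_le_sub_left (hmono ⟨le_rfl, hc.1⟩ (hIcc hx) hx.1) _)
              (sub_pos.2 hwc) (sub_le_sub_left hx.2 _)
    rw [div_le_iff₀ (sub_pos.2 hyx)] at hslope
    rw [Real.dist_eq, abs_of_pos (sub_pos.2 hyx)]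
    linarith

theorem tendstoUniformlyOn_Icc_of_monotoneOn_of_continuousOn {ι : Type*} {l : Filter ι}
    {F : ι → ℝ → ℝ} {g : ℝ → ℝ} {a b : ℝ} (hF : ∀ i, MonotoneOn (F i) (Icc a b))
    (hg : ContinuousOn g (Icc a b)) (hlim : ∀ x ∈ Icc a b, Tendsto (fun i => F i x) l (𝓝 (g x))) :
    TendstoUniformlyOn F g l (Icc a b) := by
  rw [← tendstoLocallyUniformlyOn_iff_tendstoUniformlyOn_of_compact isCompact_Icc,
    Metric.tendstoLocallyUniformlyOn_iff]
  intro ε hε t ht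
  obtain ⟨δ, hδ, hgδ⟩ := Metric.continuousWithinAt_iff.1 (hg t ht) (ε / 4) (by positivity)
  set A := max a (t - δ / 2)
  set B := min b (t + δ / 2)
  have hA : A ∈ Icc a b := ⟨le_max_left _ _, max_le (ht.1.trans ht.2) (by linarith [ht.2])⟩
  have hB : B ∈ Icc a b := ⟨le_min (ht.1.trans ht.2) (by linarith [ht.1]), min_le_left _ _⟩
  have hnear : ∀ y ∈ Icc A B, y ∈ Icc a b ∧ dist y t < δ := by
    rintro y ⟨hAy, hyB⟩
    have h1 := le_max_right a (t - δ / 2)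
    have h2 := min_le_right b (t + δ / 2)
    refine ⟨⟨(le_max_left _ _).trans hAy, hyB.trans (min_le_left _ _)⟩, ?_⟩
    rw [Real.dist_eq, abs_lt]
    constructor <;> linarith
  refine ⟨Icc A B, mem_nhdsWithin.2 ⟨Ioo (t - δ / 2) (t + δ / 2), isOpen_Ioo,
    ⟨by linarith, by linarith⟩,
    fun y ⟨hy, hy'⟩ => ⟨max_le hy'.1 hy.1.le, le_min hy'.2 hy.2.le⟩⟩, ?_⟩
  filter_upwards [Metric.tendsto_nhds.1 (hlim A hA) (ε / 4) (by positivity),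
    Metric.tendsto_nhds.1 (hlim B hB) (ε / 4) (by positivity)] with i hiA hiB y hy
  obtain ⟨hyab, hyt⟩ := hnear y hy
  have hFA := (hF i) hA hyab hy.1
  have hFB := (hF i) hyab hB hy.2
  have hgA := hgδ hA (hnear A ⟨le_rfl, hy.1.trans hy.2⟩).2
  have hgB := hgδ hB (hnear B ⟨hy.1.trans hy.2, le_rfl⟩).2
  have hgy := hgδ hyab hyt
  rw [Real.dist_eq, abs_lt] at hiA hiB hgA hgB hgy ⊢
  constructor <;> linarith [hiA.1, hiA.2, hiB.1, hiB.2, hgA.1, hgA.2, hgB.1, hgB.2, hgy.1, hgy.2]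

/-- Lemma S10 of the paper: a pointwise-on-(0,1) convergent sequence of
increasing convex functions on [0,1) also converges at 0; the limit is convex
and increasing, and the convergence is uniform on every `[0, w] ⊆ [0, 1)`. -/
theorem stmt9 (f : ℕ → ℝ → ℝ)
    (hmono : ∀ n, MonotoneOn (f n) (Set.Ico (0 : ℝ) 1))
    (hconv : ∀ n, ConvexOn ℝ (Set.Ico (0 : ℝ) 1) (f n))
    (hlim : ∀ x ∈ Set.Ioo (0 : ℝ) 1, ∃ L : ℝ, Tendsto (fun n => f n x) atTop (nhds L)) :
    ∃ g : ℝ → ℝ,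
      (∀ x ∈ Set.Ico (0 : ℝ) 1, Tendsto (fun n => f n x) atTop (nhds (g x))) ∧
      MonotoneOn g (Set.Ico (0 : ℝ) 1) ∧
      ConvexOn ℝ (Set.Ico (0 : ℝ) 1) g ∧
      ∀ w ∈ Set.Ico (0 : ℝ) 1, TendstoUniformlyOn (fun n => f n) g atTop (Set.Icc 0 w) := by
  have hlim' : ∀ x ∈ Ico (0 : ℝ) 1, ∃ L, Tendsto (fun n => f n x) atTop (𝓝 L) := by
    rintro x ⟨hx0, hx1⟩
    rcases hx0.eq_or_lt with rfl | hx0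
    · exact exists_tendsto_zero_of_convexOn_monotoneOn hmono hconv hlim
    · exact hlim x ⟨hx0, hx1⟩
  choose! g hg using hlim'
  have hgmono := monotoneOn_of_frequently_monotoneOn_of_tendsto (Frequently.of_forall hmono) hg
  have hgconv := convexOn_of_frequently_convexOn_of_tendsto (Frequently.of_forall hconv) hg
  refine ⟨g, hg, hgmono, hgconv, fun w hw => ?_⟩
  have hsub : Icc 0 ((1 + w) / 2) ⊆ Ico 0 1 := Icc_subset_Ico_right (by linarith [hw.2])
  have hlip := (hgconv.subset hsub (convex_Icc _ _)).lipschitzOnWith_of_monotoneOn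
    (hgmono.mono hsub) (by linarith [hw.2] : w < (1 + w) / 2)
  have hw' : Icc 0 w ⊆ Ico 0 1 := Icc_subset_Ico_right hw.2
  exact tendstoUniformlyOn_Icc_of_monotoneOn_of_continuousOn (fun n => (hmono n).mono hw')
    hlip.continuousOn fun x hx => hg x (hw' hx)
end

section
/- Let m ∈ (0,1) and let (f_n) be a sequence of functions in F^m (convex on [0,m], concave on [m,1], increasing on [0,1]) converging pointwise on [0,1] \ {m} to a continuous function f ∈ F^m. Then f_n(m) → f(m), and f_n → f uniformly on [0,1]. -/
open Filter


lemma polya_aux (f : ℝ → ℝ) (fn : ℕ → ℝ → ℝ)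
    (hmono : ∀ n, MonotoneOn (fn n) (Set.Icc (0:ℝ) 1))
    (hcont : ContinuousOn f (Set.Icc 0 1))
    (hconv : ∀ x ∈ Set.Icc (0:ℝ) 1, Tendsto (fun n => fn n x) atTop (nhds (f x))) :
    TendstoUniformlyOn (fun n => fn n) f atTop (Set.Icc 0 1) := by
  rw [Metric.tendstoUniformlyOn_iff]
  intro ε hε
  have hε3 : (0:ℝ) < ε/3 := by positivity
  have hc : UniformContinuousOn f (Set.Icc 0 1) :=
    isCompact_Icc.uniformContinuousOn_of_continuous hcont
  obtain ⟨δ, hδ, hδ'⟩ := Metric.uniformContinuousOn_iff.mp hc (ε/3) hε3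
  obtain ⟨k, hk⟩ := exists_nat_one_div_lt hδ
  set N : ℕ := k + 1 with hNdef
  have hN : (0:ℝ) < N := by positivity
  have hk' : (1:ℝ)/N < δ := by exact_mod_cast hk
  set p : ℕ → ℝ := fun i => (i:ℝ) / N with hpdef
  have hp : ∀ i, i ≤ N → p i ∈ Set.Icc (0:ℝ) 1 := by
    intro i hi
    constructor
    · positivity
    · rw [div_le_one hN]; exact_mod_cast hi
  have hgrid : ∀ᶠ n in atTop, ∀ i ∈ Finset.range (N+1),
      dist (fn n (p i)) (f (p i)) < ε/3 := by
    rw [Filter.eventually_all_finset]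
    intro i hi
    exact Metric.tendsto_nhds.mp (hconv (p i) (hp i (Nat.lt_succ_iff.mp (Finset.mem_range.mp hi)))) (ε/3) hε3
  filter_upwards [hgrid] with n hn x hx
  obtain ⟨hx0, hx1⟩ := hx
  set i : ℕ := min ⌊x * N⌋₊ k with hidef
  have hiN : i + 1 ≤ N := by
    have := Nat.min_le_right ⌊x * N⌋₊ k
    omega
  have hile : (i:ℝ) ≤ x * N := by
    refine le_trans ?_ (Nat.floor_le (by positivity))
    exact_mod_cast Nat.min_le_left _ _
  have hxle : x * N ≤ (i:ℝ) + 1 := by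
    rcases le_or_gt ⌊x * N⌋₊ k with h | h
    · have hi : i = ⌊x * N⌋₊ := min_eq_left h
      rw [hi]
      exact (Nat.lt_floor_add_one (x * N)).le
    · have hi : i = k := min_eq_right h.le
      have hNk : (N:ℝ) = (k:ℝ) + 1 := by rw [hNdef]; push_cast; ring
      rw [hi, ← hNk]
      nlinarith [hN, mul_le_mul_of_nonneg_right hx1 hN.le]
  have h1 : p i ≤ x := by rw [hpdef]; rw [div_le_iff₀ hN]; linarith
  have h2 : x ≤ p (i+1) := by
    rw [hpdef]; rw [le_div_iff₀ hN]; exact_mod_cast hxle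
  have hpi : p i ∈ Set.Icc (0:ℝ) 1 := hp i (by omega)
  have hpi1 : p (i+1) ∈ Set.Icc (0:ℝ) 1 := hp (i+1) hiN
  have hgap : p (i+1) - p i = 1/N := by
    rw [hpdef]; push_cast; ring
  have hda : dist (p i) x < δ := by
    rw [Real.dist_eq, abs_lt]
    constructor <;> nlinarith [h2, h1, hgap, hk', hδ]
  have hdb : dist (p (i+1)) x < δ := by
    rw [Real.dist_eq, abs_lt]
    constructor <;> nlinarith [h2, h1, hgap, hk', hδ]
  have hfa : dist (f (p i)) (f x) < ε/3 := hδ' _ hpi _ ⟨hx0, hx1⟩ hda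
  have hfb : dist (f (p (i+1))) (f x) < ε/3 := hδ' _ hpi1 _ ⟨hx0, hx1⟩ hdb
  have ha := hn i (Finset.mem_range.2 (by omega))
  have hb := hn (i+1) (Finset.mem_range.2 (by omega))
  have hm1 : fn n (p i) ≤ fn n x := hmono n hpi ⟨hx0, hx1⟩ h1
  have hm2 : fn n x ≤ fn n (p (i+1)) := hmono n ⟨hx0, hx1⟩ hpi1 h2
  rw [Real.dist_eq, abs_lt] at ha hb hfa hfb ⊢
  constructor <;> linarith


/-- Lemma S11 of the paper: if a sequence of S-shaped functions with inflection
point `m` converges pointwise on `[0,1] \ {m}` to a continuous S-shaped limit,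
then it also converges at `m`, and the convergence is uniform on `[0,1]`. -/
theorem stmt10 (m : ℝ) (hm : m ∈ Set.Ioo (0 : ℝ) 1)
    (f : ℝ → ℝ) (fn : ℕ → ℝ → ℝ)
    (hfn : ∀ n, ConvexOn ℝ (Set.Icc 0 m) (fn n) ∧ ConcaveOn ℝ (Set.Icc m 1) (fn n) ∧
      MonotoneOn (fn n) (Set.Icc (0 : ℝ) 1))
    (hf : ConvexOn ℝ (Set.Icc 0 m) f ∧ ConcaveOn ℝ (Set.Icc m 1) f ∧
      MonotoneOn f (Set.Icc (0 : ℝ) 1))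
    (hcont : ContinuousOn f (Set.Icc 0 1))
    (hptwise : ∀ x ∈ Set.Icc (0 : ℝ) 1 \ {m},
      Tendsto (fun n => fn n x) atTop (nhds (f x))) :
    Tendsto (fun n => fn n m) atTop (nhds (f m)) ∧
    TendstoUniformlyOn (fun n => fn n) f atTop (Set.Icc 0 1) := by
  have hfm : ContinuousAt f m := hcont.continuousAt (Icc_mem_nhds hm.1 hm.2)
  have hcm : Tendsto (fun n => fn n m) atTop (nhds (f m)) := by
    rw [tendsto_order]
    constructor
    · intro a ha
      have h1 : ∀ᶠ y in nhds m, a < f y := hfm.eventually (eventually_gt_nhds ha)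
      obtain ⟨δ, hδ, hball⟩ := Metric.eventually_nhds_iff.mp h1
      set x := max (m/2) (m - δ/2) with hxdef
      have hx2 : m - δ/2 ≤ x := le_max_right _ _
      have hxm : x < m := max_lt (by linarith [hm.1]) (by linarith)
      have hx0 : (0:ℝ) ≤ x := le_trans (by linarith [hm.1]) (le_max_left _ _)
      have hx1 : x ≤ 1 := le_trans hxm.le hm.2.le
      have hax : a < f x := hball (by rw [Real.dist_eq, abs_lt]; constructor <;> linarith)
      have h2 := (hptwise x ⟨⟨hx0, hx1⟩, ne_of_lt hxm⟩).eventually (eventually_gt_nhds hax)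
      filter_upwards [h2] with n hn
      exact lt_of_lt_of_le hn ((hfn n).2.2 ⟨hx0, hx1⟩ ⟨hm.1.le, hm.2.le⟩ hxm.le)
    · intro a ha
      have h1 : ∀ᶠ y in nhds m, f y < a := hfm.eventually (eventually_lt_nhds ha)
      obtain ⟨δ, hδ, hball⟩ := Metric.eventually_nhds_iff.mp h1
      set y := min ((m+1)/2) (m + δ/2) with hydef
      have hy2 : y ≤ m + δ/2 := min_le_right _ _
      have hmy : m < y := lt_min (by linarith [hm.2]) (by linarith)
      have hy1 : y ≤ 1 := le_trans (min_le_left _ _) (by linarith [hm.2])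
      have hy0 : (0:ℝ) ≤ y := le_trans hm.1.le hmy.le
      have hay : f y < a := hball (by rw [Real.dist_eq, abs_lt]; constructor <;> linarith)
      have h2 := (hptwise y ⟨⟨hy0, hy1⟩, ne_of_gt hmy⟩).eventually (eventually_lt_nhds hay)
      filter_upwards [h2] with n hn
      exact lt_of_le_of_lt ((hfn n).2.2 ⟨hm.1.le, hm.2.le⟩ ⟨hy0, hy1⟩ hmy.le) hn
  have hconv : ∀ x ∈ Set.Icc (0:ℝ) 1, Tendsto (fun n => fn n x) atTop (nhds (f x)) := by
    intro x hx
    by_cases hxm : x = m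
    · subst hxm; exact hcm
    · exact hptwise x ⟨hx, hxm⟩
  exact ⟨hcm, polya_aux f fn (fun n => (hfn n).2.2) hcont hconv⟩
end

section
/- Let ν be a Borel probability measure on [0,1] and m ∈ [0,1]. Then the set F^m_ν = {[f]_ν : f ∈ F^m} of ν-equivalence classes of functions convex on [0,m], concave on [m,1], and increasing on [0,1] is a convex cone in L²(ν), and the Lipschitz elements of F^m are dense in F^m_ν with respect to the L²(ν) norm. -/
/-!
Cut `f` off by the line `ℓ_K` of slope `K` through `(m, f m)`: take `max f ℓ_K` left of `m` and
`min f ℓ_K` right of it. This keeps convexity on `[0, m]`, concavity on `[m, 1]` and monotonicity,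
and the three-chord inequality makes the cut-off `K`-Lipschitz: where `f` stays above `ℓ_K` on the
convex side, its chords towards `m` have slope at most `K` (symmetrically on the concave side). At a
fixed `x ≠ m` the line `ℓ_K` eventually passes `f x`, so the cut-off agrees with `f` at `x` once `K`
is large; since it stays between `f x` and `f m`, dominated convergence gives `L²(ν)` convergence.
-/

open MeasureTheory Set Filter Topology
open scoped NNReal

theorem convexOn_affine {s : Set ℝ} (hs : Convex ℝ s) (c K m : ℝ) :
    ConvexOn ℝ s fun x => c + K * (x - m) :=
  ⟨hs, fun x _ y _ a b _ _ hab => le_of_eq <| by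
    simp only [smul_eq_mul]; linear_combination (K * m - c) * hab⟩

theorem concaveOn_affine {s : Set ℝ} (hs : Convex ℝ s) (c K m : ℝ) :
    ConcaveOn ℝ s fun x => c + K * (x - m) :=
  ⟨hs, fun x _ y _ a b _ _ hab => le_of_eq <| by
    simp only [smul_eq_mul]; linear_combination (c - K * m) * hab⟩

section ThreeChord

variable {f : ℝ → ℝ} {a b K x y : ℝ}

theorem ConvexOn.max_line_le_add (hf : ConvexOn ℝ (Icc a b) f)
    (hx : x ∈ Icc a b) (hy : y ∈ Icc a b) (hxy : x ≤ y) :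
    max (f y) (f b + K * (y - b)) ≤ max (f x) (f b + K * (x - b)) + K * (y - x) := by
  have hline : f b + K * (y - b) ≤ max (f x) (f b + K * (x - b)) + K * (y - x) := by
    linarith [le_max_right (f x) (f b + K * (x - b))]
  refine max_le ?_ hline
  rcases le_or_gt (f y) (f b + K * (y - b)) with hℓ | hℓ
  · exact hℓ.trans hline
  have hyb : y < b := hy.2.lt_of_ne (by rintro rfl; simp at hℓ)
  obtain rfl | hxy := hxy.eq_or_lt
  · simp
  have hchord := hf.slope_mono_adjacent hx (right_mem_Icc.2 (hy.1.trans hy.2)) hxy hyb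
  have hslope : (f b - f y) / (b - y) ≤ K := by
    rw [div_le_iff₀ (sub_pos.2 hyb)]; linarith
  have hfy : f y - f x ≤ K * (y - x) := (div_le_iff₀ (sub_pos.2 hxy)).1 (hchord.trans hslope)
  linarith [le_max_left (f x) (f b + K * (x - b))]

theorem ConcaveOn.min_line_le_add (hf : ConcaveOn ℝ (Icc a b) f)
    (hx : x ∈ Icc a b) (hy : y ∈ Icc a b) (hxy : x ≤ y) :
    min (f y) (f a + K * (y - a)) ≤ min (f x) (f a + K * (x - a)) + K * (y - x) := by
  rcases le_or_gt (f a + K * (x - a)) (f x) with hℓ | hℓ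
  · rw [min_eq_right hℓ]; linarith [min_le_right (f y) (f a + K * (y - a))]
  rw [min_eq_left hℓ.le]
  have hax : a < x := hx.1.lt_of_ne (by rintro rfl; simp at hℓ)
  obtain rfl | hxy := hxy.eq_or_lt
  · simp
  have hchord := hf.slope_anti_adjacent (left_mem_Icc.2 (hx.1.trans hx.2)) hy hax hxy
  have hslope : (f x - f a) / (x - a) ≤ K := by
    rw [div_le_iff₀ (sub_pos.2 hax)]; linarith
  have hfy : f y - f x ≤ K * (y - x) := (div_le_iff₀ (sub_pos.2 hxy)).1 (hchord.trans hslope)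
  linarith [min_le_left (f y) (f a + K * (y - a))]

end ThreeChord

theorem MonotoneOn.lipschitzOnWith_of_le_add {s : Set ℝ} {g : ℝ → ℝ} {K : ℝ≥0}
    (hg : MonotoneOn g s) (h : ∀ x ∈ s, ∀ y ∈ s, x ≤ y → g y ≤ g x + K * (y - x)) :
    LipschitzOnWith K g s := by
  refine LipschitzOnWith.of_dist_le_mul fun x hx y hy => ?_
  wlog hxy : x ≤ y generalizing x y
  · rw [dist_comm, dist_comm x]; exact this y hy x hx (le_of_not_ge hxy)
  rw [Real.dist_eq, Real.dist_eq, abs_sub_comm, abs_of_nonneg (sub_nonneg.2 (hg hx hy hxy)),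
    abs_sub_comm, abs_of_nonneg (sub_nonneg.2 hxy)]
  linarith [h x hx y hy hxy]

theorem MonotoneOn.aestronglyMeasurable {f : ℝ → ℝ} {s : Set ℝ} {μ : Measure ℝ}
    (hf : MonotoneOn f s) (hs : MeasurableSet s) (hμ : ∀ᵐ x ∂μ, x ∈ s) :
    AEStronglyMeasurable f μ := by
  rw [← Measure.restrict_eq_self_of_ae_mem hμ]
  exact (aemeasurable_restrict_of_monotoneOn hs hf).aestronglyMeasurable

theorem tendsto_integral_sq_sub_of_eventually_eq {α : Type*} [MeasurableSpace α] {μ : Measure α}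
    [IsFiniteMeasure μ] {g : ℕ → α → ℝ} {f : α → ℝ} {C : ℝ}
    (hg : ∀ n, AEStronglyMeasurable (g n) μ) (hf : AEStronglyMeasurable f μ)
    (hbound : ∀ n, ∀ᵐ x ∂μ, |g n x - f x| ≤ C) (hlim : ∀ᵐ x ∂μ, ∀ᶠ n in atTop, g n x = f x) :
    Tendsto (fun n => ∫ x, (g n x - f x) ^ 2 ∂μ) atTop (𝓝 0) := by
  have key := tendsto_integral_of_dominated_convergence (F := fun n x => (g n x - f x) ^ 2)
    (f := 0) (fun _ => C ^ 2) (fun n => ((hg n).sub hf).pow 2) (integrable_const _)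
    (fun n => (hbound n).mono fun x hx => by
      rw [Real.norm_eq_abs, abs_pow]; exact pow_le_pow_left₀ (abs_nonneg _) hx 2)
    (hlim.mono fun x hx => tendsto_const_nhds.congr' <| hx.mono fun n hn => by simp [hn])
  simpa using key

noncomputable def slopeCutoff (f : ℝ → ℝ) (m K x : ℝ) : ℝ :=
  if x ≤ m then max (f x) (f m + K * (x - m)) else min (f x) (f m + K * (x - m))

section SlopeCutoff

variable {f : ℝ → ℝ} {a b m K x y : ℝ}

theorem slopeCutoff_of_le (h : x ≤ m) :
    slopeCutoff f m K x = max (f x) (f m + K * (x - m)) :=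
  if_pos h

theorem slopeCutoff_of_ge (h : m ≤ x) :
    slopeCutoff f m K x = min (f x) (f m + K * (x - m)) := by
  obtain rfl | h := h.eq_or_lt
  · simp [slopeCutoff]
  · exact if_neg h.not_ge

theorem slopeCutoff_self : slopeCutoff f m K m = f m := by simp [slopeCutoff]

theorem convexOn_slopeCutoff (hf : ConvexOn ℝ (Icc a m) f) :
    ConvexOn ℝ (Icc a m) (slopeCutoff f m K) :=
  (hf.sup (convexOn_affine (convex_Icc a m) _ _ _)).congr fun _ hx => (slopeCutoff_of_le hx.2).symm

theorem concaveOn_slopeCutoff (hf : ConcaveOn ℝ (Icc m b) f) :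
    ConcaveOn ℝ (Icc m b) (slopeCutoff f m K) :=
  (hf.inf (concaveOn_affine (convex_Icc m b) _ _ _)).congr fun _ hx => (slopeCutoff_of_ge hx.1).symm

theorem monotoneOn_slopeCutoff (hf : MonotoneOn f (Icc a b)) (hK : 0 ≤ K) :
    MonotoneOn (slopeCutoff f m K) (Icc a b) := by
  intro x hx y hy hxy
  have hline : f m + K * (x - m) ≤ f m + K * (y - m) := by gcongr
  rcases le_or_gt y m with hym | hmy
  · rw [slopeCutoff_of_le (hxy.trans hym), slopeCutoff_of_le hym]
    exact max_le_max (hf hx hy hxy) hline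
  rcases le_or_gt m x with hmx | hxm
  · rw [slopeCutoff_of_ge hmx, slopeCutoff_of_ge hmy.le]
    exact min_le_min (hf hx hy hxy) hline
  have hm : m ∈ Icc a b := ⟨hx.1.trans hxm.le, hmy.le.trans hy.2⟩
  calc slopeCutoff f m K x ≤ f m := by
        rw [slopeCutoff_of_le hxm.le]
        exact max_le (hf hx hm hxm.le) (by nlinarith)
    _ ≤ slopeCutoff f m K y := by
        rw [slopeCutoff_of_ge hmy.le]
        exact le_min (hf hm hy hmy.le) (by nlinarith)

theorem slopeCutoff_le_add (hcvx : ConvexOn ℝ (Icc a m) f) (hccv : ConcaveOn ℝ (Icc m b) f)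
    (hx : x ∈ Icc a b) (hy : y ∈ Icc a b) (hxy : x ≤ y) :
    slopeCutoff f m K y ≤ slopeCutoff f m K x + K * (y - x) := by
  rcases le_or_gt y m with hym | hmy
  · rw [slopeCutoff_of_le (hxy.trans hym), slopeCutoff_of_le hym]
    exact hcvx.max_line_le_add ⟨hx.1, hxy.trans hym⟩ ⟨hy.1, hym⟩ hxy
  rcases le_or_gt m x with hmx | hxm
  · rw [slopeCutoff_of_ge hmx, slopeCutoff_of_ge hmy.le]
    exact hccv.min_line_le_add ⟨hmx, hx.2⟩ ⟨hmy.le, hy.2⟩ hxy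
  have hleft : slopeCutoff f m K m ≤ slopeCutoff f m K x + K * (m - x) := by
    rw [slopeCutoff_of_le le_rfl, slopeCutoff_of_le hxm.le]
    exact hcvx.max_line_le_add ⟨hx.1, hxm.le⟩ ⟨hx.1.trans hxm.le, le_rfl⟩ hxm.le
  have hright : slopeCutoff f m K y ≤ slopeCutoff f m K m + K * (y - m) := by
    rw [slopeCutoff_of_ge le_rfl, slopeCutoff_of_ge hmy.le]
    exact hccv.min_line_le_add ⟨le_rfl, hmy.le.trans hy.2⟩ ⟨hmy.le, hy.2⟩ hmy.le
  linarith

theorem lipschitzOnWith_slopeCutoff {K : ℝ≥0} (hcvx : ConvexOn ℝ (Icc a m) f)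
    (hccv : ConcaveOn ℝ (Icc m b) f) (hmono : MonotoneOn f (Icc a b)) :
    LipschitzOnWith K (slopeCutoff f m K) (Icc a b) :=
  (monotoneOn_slopeCutoff hmono K.2).lipschitzOnWith_of_le_add fun _ hx _ hy hxy =>
    slopeCutoff_le_add hcvx hccv hx hy hxy

theorem abs_slopeCutoff_sub_le (hK : 0 ≤ K) : |slopeCutoff f m K x - f x| ≤ |f x - f m| := by
  have h₁ := le_abs_self (f x - f m)
  have h₂ := neg_abs_le (f x - f m)
  rcases le_total x m with h | h
  · have hℓ : K * (x - m) ≤ 0 := mul_nonpos_of_nonneg_of_nonpos hK (sub_nonpos.2 h)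
    rw [slopeCutoff_of_le h, abs_le]
    rcases max_cases (f x) (f m + K * (x - m)) with ⟨he, _⟩ | ⟨he, _⟩ <;> rw [he] <;>
      constructor <;> linarith
  · have hℓ : 0 ≤ K * (x - m) := mul_nonneg hK (sub_nonneg.2 h)
    rw [slopeCutoff_of_ge h, abs_le]
    rcases min_cases (f x) (f m + K * (x - m)) with ⟨he, _⟩ | ⟨he, _⟩ <;> rw [he] <;>
      constructor <;> linarith

theorem eventually_slopeCutoff_eq (f : ℝ → ℝ) (m x : ℝ) :
    ∀ᶠ K in atTop, slopeCutoff f m K x = f x := by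
  rcases lt_trichotomy x m with hxm | rfl | hmx
  · filter_upwards [eventually_ge_atTop ((f m - f x) / (m - x))] with K hK
    rw [div_le_iff₀ (sub_pos.2 hxm)] at hK
    rw [slopeCutoff_of_le hxm.le, max_eq_left (by linarith)]
  · exact Eventually.of_forall fun _ => slopeCutoff_self
  · filter_upwards [eventually_ge_atTop ((f x - f m) / (x - m))] with K hK
    rw [div_le_iff₀ (sub_pos.2 hmx)] at hK
    rw [slopeCutoff_of_ge hmx.le, min_eq_left (by linarith)]

end SlopeCutoff

theorem stmt12_general (ν : Measure ℝ) [IsProbabilityMeasure ν]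
    (hν : ν (Set.Icc (0 : ℝ) 1)ᶜ = 0)
    (m : ℝ) :
    let Fm : (ℝ → ℝ) → Prop := fun f =>
      ConvexOn ℝ (Set.Icc 0 m) f ∧ ConcaveOn ℝ (Set.Icc m 1) f ∧
        MonotoneOn f (Set.Icc (0 : ℝ) 1)
    (∀ f, Fm f → ∀ c : ℝ, 0 ≤ c → Fm (fun x => c * f x)) ∧
    (∀ f g, Fm f → Fm g → Fm (fun x => f x + g x)) ∧
    (∀ f, Fm f → ∀ ε : ℝ, 0 < ε → ∃ g, Fm g ∧
      (∃ K : NNReal, LipschitzOnWith K g (Set.Icc 0 1)) ∧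
      ∫ x, (g x - f x) ^ 2 ∂ν < ε) := by
  intro Fm
  refine ⟨fun f ⟨hcvx, hccv, hmono⟩ c hc => ⟨?_, ?_, ?_⟩,
    fun f g hf hg => ⟨hf.1.add hg.1, hf.2.1.add hg.2.1, hf.2.2.add hg.2.2⟩,
    fun f ⟨hcvx, hccv, hmono⟩ ε hε => ?_⟩
  · simpa only [smul_eq_mul] using hcvx.smul hc
  · simpa only [smul_eq_mul] using hccv.smul hc
  · exact fun x hx y hy hxy => mul_le_mul_of_nonneg_left (hmono hx hy hxy) hc
  have hae : ∀ᵐ x ∂ν, x ∈ Icc (0 : ℝ) 1 := ae_iff.2 hν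
  have hbound : ∀ x ∈ Icc (0 : ℝ) 1, |f x - f m| ≤ max |f 0 - f m| |f 1 - f m| := fun x hx =>
    abs_le_max_abs_abs (sub_le_sub_right (hmono (left_mem_Icc.2 zero_le_one) hx hx.1) _)
      (sub_le_sub_right (hmono hx (right_mem_Icc.2 zero_le_one) hx.2) _)
  have hL2 : Tendsto (fun n : ℕ => ∫ x, (slopeCutoff f m (n : ℝ≥0) x - f x) ^ 2 ∂ν)
      atTop (𝓝 0) :=
    tendsto_integral_sq_sub_of_eventually_eq
      (fun n => (monotoneOn_slopeCutoff hmono n.cast_nonneg).aestronglyMeasurable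
        measurableSet_Icc hae)
      (hmono.aestronglyMeasurable measurableSet_Icc hae)
      (fun n => hae.mono fun x hx => (abs_slopeCutoff_sub_le n.cast_nonneg).trans (hbound x hx))
      (ae_of_all _ fun x => by
        simpa using tendsto_natCast_atTop_atTop.eventually (eventually_slopeCutoff_eq f m x))
  obtain ⟨n, hn⟩ := (hL2.eventually_lt_const hε).exists
  exact ⟨slopeCutoff f m (n : ℝ≥0),
    ⟨convexOn_slopeCutoff hcvx, concaveOn_slopeCutoff hccv,
      monotoneOn_slopeCutoff hmono n.cast_nonneg⟩,
    ⟨n, lipschitzOnWith_slopeCutoff hcvx hccv hmono⟩, hn⟩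

/-- Proposition S? (Proposition `clconv`(a)): the class `F^m` is a convex cone
(closed under nonnegative scaling and addition), and its Lipschitz elements are
dense in `F^m_ν` with respect to the `L²(ν)` norm. -/
theorem stmt12 (ν : Measure ℝ) [IsProbabilityMeasure ν]
    (hν : ν (Set.Icc (0 : ℝ) 1)ᶜ = 0)
    (m : ℝ) (hm : m ∈ Set.Icc (0 : ℝ) 1) :
    let Fm : (ℝ → ℝ) → Prop := fun f =>
      ConvexOn ℝ (Set.Icc 0 m) f ∧ ConcaveOn ℝ (Set.Icc m 1) f ∧
        MonotoneOn f (Set.Icc (0 : ℝ) 1)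
    (∀ f, Fm f → ∀ c : ℝ, 0 ≤ c → Fm (fun x => c * f x)) ∧
    (∀ f g, Fm f → Fm g → Fm (fun x => f x + g x)) ∧
    (∀ f, Fm f → ∀ ε : ℝ, 0 < ε → ∃ g, Fm g ∧
      (∃ K : NNReal, LipschitzOnWith K g (Set.Icc 0 1)) ∧
      ∫ x, (g x - f x) ^ 2 ∂ν < ε) :=
  stmt12_general ν hν m
end

section
/- Let ν be a Borel probability measure on [0,1] and m ∈ [0,1] with ν([0,m]) > 0 and ν([m,1]) > 0. Then F^m_ν = {[f]_ν : f ∈ F^m} is a closed subset of L²(ν): if f_n ∈ F^m and ‖f_n − f‖_{L²(ν)} → 0 for some f ∈ L²(ν), then there exists g ∈ F^m with f = g ν-almost everywhere. -/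
/-!
Convergence in `L²(ν)` gives a subsequence converging `ν`-a.e., hence on a set `S ⊆ [0,1]` of
full measure. Since `ν([0,m]) > 0` and `ν([m,1]) > 0`, `S` has points on both sides of `m`, which
squeeze the values at `m` by monotonicity, so a further subsequence converges at `m` too. The limit
on `S ∪ {m}` is nondecreasing with nondecreasing slopes on `[0,m]` (nonincreasing on `[m,1]`).
Such data on `T ⊆ [a,c]` with `c ∈ T` extends to a convex nondecreasing function on `[a,c]`:
below `c` take the supremum of the nondecreasing supporting lines `f u + s u * (x - u)`, `s u` the
largest slope to the left of `u`, and keep the value `f c` at `c`. The concave half follows by the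
reflection `x ↦ -f (-x)`, and the two halves agree at `m`.
-/

open MeasureTheory Filter Set Topology Function

section Interpolation

variable {a c : ℝ} {T : Set ℝ} {f : ℝ → ℝ}

lemma ConvexOn.update_right {g : ℝ → ℝ} {y : ℝ} (hg : ConvexOn ℝ (Icc a c) g)
    (hy : g c ≤ y) :
    ConvexOn ℝ (Icc a c) (update g c y) := by
  refine convexOn_iff_slope_mono_adjacent.2 ⟨convex_Icc a c, fun x w z hx hz hxw hwz => ?_⟩
  have hxc : x ≠ c := (hxw.trans_le (hwz.le.trans hz.2)).ne
  have hwc : w ≠ c := (hwz.trans_le hz.2).ne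
  rw [update_of_ne hxc, update_of_ne hwc]
  refine (hg.slope_mono_adjacent hx hz hxw hwz).trans
    (div_le_div_of_nonneg_right ?_ (sub_pos.2 hwz).le)
  rcases eq_or_ne z c with rfl | hzc
  · simpa using hy
  · rw [update_of_ne hzc]

lemma MonotoneOn.update_right {g : ℝ → ℝ} {y : ℝ} (hg : MonotoneOn g (Icc a c))
    (hy : g c ≤ y) :
    MonotoneOn (update g c y) (Icc a c) := by
  intro x hx z hz hxz
  rcases eq_or_ne z c with rfl | hzc
  · rcases eq_or_ne x z with rfl | hxz'
    · exact le_rfl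
    · simpa [update_of_ne hxz'] using (hg hx hz hxz).trans hy
  · rw [update_of_ne hzc, update_of_ne (hxz.trans_lt (lt_of_le_of_ne hz.2 hzc)).ne]
    exact hg hx hz hxz

lemma exists_nonneg_affine_le_of_slope_mono (hf : MonotoneOn f T)
    (hslope : ∀ x ∈ T, ∀ y ∈ T, ∀ z ∈ T, x < y → y < z →
      (f y - f x) / (y - x) ≤ (f z - f y) / (z - y))
    (hc : c ∈ T) {u : ℝ} (hu : u ∈ T) (huc : u < c) :
    ∃ s, 0 ≤ s ∧ ∀ w ∈ T, f u + s * (w - u) ≤ f w := by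
  set D := insert 0 ((fun v => (f u - f v) / (u - v)) '' (T ∩ Iio u))
  have hD : ∀ w ∈ T, u < w → ∀ d ∈ D, d ≤ (f w - f u) / (w - u) := by
    rintro w hw huw d (rfl | ⟨v, ⟨hv, hvu⟩, rfl⟩)
    · exact div_nonneg (sub_nonneg.2 (hf hu hw huw.le)) (sub_nonneg.2 huw.le)
    · exact hslope v hv u hu w hw hvu huw
  have hbdd : BddAbove D := ⟨_, hD c hc huc⟩
  refine ⟨sSup D, le_csSup hbdd (mem_insert 0 _), fun w hw => ?_⟩
  rcases lt_trichotomy w u with hwu | rfl | huw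
  · have := le_csSup hbdd (mem_insert_of_mem 0 ⟨w, ⟨hw, hwu⟩, rfl⟩)
    rw [div_le_iff₀ (sub_pos.2 hwu)] at this
    linarith
  · simp
  · have := csSup_le ⟨0, mem_insert 0 _⟩ (hD w hw huw)
    rw [le_div_iff₀ (sub_pos.2 huw)] at this
    linarith

lemma exists_convexOn_monotoneOn_eqOn_Iio (hf : MonotoneOn f T)
    (hslope : ∀ x ∈ T, ∀ y ∈ T, ∀ z ∈ T, x < y → y < z →
      (f y - f x) / (y - x) ≤ (f z - f y) / (z - y))
    (hc : c ∈ T) (hne : (T ∩ Iio c).Nonempty) :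
    ∃ g, ConvexOn ℝ (Icc a c) g ∧ MonotoneOn g (Icc a c) ∧ g c ≤ f c ∧
      EqOn f g (T ∩ Iio c) := by
  choose s hs0 hs using fun u : ↥(T ∩ Iio c) =>
    exists_nonneg_affine_le_of_slope_mono hf hslope hc u.2.1 u.2.2
  have := hne.to_subtype
  set L : ↥(T ∩ Iio c) → ℝ → ℝ := fun u x => f u + s u * (x - u)
  have hLmono : ∀ u, Monotone (L u) := fun u x y hxy => by
    simpa [L] using mul_le_mul_of_nonneg_left (sub_le_sub_right hxy _) (hs0 u)
  have hbdd : ∀ x ≤ c, BddAbove (range fun u => L u x) :=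
    fun x hx => ⟨f c, forall_mem_range.2 fun u => (hLmono u hx).trans (hs u c hc)⟩
  refine ⟨fun x => ⨆ u, L u x, ⟨convex_Icc a c, fun x hx y hy p q hp hq hpq => ?_⟩,
    fun x _ y hy hxy => ciSup_mono (hbdd y hy.2) fun u => hLmono u hxy,
    ciSup_le fun u => hs u c hc, fun u hu => ?_⟩
  · refine ciSup_le fun u => ?_
    have hL : L u (p • x + q • y) = p * L u x + q * L u y := by
      simp only [L, smul_eq_mul]
      linear_combination (f u - s u * u) * hpq.symm
    rw [hL, smul_eq_mul, smul_eq_mul]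
    gcongr
    · exact le_ciSup (hbdd x hx.2) u
    · exact le_ciSup (hbdd y hy.2) u
  · refine le_antisymm ?_ (ciSup_le fun v => hs v u hu.1)
    simpa [L] using le_ciSup (hbdd u hu.2.le) ⟨u, hu⟩

theorem exists_convexOn_monotoneOn_eqOn_of_slope_mono (hf : MonotoneOn f T)
    (hslope : ∀ x ∈ T, ∀ y ∈ T, ∀ z ∈ T, x < y → y < z →
      (f y - f x) / (y - x) ≤ (f z - f y) / (z - y))
    (hT : T ⊆ Icc a c) (hc : c ∈ T) :
    ∃ g, ConvexOn ℝ (Icc a c) g ∧ MonotoneOn g (Icc a c) ∧ EqOn f g T := by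
  rcases (T ∩ Iio c).eq_empty_or_nonempty with hemp | hne
  · refine ⟨fun _ => f c, convexOn_const _ (convex_Icc a c), monotoneOn_const, fun x hx => ?_⟩
    have : x = c := (hT hx).2.eq_of_not_lt fun hxc => hemp.subset ⟨hx, hxc⟩
    rw [this]
  · obtain ⟨g, hg, hgm, hgc, hfg⟩ := exists_convexOn_monotoneOn_eqOn_Iio hf hslope hc hne
    refine ⟨update g c (f c), hg.update_right hgc, hgm.update_right hgc, fun x hx => ?_⟩
    rcases eq_or_ne x c with rfl | hxc
    · simp
    · rw [update_of_ne hxc, hfg ⟨hx, lt_of_le_of_ne (hT hx).2 hxc⟩]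

theorem exists_convexOn_monotoneOn_eqOn_of_tendsto {G : ℕ → ℝ → ℝ}
    (hG : ∀ k, ConvexOn ℝ (Icc a c) (G k)) (hGm : ∀ k, MonotoneOn (G k) (Icc a c))
    (hT : T ⊆ Icc a c) (hc : c ∈ T)
    (hlim : ∀ x ∈ T, Tendsto (fun k => G k x) atTop (𝓝 (f x))) :
    ∃ g, ConvexOn ℝ (Icc a c) g ∧ MonotoneOn g (Icc a c) ∧ EqOn f g T :=
  exists_convexOn_monotoneOn_eqOn_of_slope_mono
    (fun x hx y hy hxy => le_of_tendsto_of_tendsto' (hlim x hx) (hlim y hy)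
      fun k => hGm k (hT hx) (hT hy) hxy)
    (fun x hx y hy z hz hxy hyz => le_of_tendsto_of_tendsto'
      (((hlim y hy).sub (hlim x hx)).div_const _) (((hlim z hz).sub (hlim y hy)).div_const _)
      fun k => (hG k).slope_mono_adjacent (hT hx) (hT hz) hxy hyz)
    hT hc

end Interpolation

lemma ConvexOn.neg_comp_neg {s : Set ℝ} {g : ℝ → ℝ} (h : ConvexOn ℝ s g) :
    ConcaveOn ℝ (-s) (fun x => -g (-x)) :=
  (h.comp_linearMap (-LinearMap.id)).neg

lemma ConcaveOn.neg_comp_neg {s : Set ℝ} {g : ℝ → ℝ} (h : ConcaveOn ℝ s g) :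
    ConvexOn ℝ (-s) (fun x => -g (-x)) :=
  (h.comp_linearMap (-LinearMap.id)).neg

lemma MonotoneOn.neg_comp_neg {s : Set ℝ} {g : ℝ → ℝ} (h : MonotoneOn g s) :
    MonotoneOn (fun x => -g (-x)) (-s) :=
  fun _ hx _ hy hxy => neg_le_neg (h hy hx (neg_le_neg hxy))

theorem exists_concaveOn_monotoneOn_eqOn_of_tendsto {b c : ℝ} {T : Set ℝ} {f : ℝ → ℝ}
    {G : ℕ → ℝ → ℝ}
    (hG : ∀ k, ConcaveOn ℝ (Icc c b) (G k)) (hGm : ∀ k, MonotoneOn (G k) (Icc c b))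
    (hT : T ⊆ Icc c b) (hc : c ∈ T)
    (hlim : ∀ x ∈ T, Tendsto (fun k => G k x) atTop (𝓝 (f x))) :
    ∃ g, ConcaveOn ℝ (Icc c b) g ∧ MonotoneOn g (Icc c b) ∧ EqOn f g T := by
  obtain ⟨g, hg, hgm, hfg⟩ := exists_convexOn_monotoneOn_eqOn_of_tendsto
    (G := fun k x => -G k (-x)) (T := -T) (f := fun x => -f (-x))
    (fun k => by simpa using (hG k).neg_comp_neg)
    (fun k => by simpa using (hGm k).neg_comp_neg)
    (by simpa using neg_subset_neg.2 hT) (by simpa using hc)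
    (fun x hx => ((hlim (-x) hx).comp tendsto_id).neg)
  refine ⟨fun x => -g (-x), by simpa using hg.neg_comp_neg, by simpa using hgm.neg_comp_neg,
    fun x hx => ?_⟩
  simpa using congrArg Neg.neg (hfg (x := -x) (by simpa using hx))

theorem exists_convexOn_concaveOn_tendsto_of_tendsto {a m b : ℝ} {T : Set ℝ} {G : ℕ → ℝ → ℝ}
    (hG : ∀ k, ConvexOn ℝ (Icc a m) (G k) ∧ ConcaveOn ℝ (Icc m b) (G k) ∧
      MonotoneOn (G k) (Icc a b))
    (hT : T ⊆ Icc a b) (hm : m ∈ T)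
    (hlim : ∀ x ∈ T, ∃ l, Tendsto (fun k => G k x) atTop (𝓝 l)) :
    ∃ g, (ConvexOn ℝ (Icc a m) g ∧ ConcaveOn ℝ (Icc m b) g ∧ MonotoneOn g (Icc a b)) ∧
      ∀ x ∈ T, Tendsto (fun k => G k x) atTop (𝓝 (g x)) := by
  set f := fun x => limUnder atTop fun k => G k x
  have hf : ∀ x ∈ T, Tendsto (fun k => G k x) atTop (𝓝 (f x)) :=
    fun x hx => tendsto_nhds_limUnder (hlim x hx)
  obtain ⟨ham, hmb⟩ := hT hm
  have hmT₁ : m ∈ T ∩ Icc a m := ⟨hm, right_mem_Icc.2 ham⟩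
  have hmT₂ : m ∈ T ∩ Icc m b := ⟨hm, left_mem_Icc.2 hmb⟩
  obtain ⟨g₁, hg₁, hg₁m, hfg₁⟩ := exists_convexOn_monotoneOn_eqOn_of_tendsto
    (fun k => (hG k).1) (fun k => (hG k).2.2.mono (Icc_subset_Icc_right hmb)) inter_subset_right
    hmT₁ fun x hx => hf x hx.1
  obtain ⟨g₂, hg₂, hg₂m, hfg₂⟩ := exists_concaveOn_monotoneOn_eqOn_of_tendsto
    (fun k => (hG k).2.1) (fun k => (hG k).2.2.mono (Icc_subset_Icc_left ham)) inter_subset_right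
    hmT₂ fun x hx => hf x hx.1
  have hg₁₂ : g₁ m = g₂ m := (hfg₁ hmT₁).symm.trans (hfg₂ hmT₂)
  classical
  set g := (Iic m).piecewise g₁ g₂
  have hg₁g : EqOn g₁ g (Icc a m) := fun x hx =>
    (piecewise_eq_of_mem _ _ _ (show x ∈ Iic m from hx.2)).symm
  have hg₂g : EqOn g₂ g (Icc m b) := by
    intro x hx
    rcases hx.1.eq_or_lt with rfl | hmx
    · simp [g, hg₁₂]
    · exact (piecewise_eq_of_notMem _ _ _ (show x ∉ Iic m from hmx.not_ge)).symm
  refine ⟨g, ⟨hg₁.congr hg₁g, hg₂.congr hg₂g, ?_⟩, fun x hx => ?_⟩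
  · rw [← Icc_union_Icc_eq_Icc ham hmb]
    exact (hg₁m.congr hg₁g).union_right (hg₂m.congr hg₂g) (isGreatest_Icc ham) (isLeast_Icc hmb)
  · rcases le_total x m with hxm | hmx
    · rw [← hg₁g ⟨(hT hx).1, hxm⟩, ← hfg₁ ⟨hx, (hT hx).1, hxm⟩]; exact hf x hx
    · rw [← hg₂g ⟨hmx, (hT hx).2⟩, ← hfg₂ ⟨hx, hmx, (hT hx).2⟩]; exact hf x hx

theorem exists_seq_tendsto_ae_of_tendsto_integral_sq {α : Type*} [MeasurableSpace α]
    {μ : Measure α} {F : ℕ → α → ℝ} {f : α → ℝ} (hF : ∀ n, MemLp (F n) 2 μ) (hf : MemLp f 2 μ)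
    (h : Tendsto (fun n => ∫ x, (F n x - f x) ^ 2 ∂μ) atTop (𝓝 0)) :
    ∃ ns : ℕ → ℕ, StrictMono ns ∧ ∀ᵐ x ∂μ, Tendsto (fun k => F (ns k) x) atTop (𝓝 (f x)) := by
  have hnorm : ∀ n, eLpNorm (F n - f) 2 μ =
      ENNReal.ofReal ((∫ x, (F n x - f x) ^ 2 ∂μ) ^ (2 : ℝ)⁻¹) := fun n => by
    simp [((hF n).sub hf).eLpNorm_eq_integral_rpow_norm two_ne_zero ENNReal.ofNat_ne_top]
  have hLp : Tendsto (fun n => eLpNorm (F n - f) 2 μ) atTop (𝓝 0) := by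
    simpa [hnorm] using
      ENNReal.tendsto_ofReal (h.rpow_const (p := (2 : ℝ)⁻¹) (Or.inr (by norm_num)))
  exact (tendstoInMeasure_of_tendsto_eLpNorm two_ne_zero (fun n => (hF n).1) hf.1
    hLp).exists_seq_tendsto_ae

theorem MonotoneOn.exists_memLp_eqOn {ν : Measure ℝ} [IsFiniteMeasure ν] {a b : ℝ} {g : ℝ → ℝ}
    (hab : a ≤ b) (hg : MonotoneOn g (Icc a b)) (hν : ∀ᵐ x ∂ν, x ∈ Icc a b) (p : ENNReal) :
    ∃ G, MemLp G p ν ∧ EqOn g G (Icc a b) := by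
  have hbdd : ∀ x ∈ Icc a b, g x ∈ Icc (g a) (g b) := fun x hx =>
    ⟨hg (left_mem_Icc.2 hab) hx hx.1, hg hx (right_mem_Icc.2 hab) hx.2⟩
  obtain ⟨G, hG, hgG⟩ := hg.exists_monotone_extension
    ⟨g a, forall_mem_image.2 fun x hx => (hbdd x hx).1⟩
    ⟨g b, forall_mem_image.2 fun x hx => (hbdd x hx).2⟩
  have hGbdd : ∀ᵐ x ∂ν, G x ∈ Icc (G a) (G b) := hν.mono fun x hx => ⟨hG hx.1, hG hx.2⟩
  exact ⟨G, memLp_of_bounded hGbdd hG.measurable.aestronglyMeasurable p, hgG⟩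

theorem exists_subseq_tendsto_of_le_of_le {u v w : ℕ → ℝ} {x y : ℝ}
    (hu : Tendsto u atTop (𝓝 x)) (hw : Tendsto w atTop (𝓝 y))
    (huv : ∀ k, u k ≤ v k) (hvw : ∀ k, v k ≤ w k) :
    ∃ φ : ℕ → ℕ, StrictMono φ ∧ ∃ l, Tendsto (v ∘ φ) atTop (𝓝 l) := by
  have hv : ∀ᶠ k in atTop, v k ∈ Icc (x - 1) (y + 1) :=
    ((hu.eventually (Ici_mem_nhds (sub_one_lt x))).and
      (hw.eventually (Iic_mem_nhds (lt_add_one y)))).mono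
        fun k hk => ⟨hk.1.trans (huv k), (hvw k).trans hk.2⟩
  obtain ⟨l, -, φ, hφ, hl⟩ :=
    tendsto_subseq_of_frequently_bounded (Metric.isBounded_Icc _ _) hv.frequently
  exact ⟨φ, hφ, l, hl⟩

theorem stmt13_general (ν : Measure ℝ) [IsProbabilityMeasure ν]
    (hν : ν (Set.Icc (0 : ℝ) 1)ᶜ = 0)
    (m : ℝ)
    (h1 : 0 < ν (Set.Icc 0 m)) (h2 : 0 < ν (Set.Icc m 1))
    (f : ℝ → ℝ) (hf : MemLp f 2 ν)
    (fn : ℕ → ℝ → ℝ)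
    (hfn : ∀ n, ConvexOn ℝ (Set.Icc 0 m) (fn n) ∧ ConcaveOn ℝ (Set.Icc m 1) (fn n) ∧
      MonotoneOn (fn n) (Set.Icc (0 : ℝ) 1))
    (hconv : Tendsto (fun n => ∫ x, (fn n x - f x) ^ 2 ∂ν) atTop (nhds 0)) :
    ∃ g : ℝ → ℝ,
      (ConvexOn ℝ (Set.Icc 0 m) g ∧ ConcaveOn ℝ (Set.Icc m 1) g ∧
        MonotoneOn g (Set.Icc (0 : ℝ) 1)) ∧ f =ᵐ[ν] g := by
  have hI : ∀ᵐ x ∂ν, x ∈ Icc (0 : ℝ) 1 := ae_iff.2 hν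
  -- `fn n` need not be measurable off `[0,1]`, so pass to monotone `L²` versions first.
  choose F hF hfF using fun n => (hfn n).2.2.exists_memLp_eqOn zero_le_one hI 2
  have hFf : Tendsto (fun n => ∫ x, (F n x - f x) ^ 2 ∂ν) atTop (𝓝 0) :=
    hconv.congr fun n => integral_congr_ae <| hI.mono fun x hx => by rw [hfF n hx]
  obtain ⟨ns, -, hae⟩ := exists_seq_tendsto_ae_of_tendsto_integral_sq hF hf hFf
  set S := {x | x ∈ Icc (0 : ℝ) 1 ∧ Tendsto (fun k => fn (ns k) x) atTop (𝓝 (f x))}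
  have hS : ∀ᵐ x ∂ν, x ∈ S := by
    filter_upwards [hI, hae] with x hx hFx
    exact ⟨hx, by simpa only [hfF _ hx] using hFx⟩
  obtain ⟨a, ha, haS⟩ := Measure.exists_mem_of_measure_ne_zero_of_ae h1.ne' (ae_restrict_of_ae hS)
  obtain ⟨b, hb, hbS⟩ := Measure.exists_mem_of_measure_ne_zero_of_ae h2.ne' (ae_restrict_of_ae hS)
  have hm : m ∈ Icc (0 : ℝ) 1 := ⟨ha.1.trans ha.2, hb.1.trans hb.2⟩
  obtain ⟨φ, hφ, hmlim⟩ := exists_subseq_tendsto_of_le_of_le haS.2 hbS.2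
    (fun k => (hfn (ns k)).2.2 haS.1 hm ha.2) (fun k => (hfn (ns k)).2.2 hm hbS.1 hb.1)
  obtain ⟨g, hg, hgS⟩ := exists_convexOn_concaveOn_tendsto_of_tendsto
    (G := fun k => fn (ns (φ k))) (T := insert m S) (fun k => hfn _)
    (insert_subset hm fun x hx => hx.1) (mem_insert m S) <| by
      rintro x (rfl | hx)
      · exact hmlim
      · exact ⟨f x, hx.2.comp hφ.tendsto_atTop⟩
  refine ⟨g, hg, ?_⟩
  filter_upwards [hS] with x hx
  exact tendsto_nhds_unique (hx.2.comp hφ.tendsto_atTop) (hgS x (mem_insert_of_mem m hx))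

/-- Proposition `clconv`(c), sufficiency of condition (i): if `ν([0,m]) > 0`
and `ν([m,1]) > 0`, then `F^m_ν` is closed in `L²(ν)`. -/
theorem stmt13 (ν : Measure ℝ) [IsProbabilityMeasure ν]
    (hν : ν (Set.Icc (0 : ℝ) 1)ᶜ = 0)
    (m : ℝ) (hm : m ∈ Set.Icc (0 : ℝ) 1)
    (h1 : 0 < ν (Set.Icc 0 m)) (h2 : 0 < ν (Set.Icc m 1))
    (f : ℝ → ℝ) (hf : MemLp f 2 ν)
    (fn : ℕ → ℝ → ℝ)
    (hfn : ∀ n, ConvexOn ℝ (Set.Icc 0 m) (fn n) ∧ ConcaveOn ℝ (Set.Icc m 1) (fn n) ∧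
      MonotoneOn (fn n) (Set.Icc (0 : ℝ) 1))
    (hconv : Tendsto (fun n => ∫ x, (fn n x - f x) ^ 2 ∂ν) atTop (nhds 0)) :
    ∃ g : ℝ → ℝ,
      (ConvexOn ℝ (Set.Icc 0 m) g ∧ ConcaveOn ℝ (Set.Icc m 1) g ∧
        MonotoneOn g (Set.Icc (0 : ℝ) 1)) ∧ f =ᵐ[ν] g :=
  stmt13_general ν hν m h1 h2 f hf fn hfn hconv
end

section
/- Let Λ ⊆ ℝʲ be the cone of increasing convex sequences based on x₁ < ⋯ < x_j, with linearly independent generators u⁰ = (1,…,1) and u^ℓ defined by u^ℓ_i = (x_i − x_ℓ)⁺ for ℓ = 1,…,j−1, so every v ∈ ℝʲ has a unique representation v = Σ_{ℓ=0}^{j−1} λ_ℓ(v) u^ℓ. Define the knot set A(v) = {1 ≤ ℓ ≤ j−1 : λ_ℓ(v) ≠ 0}. Let A ⊆ {1,…,j−1} and v', v'' ∈ ℝʲ be such that the projections of v' and v'' onto Λ both have knot set exactly A. Then for every v on the segment [v', v''], the projection of v onto Λ also has knot set A and equals the orthogonal projection of v onto the linear span L_A of {u^ℓ : ℓ ∈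 A ∪ {0}}. -/
/-!
The projection `p` of `y` onto `Λ` is characterised by the Kuhn–Tucker conditions
`⟨y - p, u⁰⟩ = 0`, `⟨y - p, uˡ⟩ ≤ 0`, with equality wherever `λ_ℓ(p) > 0`. Once the active set
`A` is fixed these conditions are linear in `(y, p)`, so they pass from `(v', p')` and
`(v'', p'')` to the convex combination `(v, q)`, `q = (1 - t) p' + t p''`. Expanding
`⟨v - q, w - q⟩ = Σ_ℓ λ_ℓ(w - q) ⟨v - q, uˡ⟩` then shows `⟨v - q, w - q⟩ ≤ 0` for every `w`
with `λ_ℓ(w) ≥ 0` off `A`, a set containing both `Λ` and `L_A`. Hence `q` is the (unique)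
projection of `v` onto `Λ` as well as onto `L_A`, and its knot set is `A` because `λ(q)` is
the convex combination of `λ(p')` and `λ(p'')`, which have the same support.
-/

open Filter Topology

section SumSq

variable {ι : Type*} {s : Finset ι} {y p q w d : ι → ℝ}

theorem Finset.sum_sq_sub_eq_sum_sq_sub_add (s : Finset ι) (y q w : ι → ℝ) :
    ∑ i ∈ s, (y i - w i) ^ 2 = ∑ i ∈ s, (y i - q i) ^ 2
      - 2 * ∑ i ∈ s, (y i - q i) * (w i - q i) + ∑ i ∈ s, (w i - q i) ^ 2 := by
  rw [Finset.mul_sum, ← Finset.sum_sub_distrib, ← Finset.sum_add_distrib]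
  exact Finset.sum_congr rfl fun i _ => by ring

theorem Finset.sum_sq_le_of_sum_mul_nonpos (h : ∑ i ∈ s, (y i - q i) * (w i - q i) ≤ 0) :
    ∑ i ∈ s, (y i - q i) ^ 2 ≤ ∑ i ∈ s, (y i - w i) ^ 2 := by
  rw [Finset.sum_sq_sub_eq_sum_sq_sub_add s y q w]
  linarith [Finset.sum_nonneg fun i (_ : i ∈ s) => sq_nonneg (w i - q i)]

theorem Finset.sum_mul_nonpos_of_forall_sum_sq_le {ε : ℝ} (hε : 0 < ε)
    (h : ∀ c ∈ Set.Ioc 0 ε,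
      ∑ i ∈ s, (y i - p i) ^ 2 ≤ ∑ i ∈ s, (y i - (p i + c * d i)) ^ 2) :
    ∑ i ∈ s, (y i - p i) * d i ≤ 0 := by
  set N := ∑ i ∈ s, d i ^ 2
  have hbound : ∀ c ∈ Set.Ioc 0 ε, ∑ i ∈ s, (y i - p i) * d i ≤ c * N / 2 := by
    intro c hc
    have hexp := Finset.sum_sq_sub_eq_sum_sq_sub_add s y p (fun i => p i + c * d i)
    simp only [add_sub_cancel_left, mul_pow, ← Finset.mul_sum, mul_left_comm _ c] at hexp
    rw [le_div_iff₀ two_pos]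
    nlinarith [h c hc, hc.1]
  have hlim : Tendsto (fun c => c * N / 2) (𝓝[>] 0) (𝓝 0) := by
    have : Tendsto (fun c => c * N / 2) (𝓝 0) (𝓝 (0 * N / 2)) :=
      (tendsto_id.mul_const N).div_const 2
    simpa using this.mono_left nhdsWithin_le_nhds
  exact ge_of_tendsto hlim (eventually_of_mem (Ioc_mem_nhdsGT hε) hbound)

theorem Finset.eqOn_of_sum_sq_le_midpoint
    (hp : ∑ i ∈ s, (y i - p i) ^ 2 ≤ ∑ i ∈ s, (y i - (p i + q i) / 2) ^ 2)
    (hq : ∑ i ∈ s, (y i - q i) ^ 2 ≤ ∑ i ∈ s, (y i - p i) ^ 2) :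
    ∀ i ∈ s, p i = q i := by
  have hmid : ∑ i ∈ s, (y i - (p i + q i) / 2) ^ 2 = (∑ i ∈ s, (y i - p i) ^ 2
      + ∑ i ∈ s, (y i - q i) ^ 2) / 2 - (∑ i ∈ s, (p i - q i) ^ 2) / 4 := by
    rw [← Finset.sum_add_distrib, Finset.sum_div, Finset.sum_div, ← Finset.sum_sub_distrib]
    exact Finset.sum_congr rfl fun i _ => by ring
  have hzero : ∑ i ∈ s, (p i - q i) ^ 2 = 0 :=
    le_antisymm (by linarith) (Finset.sum_nonneg fun i _ => sq_nonneg _)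
  intro i hi
  exact sub_eq_zero.1 (pow_eq_zero_iff two_ne_zero |>.1
    ((Finset.sum_eq_zero_iff_of_nonneg fun i _ => sq_nonneg _).1 hzero i hi))

end SumSq

namespace IncreasingConvexCone

variable (x : ℕ → ℝ) (j : ℕ)

noncomputable def slope (v : ℕ → ℝ) (k : ℕ) : ℝ := (v (k + 1) - v k) / (x (k + 1) - x k)

/-- `slopeJump x v ℓ` is the paper's `λ_ℓ(v)` and `hinge x ℓ` its `uˡ`. -/
noncomputable def slopeJump (v : ℕ → ℝ) (ℓ : ℕ) : ℝ :=
  if ℓ ≤ 1 then (v 2 - v 1) / (x 2 - x 1)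
  else (v (ℓ + 1) - v ℓ) / (x (ℓ + 1) - x ℓ) - (v ℓ - v (ℓ - 1)) / (x ℓ - x (ℓ - 1))

noncomputable def hinge (ℓ i : ℕ) : ℝ := max (x i - x ℓ) 0

def InCone (v : ℕ → ℝ) : Prop := ∀ ℓ, 1 ≤ ℓ → ℓ ≤ j - 1 → 0 ≤ slopeJump x v ℓ

def IsProj (y p : ℕ → ℝ) : Prop :=
  InCone x j p ∧ ∀ w, InCone x j w →
    ∑ i ∈ Finset.Icc 1 j, (y i - p i) ^ 2 ≤ ∑ i ∈ Finset.Icc 1 j, (y i - w i) ^ 2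

def knots (v : ℕ → ℝ) : Set ℕ := {ℓ | 1 ≤ ℓ ∧ ℓ ≤ j - 1 ∧ slopeJump x v ℓ ≠ 0}

variable {x j}

theorem slopeJump_one (v : ℕ → ℝ) : slopeJump x v 1 = slope x v 1 := by
  simp [slopeJump, slope]

theorem slopeJump_add_one (v : ℕ → ℝ) {k : ℕ} (hk : 1 ≤ k) :
    slopeJump x v (k + 1) = slope x v (k + 1) - slope x v k := by
  simp [slopeJump, slope, show ¬ k + 1 ≤ 1 by omega]

theorem slope_eq_sum_slopeJump (v : ℕ → ℝ) {k : ℕ} (hk : 1 ≤ k) :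
    slope x v k = ∑ ℓ ∈ Finset.Icc 1 k, slopeJump x v ℓ := by
  induction k, hk using Nat.le_induction with
  | base => simp [slopeJump_one]
  | succ k hk ih => rw [Finset.sum_Icc_succ_top (by omega), ← ih, slopeJump_add_one v hk]; ring

theorem slopeJump_linear (v w : ℕ → ℝ) (a b : ℝ) (ℓ : ℕ) :
    slopeJump x (fun i => a * v i + b * w i) ℓ = a * slopeJump x v ℓ + b * slopeJump x w ℓ := by
  unfold slopeJump
  split_ifs <;> · simp only [div_eq_mul_inv]; ring

theorem slopeJump_sub (v w : ℕ → ℝ) (ℓ : ℕ) :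
    slopeJump x (fun i => v i - w i) ℓ = slopeJump x v ℓ - slopeJump x w ℓ := by
  simpa [← sub_eq_add_neg] using slopeJump_linear v w 1 (-1) ℓ (x := x)

theorem slopeJump_add_mul (v w : ℕ → ℝ) (c : ℝ) (ℓ : ℕ) :
    slopeJump x (fun i => v i + c * w i) ℓ = slopeJump x v ℓ + c * slopeJump x w ℓ := by
  simpa using slopeJump_linear v w 1 c ℓ (x := x)

theorem slopeJump_const (c : ℝ) (ℓ : ℕ) : slopeJump x (fun _ => c) ℓ = 0 := by
  unfold slopeJump
  split_ifs <;> simp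

theorem slopeJump_congr {v w : ℕ → ℝ} (h : ∀ i ∈ Finset.Icc 1 j, v i = w i) {ℓ : ℕ}
    (hℓ : 1 ≤ ℓ) (hℓj : ℓ ≤ j - 1) : slopeJump x v ℓ = slopeJump x w ℓ := by
  have h' : ∀ i, 1 ≤ i → i ≤ ℓ + 1 → v i = w i := fun i hi hiℓ =>
    h i (Finset.mem_Icc.2 ⟨hi, by omega⟩)
  unfold slopeJump
  split_ifs
  · rw [h' 1 le_rfl (by omega), h' 2 (by omega) (by omega)]
  · rw [h' (ℓ + 1) (by omega) le_rfl, h' ℓ hℓ (by omega), h' (ℓ - 1) (by omega) (by omega)]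

theorem mem_knots_iff {v : ℕ → ℝ} {ℓ : ℕ} (hℓ : 1 ≤ ℓ) (hℓj : ℓ ≤ j - 1) :
    ℓ ∈ knots x j v ↔ slopeJump x v ℓ ≠ 0 := by
  simp [knots, hℓ, hℓj]

theorem knots_congr {v w : ℕ → ℝ} (h : ∀ i ∈ Finset.Icc 1 j, v i = w i) :
    knots x j v = knots x j w := by
  ext ℓ
  exact and_congr_right fun hℓ => and_congr_right fun hℓj => by rw [slopeJump_congr h hℓ hℓj]

theorem InCone.mem_knots_iff {v : ℕ → ℝ} (hv : InCone x j v) {ℓ : ℕ} (hℓ : 1 ≤ ℓ)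
    (hℓj : ℓ ≤ j - 1) : ℓ ∈ knots x j v ↔ 0 < slopeJump x v ℓ := by
  rw [IncreasingConvexCone.mem_knots_iff hℓ hℓj]
  exact ⟨fun h => (hv ℓ hℓ hℓj).lt_of_ne' h, ne_of_gt⟩

theorem InCone.convexComb {p q : ℕ → ℝ} (hp : InCone x j p) (hq : InCone x j q) {t : ℝ}
    (ht : t ∈ Set.Icc (0 : ℝ) 1) : InCone x j (fun i => (1 - t) * p i + t * q i) := by
  intro ℓ hℓ hℓj
  rw [slopeJump_linear]
  exact add_nonneg (mul_nonneg (sub_nonneg.2 ht.2) (hp ℓ hℓ hℓj)) (mul_nonneg ht.1 (hq ℓ hℓ hℓj))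

theorem InCone.midpoint {p q : ℕ → ℝ} (hp : InCone x j p) (hq : InCone x j q) :
    InCone x j (fun i => (p i + q i) / 2) := by
  have h := hp.convexComb hq (t := 1 / 2) ⟨by norm_num, by norm_num⟩
  convert h using 2 with i
  ring

theorem knots_convexComb {p' p'' : ℕ → ℝ} {A : Set ℕ} (hp' : InCone x j p')
    (hA' : knots x j p' = A) (hp'' : InCone x j p'') (hA'' : knots x j p'' = A) {t : ℝ}
    (ht : t ∈ Set.Icc (0 : ℝ) 1) : knots x j (fun i => (1 - t) * p' i + t * p'' i) = A := by
  ext ℓ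
  rw [← hA']
  refine and_congr_right fun hℓ => and_congr_right fun hℓj => ?_
  rw [slopeJump_linear]
  have hiff : slopeJump x p' ℓ ≠ 0 ↔ slopeJump x p'' ℓ ≠ 0 := by
    rw [← mem_knots_iff hℓ hℓj, ← mem_knots_iff hℓ hℓj, hA', hA'']
  have h1t : 0 ≤ 1 - t := sub_nonneg.2 ht.2
  by_cases h0 : slopeJump x p' ℓ = 0
  · rw [h0, not_not.1 (mt hiff.2 (not_not.2 h0))]
    simp
  · have hpos' := (hp' ℓ hℓ hℓj).lt_of_ne (Ne.symm h0)
    have hpos'' := (hp'' ℓ hℓ hℓj).lt_of_ne (Ne.symm (hiff.1 h0))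
    simp only [ne_eq, h0, not_false_eq_true, iff_true]
    rcases ht.1.eq_or_lt with rfl | ht0
    · simpa using h0
    · exact (add_pos_of_nonneg_of_pos (mul_nonneg h1t hpos'.le) (mul_pos ht0 hpos'')).ne'

theorem IsProj.eqOn {y p q : ℕ → ℝ} (hp : IsProj x j y p) (hq : IsProj x j y q) :
    ∀ i ∈ Finset.Icc 1 j, p i = q i :=
  Finset.eqOn_of_sum_sq_le_midpoint (hp.2 _ (hp.1.midpoint hq.1)) (hq.2 p hp.1)

theorem IsProj.sum_mul_nonpos {y p d : ℕ → ℝ} (h : IsProj x j y p) {ε : ℝ} (hε : 0 < ε)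
    (hd : ∀ c ∈ Set.Ioc 0 ε, InCone x j (fun i => p i + c * d i)) :
    ∑ i ∈ Finset.Icc 1 j, (y i - p i) * d i ≤ 0 :=
  Finset.sum_mul_nonpos_of_forall_sum_sq_le hε fun c hc => h.2 _ (hd c hc)

theorem IsProj.sum_sub_eq_zero {y p : ℕ → ℝ} (h : IsProj x j y p) :
    ∑ i ∈ Finset.Icc 1 j, (y i - p i) = 0 := by
  have hshift : ∀ a : ℝ, ∑ i ∈ Finset.Icc 1 j, (y i - p i) * a ≤ 0 := fun a =>
    h.sum_mul_nonpos one_pos fun c _ ℓ hℓ hℓj => by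
      rw [slopeJump_add_mul, slopeJump_const, mul_zero, add_zero]
      exact h.1 ℓ hℓ hℓj
  have h1 := hshift 1
  have h2 := hshift (-1)
  simp only [mul_one, mul_neg_one, Finset.sum_neg_distrib] at h1 h2
  linarith

section StrictlyIncreasingKnots

variable (hx : ∀ i, 1 ≤ i → x i < x (i + 1))
include hx

theorem strictMonoOn_Ici_one : StrictMonoOn x (Set.Ici 1) :=
  strictMonoOn_of_lt_add_one Set.ordConnected_Ici fun a _ ha _ => hx a ha

theorem hinge_eq_zero {ℓ i : ℕ} (hi : 1 ≤ i) (hiℓ : i ≤ ℓ) : hinge x ℓ i = 0 :=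
  max_eq_right (sub_nonpos.2 ((strictMonoOn_Ici_one hx).monotoneOn hi (le_trans hi hiℓ) hiℓ))

theorem hinge_eq_sub {ℓ i : ℕ} (hℓ : 1 ≤ ℓ) (hℓi : ℓ ≤ i) : hinge x ℓ i = x i - x ℓ :=
  max_eq_left (sub_nonneg.2 ((strictMonoOn_Ici_one hx).monotoneOn hℓ (le_trans hℓ hℓi) hℓi))

theorem hinge_add_one_sub_hinge {ℓ k : ℕ} (hℓ : 1 ≤ ℓ) (hk : 1 ≤ k) :
    hinge x ℓ (k + 1) - hinge x ℓ k = if ℓ ≤ k then x (k + 1) - x k else 0 := by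
  split_ifs with h
  · rw [hinge_eq_sub hx hℓ (by omega), hinge_eq_sub hx hℓ h]
    ring
  · rw [hinge_eq_zero hx (by omega) (by omega), hinge_eq_zero hx hk (by omega), sub_self]

theorem slope_hinge {ℓ k : ℕ} (hℓ : 1 ≤ ℓ) (hk : 1 ≤ k) :
    slope x (hinge x ℓ) k = if ℓ ≤ k then 1 else 0 := by
  rw [slope, hinge_add_one_sub_hinge hx hℓ hk]
  split_ifs
  · exact div_self (sub_ne_zero.2 (hx k hk).ne')
  · exact zero_div _

theorem slopeJump_hinge {ℓ m : ℕ} (hℓ : 1 ≤ ℓ) (hm : 1 ≤ m) :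
    slopeJump x (hinge x ℓ) m = if m = ℓ then 1 else 0 := by
  obtain rfl | ⟨k, hk, rfl⟩ : m = 1 ∨ ∃ k, 1 ≤ k ∧ m = k + 1 :=
    (eq_or_lt_of_le hm).imp Eq.symm fun h => ⟨m - 1, by omega, by omega⟩
  · rw [slopeJump_one, slope_hinge hx hℓ le_rfl]
    split_ifs <;> first | omega | norm_num
  · rw [slopeJump_add_one _ hk, slope_hinge hx hℓ (by omega), slope_hinge hx hℓ hk]
    split_ifs <;> first | omega | norm_num

theorem eq_add_sum_slopeJump_mul_hinge (v : ℕ → ℝ) {i : ℕ} (hi : 1 ≤ i) (hij : i ≤ j) :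
    v i = v 1 + ∑ ℓ ∈ Finset.Icc 1 (j - 1), slopeJump x v ℓ * hinge x ℓ i := by
  induction i, hi using Nat.le_induction with
  | base =>
    rw [Finset.sum_eq_zero fun ℓ hℓ => by
      rw [hinge_eq_zero hx le_rfl (Finset.mem_Icc.1 hℓ).1, mul_zero], add_zero]
  | succ n hn ih =>
    have hfilter : (Finset.Icc 1 (j - 1)).filter (· ≤ n) = Finset.Icc 1 n := by
      ext ℓ; simp only [Finset.mem_filter, Finset.mem_Icc]; omega
    have hincr : ∑ ℓ ∈ Finset.Icc 1 (j - 1), slopeJump x v ℓ * (hinge x ℓ (n + 1) - hinge x ℓ n)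
        = v (n + 1) - v n := by
      calc _ = ∑ ℓ ∈ Finset.Icc 1 (j - 1),
              if ℓ ≤ n then slopeJump x v ℓ * (x (n + 1) - x n) else 0 :=
            Finset.sum_congr rfl fun ℓ hℓ => by
              rw [hinge_add_one_sub_hinge hx (Finset.mem_Icc.1 hℓ).1 hn, mul_ite, mul_zero]
        _ = slope x v n * (x (n + 1) - x n) := by
            rw [← Finset.sum_filter, hfilter, ← Finset.sum_mul, slope_eq_sum_slopeJump v hn]
        _ = v (n + 1) - v n := div_mul_cancel₀ _ (sub_ne_zero.2 (hx n hn).ne')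
    simp only [mul_sub, Finset.sum_sub_distrib] at hincr
    linarith [ih (by omega)]

theorem sum_mul_eq_add_sum_slopeJump_mul (d g : ℕ → ℝ) :
    ∑ i ∈ Finset.Icc 1 j, d i * g i = g 1 * ∑ i ∈ Finset.Icc 1 j, d i
      + ∑ ℓ ∈ Finset.Icc 1 (j - 1),
          slopeJump x g ℓ * ∑ i ∈ Finset.Icc 1 j, d i * hinge x ℓ i := by
  calc ∑ i ∈ Finset.Icc 1 j, d i * g i
      = ∑ i ∈ Finset.Icc 1 j, (g 1 * d i
          + ∑ ℓ ∈ Finset.Icc 1 (j - 1), slopeJump x g ℓ * (d i * hinge x ℓ i)) :=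
        Finset.sum_congr rfl fun i hi => by
          rw [eq_add_sum_slopeJump_mul_hinge hx g (Finset.mem_Icc.1 hi).1 (Finset.mem_Icc.1 hi).2,
            mul_add, Finset.mul_sum, mul_comm]
          exact congrArg _ (Finset.sum_congr rfl fun ℓ _ => by ring)
    _ = _ := by
      simp only [Finset.sum_add_distrib, ← Finset.mul_sum, Finset.sum_comm (s := Finset.Icc 1 j)]

theorem sum_sq_le_of_forall_slopeJump_sub_mul_nonpos {y q w : ℕ → ℝ}
    (h0 : ∑ i ∈ Finset.Icc 1 j, (y i - q i) = 0)
    (h : ∀ ℓ, 1 ≤ ℓ → ℓ ≤ j - 1 → (slopeJump x w ℓ - slopeJump x q ℓ)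
      * ∑ i ∈ Finset.Icc 1 j, (y i - q i) * hinge x ℓ i ≤ 0) :
    ∑ i ∈ Finset.Icc 1 j, (y i - q i) ^ 2 ≤ ∑ i ∈ Finset.Icc 1 j, (y i - w i) ^ 2 := by
  apply Finset.sum_sq_le_of_sum_mul_nonpos
  rw [sum_mul_eq_add_sum_slopeJump_mul hx, h0, mul_zero, zero_add]
  refine Finset.sum_nonpos fun ℓ hℓ => ?_
  rw [slopeJump_sub]
  exact h ℓ (Finset.mem_Icc.1 hℓ).1 (Finset.mem_Icc.1 hℓ).2

theorem InCone.add_mul_hinge {p : ℕ → ℝ} (hp : InCone x j p) {ℓ : ℕ} (hℓ : 1 ≤ ℓ) {c : ℝ}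
    (hc : 0 ≤ slopeJump x p ℓ + c) : InCone x j (fun i => p i + c * hinge x ℓ i) := by
  intro m hm hmj
  rw [slopeJump_add_mul, slopeJump_hinge hx hℓ hm]
  split_ifs with h
  · rwa [h, mul_one]
  · rw [mul_zero, add_zero]
    exact hp m hm hmj

theorem IsProj.sum_mul_hinge_nonpos {y p : ℕ → ℝ} (h : IsProj x j y p) {ℓ : ℕ} (hℓ : 1 ≤ ℓ)
    (hℓj : ℓ ≤ j - 1) :
    ∑ i ∈ Finset.Icc 1 j, (y i - p i) * hinge x ℓ i ≤ 0 :=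
  h.sum_mul_nonpos one_pos fun _ hc =>
    h.1.add_mul_hinge hx hℓ (add_nonneg (h.1 ℓ hℓ hℓj) hc.1.le)

theorem IsProj.sum_mul_hinge_eq_zero {y p : ℕ → ℝ} (h : IsProj x j y p) {ℓ : ℕ} (hℓ : 1 ≤ ℓ)
    (hℓj : ℓ ≤ j - 1) (hpos : 0 < slopeJump x p ℓ) :
    ∑ i ∈ Finset.Icc 1 j, (y i - p i) * hinge x ℓ i = 0 := by
  have hneg : ∑ i ∈ Finset.Icc 1 j, (y i - p i) * -hinge x ℓ i ≤ 0 :=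
    h.sum_mul_nonpos hpos fun c hc => by
      simpa only [mul_neg, neg_mul] using
        h.1.add_mul_hinge hx hℓ (c := -c) (by linarith [hc.2])
  simp only [mul_neg, Finset.sum_neg_distrib, neg_nonpos] at hneg
  exact le_antisymm (h.sum_mul_hinge_nonpos hx hℓ hℓj) hneg

theorem sum_sq_le_of_isProj_convexComb {v' v'' p' p'' w : ℕ → ℝ} {A : Set ℕ}
    (hp' : IsProj x j v' p') (hA' : knots x j p' = A)
    (hp'' : IsProj x j v'' p'') (hA'' : knots x j p'' = A) {t : ℝ} (ht : t ∈ Set.Icc (0 : ℝ) 1)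
    (hw : ∀ ℓ, 1 ≤ ℓ → ℓ ≤ j - 1 → ℓ ∉ A → 0 ≤ slopeJump x w ℓ) :
    ∑ i ∈ Finset.Icc 1 j, ((1 - t) * v' i + t * v'' i - ((1 - t) * p' i + t * p'' i)) ^ 2
      ≤ ∑ i ∈ Finset.Icc 1 j, ((1 - t) * v' i + t * v'' i - w i) ^ 2 := by
  have hres : ∀ g : ℕ → ℝ, ∑ i ∈ Finset.Icc 1 j,
      ((1 - t) * v' i + t * v'' i - ((1 - t) * p' i + t * p'' i)) * g i
        = (1 - t) * ∑ i ∈ Finset.Icc 1 j, (v' i - p' i) * g i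
          + t * ∑ i ∈ Finset.Icc 1 j, (v'' i - p'' i) * g i := fun g => by
    rw [Finset.mul_sum, Finset.mul_sum, ← Finset.sum_add_distrib]
    exact Finset.sum_congr rfl fun i _ => by ring
  have h1t : 0 ≤ 1 - t := sub_nonneg.2 ht.2
  apply sum_sq_le_of_forall_slopeJump_sub_mul_nonpos hx
  · simpa [hp'.sum_sub_eq_zero, hp''.sum_sub_eq_zero] using hres fun _ => 1
  intro ℓ hℓ hℓj
  rw [hres, slopeJump_linear]
  by_cases hℓA : ℓ ∈ A
  · rw [hp'.sum_mul_hinge_eq_zero hx hℓ hℓj ((hp'.1.mem_knots_iff hℓ hℓj).1 (hA' ▸ hℓA)),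
      hp''.sum_mul_hinge_eq_zero hx hℓ hℓj ((hp''.1.mem_knots_iff hℓ hℓj).1 (hA'' ▸ hℓA))]
    simp
  · have h0' : slopeJump x p' ℓ = 0 := not_not.1 fun h => hℓA (hA' ▸ (mem_knots_iff hℓ hℓj).2 h)
    have h0'' : slopeJump x p'' ℓ = 0 :=
      not_not.1 fun h => hℓA (hA'' ▸ (mem_knots_iff hℓ hℓj).2 h)
    rw [h0', h0'', mul_zero, mul_zero, add_zero, sub_zero]
    exact mul_nonpos_of_nonneg_of_nonpos (hw ℓ hℓ hℓj hℓA) (add_nonpos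
      (mul_nonpos_of_nonneg_of_nonpos h1t (hp'.sum_mul_hinge_nonpos hx hℓ hℓj))
      (mul_nonpos_of_nonneg_of_nonpos ht.1 (hp''.sum_mul_hinge_nonpos hx hℓ hℓj)))

end StrictlyIncreasingKnots

end IncreasingConvexCone

open IncreasingConvexCone in
theorem stmt14_general (j : ℕ) (x : ℕ → ℝ)
    (hx : ∀ i, 1 ≤ i → x i < x (i + 1)) :
    let lam : (ℕ → ℝ) → ℕ → ℝ := fun v ℓ =>
      if ℓ ≤ 1 then (v 2 - v 1) / (x 2 - x 1)
      else (v (ℓ + 1) - v ℓ) / (x (ℓ + 1) - x ℓ) - (v ℓ - v (ℓ - 1)) / (x ℓ - x (ℓ - 1))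
    let cone : (ℕ → ℝ) → Prop := fun v => ∀ ℓ, 1 ≤ ℓ → ℓ ≤ j - 1 → 0 ≤ lam v ℓ
    let dsq : (ℕ → ℝ) → (ℕ → ℝ) → ℝ := fun u v => ∑ i ∈ Finset.Icc 1 j, (u i - v i) ^ 2
    let isProj : (ℕ → ℝ) → (ℕ → ℝ) → Prop := fun y p =>
      cone p ∧ ∀ u, cone u → dsq y p ≤ dsq y u
    let knots : (ℕ → ℝ) → Set ℕ := fun v => {ℓ | 1 ≤ ℓ ∧ ℓ ≤ j - 1 ∧ lam v ℓ ≠ 0}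
    ∀ (A : Set ℕ) (v' v'' p' p'' : ℕ → ℝ),
      isProj v' p' → knots p' = A → isProj v'' p'' → knots p'' = A →
      ∀ t ∈ Set.Icc (0 : ℝ) 1, ∀ p, isProj (fun i => (1 - t) * v' i + t * v'' i) p →
        knots p = A ∧
        ∀ w : ℕ → ℝ, knots w ⊆ A →
          dsq (fun i => (1 - t) * v' i + t * v'' i) p ≤
            dsq (fun i => (1 - t) * v' i + t * v'' i) w := by
  intro _ _ _ _ _ A v' v'' p' p'' hp' hA' hp'' hA'' t ht p hp
  have hq : IsProj x j (fun i => (1 - t) * v' i + t * v'' i)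
      (fun i => (1 - t) * p' i + t * p'' i) :=
    ⟨InCone.convexComb hp'.1 hp''.1 ht, fun w hw =>
      sum_sq_le_of_isProj_convexComb hx hp' hA' hp'' hA'' ht fun ℓ hℓ hℓj _ => hw ℓ hℓ hℓj⟩
  have hpq := IsProj.eqOn hp hq
  refine ⟨(knots_congr hpq).trans (knots_convexComb hp'.1 hA' hp''.1 hA'' ht), fun w hw => ?_⟩
  calc _ = ∑ i ∈ Finset.Icc 1 j,
        ((1 - t) * v' i + t * v'' i - ((1 - t) * p' i + t * p'' i)) ^ 2 :=
      Finset.sum_congr rfl fun i hi => by rw [hpq i hi]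
    _ ≤ _ := sum_sq_le_of_isProj_convexComb hx hp' hA' hp'' hA'' ht fun ℓ hℓ hℓj hℓA =>
      (not_not.1 fun h => hℓA (hw ⟨hℓ, hℓj, h⟩)).ge

/-- Lemma S2 of the paper: if the projections of `v'` and `v''` onto the cone
`Λʲ` of increasing convex sequences both have knot set exactly `A`, then for
every `v` on the segment `[v', v'']`, the projection of `v` onto `Λʲ` also has
knot set `A` and coincides with the orthogonal projection of `v` onto the
linear span `L_A = {w : A(w) ⊆ A}`. -/
theorem stmt14 (j : ℕ) (hj : 2 ≤ j) (x : ℕ → ℝ)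
    (hx : ∀ i, 1 ≤ i → x i < x (i + 1)) :
    let lam : (ℕ → ℝ) → ℕ → ℝ := fun v ℓ =>
      if ℓ ≤ 1 then (v 2 - v 1) / (x 2 - x 1)
      else (v (ℓ + 1) - v ℓ) / (x (ℓ + 1) - x ℓ) - (v ℓ - v (ℓ - 1)) / (x ℓ - x (ℓ - 1))
    let cone : (ℕ → ℝ) → Prop := fun v => ∀ ℓ, 1 ≤ ℓ → ℓ ≤ j - 1 → 0 ≤ lam v ℓ
    let dsq : (ℕ → ℝ) → (ℕ → ℝ) → ℝ := fun u v => ∑ i ∈ Finset.Icc 1 j, (u i - v i) ^ 2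
    let isProj : (ℕ → ℝ) → (ℕ → ℝ) → Prop := fun y p =>
      cone p ∧ ∀ u, cone u → dsq y p ≤ dsq y u
    let knots : (ℕ → ℝ) → Set ℕ := fun v => {ℓ | 1 ≤ ℓ ∧ ℓ ≤ j - 1 ∧ lam v ℓ ≠ 0}
    ∀ (A : Set ℕ) (v' v'' p' p'' : ℕ → ℝ),
      isProj v' p' → knots p' = A → isProj v'' p'' → knots p'' = A →
      ∀ t ∈ Set.Icc (0 : ℝ) 1, ∀ p, isProj (fun i => (1 - t) * v' i + t * v'' i) p →
        knots p = A ∧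
        ∀ w : ℕ → ℝ, knots w ⊆ A →
          dsq (fun i => (1 - t) * v' i + t * v'' i) p ≤
            dsq (fun i => (1 - t) * v' i + t * v'' i) w :=
  stmt14_general j x hx
end

section
/- Let Λ ⊆ ℝⁿ be a nonempty closed convex set, F a face of Λ, and y ∈ ℝⁿ with Π_Λ(y) ∈ relint F. Then Π_Λ(y) = Π_{aff(F)}(y), the orthogonal projection of y onto the affine hull of F. -/
/-- Lemma S6(d) of the paper: if the projection of `y` onto a nonempty closed
convex set `Λ` lies in the relative interior of a face `F` of `Λ`, then it
equals the orthogonal projection of `y` onto the affine hull of `F`. -/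
theorem stmt15 (n : ℕ) (Λ F : Set (EuclideanSpace ℝ (Fin n)))
    (hne : Λ.Nonempty) (hcl : IsClosed Λ) (hcv : Convex ℝ Λ)
    (hFsub : F ⊆ Λ) (hFcv : Convex ℝ F)
    (hface : ∀ u ∈ Λ, ∀ v ∈ Λ, ∀ z ∈ openSegment ℝ u v, z ∈ F → segment ℝ u v ⊆ F)
    (y p : EuclideanSpace ℝ (Fin n))
    (hpΛ : p ∈ Λ) (hpmin : ∀ u ∈ Λ, dist y p ≤ dist y u)
    (hrel : p ∈ intrinsicInterior ℝ F) :
    p ∈ (affineSpan ℝ F : Set (EuclideanSpace ℝ (Fin n))) ∧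
      ∀ q ∈ (affineSpan ℝ F : Set (EuclideanSpace ℝ (Fin n))), dist y p ≤ dist y q := by
  obtain ⟨x, hx, hxp⟩ := mem_intrinsicInterior.1 hrel
  have hpF : p ∈ F := intrinsicInterior_subset hrel
  have hpA : p ∈ (affineSpan ℝ F : Set (EuclideanSpace ℝ (Fin n))) :=
    subset_affineSpan ℝ F hpF
  refine ⟨hpA, ?_⟩
  intro q hq
  obtain ⟨ε, hε, hball⟩ := Metric.isOpen_iff.1 isOpen_interior x hx
  have hball' : Metric.ball x ε ⊆ ((↑) ⁻¹' F : Set <| affineSpan ℝ F) :=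
    hball.trans interior_subset
  by_cases hqp : q = p
  · simp [hqp]
  have hd : (0:ℝ) < dist q p := dist_pos.2 hqp
  set t : ℝ := min 1 (ε / (2 * dist q p)) with ht
  have ht0 : 0 < t := lt_min one_pos (by positivity)
  have ht1 : t ≤ 1 := min_le_left _ _
  set z : EuclideanSpace ℝ (Fin n) := (1 - t) • p + t • q with hz
  have hzA : z ∈ affineSpan ℝ F := by
    have h := AffineSubspace.smul_vsub_vadd_mem (affineSpan ℝ F) t hq hpA hpA
    have hzeq : z = t • (q -ᵥ p) +ᵥ p := by
      simp only [vsub_eq_sub, vadd_eq_add, smul_sub, hz, sub_smul, one_smul]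
      abel
    rw [hzeq]; exact h
  have hdzp : dist z p < ε := by
    have : z - p = t • (q - p) := by
      simp only [hz, sub_smul, one_smul, smul_sub]; abel
    rw [dist_eq_norm, this, norm_smul, Real.norm_eq_abs, abs_of_pos ht0]
    have h1 : t ≤ ε / (2 * dist q p) := min_le_right _ _
    have : t * dist q p ≤ ε / 2 := by
      rw [div_mul_eq_div_div] at h1
      calc t * dist q p ≤ (ε / 2 / dist q p) * dist q p := by
            exact mul_le_mul_of_nonneg_right h1 hd.le
        _ = ε / 2 := by field_simp
    calc t * ‖q - p‖ = t * dist q p := by rw [dist_eq_norm]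
      _ ≤ ε / 2 := this
      _ < ε := by linarith
  have hzF : z ∈ F := by
    have : (⟨z, hzA⟩ : affineSpan ℝ F) ∈ Metric.ball x ε := by
      rw [Metric.mem_ball, Subtype.dist_eq, hxp]
      exact hdzp
    exact hball' this
  have hle : dist y p ≤ dist y z := hpmin z (hFsub hzF)
  have hconv : dist y z ≤ (1 - t) * dist y p + t * dist y q := by
    have hy : y - z = (1 - t) • (y - p) + t • (y - q) := by
      simp only [hz, smul_sub, sub_smul, one_smul]; abel
    rw [dist_eq_norm, hy]
    calc ‖(1 - t) • (y - p) + t • (y - q)‖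
        ≤ ‖(1 - t) • (y - p)‖ + ‖t • (y - q)‖ := norm_add_le _ _
      _ = (1 - t) * ‖y - p‖ + t * ‖y - q‖ := by
          rw [norm_smul, norm_smul, Real.norm_eq_abs, Real.norm_eq_abs,
            abs_of_nonneg (by linarith), abs_of_pos ht0]
      _ = (1 - t) * dist y p + t * dist y q := by rw [dist_eq_norm, dist_eq_norm]
  nlinarith [hle, hconv, ht0]
end

section
/- Fix x ∈ (0,1) in the interior of the convex support of P^X and ℓ ≥ 0. Let (P_n) be a sequence of Borel probability measures on [0,1] × ℝ with finite second moments converging weakly to P. Then there is a finite constant B (depending on x, ℓ, P) such that for every sequence of increasing functions f_n: [0,1] → ℝ with limsup_n ∫ (y − f_n(x'))² dP_n(x',y) ≤ ℓ, one has limsup_n |f_n(x)| < B. -/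
/-!
Truncating `y` to `|y| < K` keeps positive `P`-mass on both open pieces `{x' < x, |y| < K}` and
`{x < x', |y| < K}`, so by the portmanteau theorem `P_n` eventually gives each of them mass more
than some `c > 0`. If an increasing `f_n` had `f_n(x) ≥ K + √N`, it would miss every `y` on the
right piece by more than `√N`, so its loss would be at least `N c`; symmetrically for
`f_n(x) ≤ -(K + √N)` on the left piece. Choosing `N` with `N c > ℓ + 1` bounds `|f_n(x)|`
eventually by `K + √N`.
-/

open MeasureTheory Filter
open scoped Topology ENNReal

lemma eventually_lt_measure_of_isOpen {Ω : Type*} [MeasurableSpace Ω] [TopologicalSpace Ω]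
    [OpensMeasurableSpace Ω] [HasOuterApproxClosed Ω]
    (P : Measure Ω) (Pn : ℕ → Measure Ω) [IsProbabilityMeasure P]
    [∀ n, IsProbabilityMeasure (Pn n)]
    (hweak : ∀ g : Ω → ℝ, Continuous g → (∃ C, ∀ p, |g p| ≤ C) →
      Tendsto (fun n => ∫ p, g p ∂(Pn n)) atTop (𝓝 (∫ p, g p ∂P)))
    {G : Set Ω} (hG : IsOpen G) {r : ℝ≥0∞} (hr : r < P G) :
    ∀ᶠ n in atTop, r < Pn n G := by
  let μ : ProbabilityMeasure Ω := ⟨P, inferInstance⟩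
  let μs : ℕ → ProbabilityMeasure Ω := fun n => ⟨Pn n, inferInstance⟩
  have hlim : Tendsto μs atTop (𝓝 μ) :=
    ProbabilityMeasure.tendsto_iff_forall_integral_tendsto.2 fun g =>
      hweak g g.continuous ⟨‖g‖, fun p => g.norm_coe_le_norm p⟩
  exact eventually_lt_of_lt_liminf
    (hr.trans_le (ProbabilityMeasure.le_liminf_measure_open_of_tendsto hlim hG))

lemma eventually_pos_measure_inter_abs_snd_lt {α : Type*} [MeasurableSpace α]
    (μ : Measure (α × ℝ)) {A : Set (α × ℝ)} (hA : 0 < μ A) :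
    ∀ᶠ K in atTop, 0 < μ (A ∩ {p | |p.2| < K}) := by
  have hmono : Monotone fun K : ℝ => A ∩ {p : α × ℝ | |p.2| < K} :=
    fun K K' hK p hp => ⟨hp.1, hp.2.trans_le hK⟩
  have hunion : (⋃ K : ℝ, A ∩ {p : α × ℝ | |p.2| < K}) = A := by
    ext p
    simpa using fun _ => exists_gt |p.2|
  have := tendsto_measure_iUnion_atTop (μ := μ) hmono
  rw [hunion] at this
  exact this.eventually_const_lt hA

lemma const_mul_measure_le_lintegral {α : Type*} [MeasurableSpace α] {μ : Measure α}
    {F : α → ℝ≥0∞} {U : Set α} {a : ℝ≥0∞} (hU : MeasurableSet U)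
    (h : ∀ᵐ p ∂μ, p ∈ U → a ≤ F p) : a * μ U ≤ ∫⁻ p, F p ∂μ :=
  calc a * μ U = ∫⁻ p, U.indicator (fun _ => a) p ∂μ := (lintegral_indicator_const hU a).symm
    _ ≤ ∫⁻ p, F p ∂μ := lintegral_mono_ae <| h.mono fun p hp => by
        by_cases hpU : p ∈ U <;> simp [hpU, hp]

section MonotoneFit

variable {μ : Measure (ℝ × ℝ)} {s : Set ℝ} {f : ℝ → ℝ} {x K : ℝ} {N : ℕ} {L : ℝ≥0∞}

lemma lt_add_sqrt_of_lintegral_sq_lt (hμ : ∀ᵐ p ∂μ, p.1 ∈ s) (hf : MonotoneOn f s) (hx : x ∈ s)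
    (hN : L ≤ N * μ {p | x < p.1 ∧ |p.2| < K})
    (hloss : ∫⁻ p, ENNReal.ofReal ((p.2 - f p.1) ^ 2) ∂μ < L) :
    f x < K + √N := by
  by_contra! hfx
  refine hloss.not_ge (hN.trans (const_mul_measure_le_lintegral ?_ ?_))
  · exact (measurableSet_lt measurable_const measurable_fst).inter
      (measurableSet_lt measurable_snd.abs measurable_const)
  filter_upwards [hμ] with p hps ⟨hxp, hpK⟩
  have hgap : √N < f p.1 - p.2 := by
    linarith [hf hx hps hxp.le, (abs_lt.1 hpK).2]
  rw [← ENNReal.ofReal_natCast, ← neg_sub, neg_sq]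
  exact ENNReal.ofReal_le_ofReal (Real.lt_sq_of_sqrt_lt hgap).le

lemma neg_add_sqrt_lt_of_lintegral_sq_lt (hμ : ∀ᵐ p ∂μ, p.1 ∈ s) (hf : MonotoneOn f s)
    (hx : x ∈ s) (hN : L ≤ N * μ {p | p.1 < x ∧ |p.2| < K})
    (hloss : ∫⁻ p, ENNReal.ofReal ((p.2 - f p.1) ^ 2) ∂μ < L) :
    -(K + √N) < f x := by
  by_contra! hfx
  refine hloss.not_ge (hN.trans (const_mul_measure_le_lintegral ?_ ?_))
  · exact (measurableSet_lt measurable_fst measurable_const).inter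
      (measurableSet_lt measurable_snd.abs measurable_const)
  filter_upwards [hμ] with p hps ⟨hpx, hpK⟩
  have hgap : √N < p.2 - f p.1 := by
    linarith [hf hps hx hpx.le, (abs_lt.1 hpK).1]
  rw [← ENNReal.ofReal_natCast]
  exact ENNReal.ofReal_le_ofReal (Real.lt_sq_of_sqrt_lt hgap).le

end MonotoneFit

theorem stmt18_general (x ℓ : ℝ) (hx : x ∈ Set.Ioo (0 : ℝ) 1)
    (P : Measure (ℝ × ℝ)) (Pn : ℕ → Measure (ℝ × ℝ))
    [IsProbabilityMeasure P] [∀ n, IsProbabilityMeasure (Pn n)]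
    (hPnsupp : ∀ n, Pn n {p : ℝ × ℝ | p.1 ∈ Set.Icc 0 1} = 1)
    (hxL : 0 < P {p : ℝ × ℝ | p.1 < x})
    (hxR : 0 < P {p : ℝ × ℝ | x < p.1})
    (hweak : ∀ g : ℝ × ℝ → ℝ, Continuous g → (∃ C, ∀ p, |g p| ≤ C) →
      Tendsto (fun n => ∫ p, g p ∂(Pn n)) atTop (nhds (∫ p, g p ∂P))) :
    ∃ B : ℝ, ∀ f : ℕ → ℝ → ℝ,
      (∀ n, MonotoneOn (f n) (Set.Icc (0 : ℝ) 1)) →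
      limsup (fun n => ∫⁻ p, ENNReal.ofReal ((p.2 - f n p.1) ^ 2) ∂(Pn n)) atTop ≤
        ENNReal.ofReal ℓ →
      limsup (fun n => ENNReal.ofReal |f n x|) atTop < ENNReal.ofReal B := by
  obtain ⟨K, hK, hPL, hPR⟩ := ((eventually_gt_atTop 0).and
    ((eventually_pos_measure_inter_abs_snd_lt P hxL).and
      (eventually_pos_measure_inter_abs_snd_lt P hxR))).exists
  set Gₗ := {p : ℝ × ℝ | p.1 < x} ∩ {p | |p.2| < K}
  set Gᵣ := {p : ℝ × ℝ | x < p.1} ∩ {p | |p.2| < K}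
  have hGₗ : IsOpen Gₗ := (isOpen_lt continuous_fst continuous_const).inter
    (isOpen_lt continuous_snd.abs continuous_const)
  have hGᵣ : IsOpen Gᵣ := (isOpen_lt continuous_const continuous_fst).inter
    (isOpen_lt continuous_snd.abs continuous_const)
  set c := min (P Gₗ) (P Gᵣ) / 2
  have hc : c ≠ 0 := (ENNReal.half_pos (lt_min hPL hPR).ne').ne'
  have hcP : c < min (P Gₗ) (P Gᵣ) := ENNReal.half_lt_self (lt_min hPL hPR).ne'
    (ne_top_of_le_ne_top (measure_ne_top P Gₗ) (min_le_left _ _))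
  have hevL := eventually_lt_measure_of_isOpen P Pn hweak hGₗ (hcP.trans_le (min_le_left _ _))
  have hevR := eventually_lt_measure_of_isOpen P Pn hweak hGᵣ (hcP.trans_le (min_le_right _ _))
  set L := ENNReal.ofReal ℓ + 1
  obtain ⟨N, hN⟩ := ENNReal.exists_nat_mul_gt hc (by finiteness : L ≠ ⊤)
  refine ⟨K + √N + 1, fun f hf hloss => ?_⟩
  have hsupp : ∀ n, ∀ᵐ p ∂(Pn n), p.1 ∈ Set.Icc (0 : ℝ) 1 := fun n =>
    (ae_iff_prob_eq_one (by measurability)).2 (hPnsupp n)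
  have hxI : x ∈ Set.Icc (0 : ℝ) 1 := Set.Ioo_subset_Icc_self hx
  have hbound : ∀ᶠ n in atTop, |f n x| < K + √N := by
    filter_upwards [hevL, hevR, eventually_lt_of_limsup_lt
      (hloss.trans_lt (ENNReal.lt_add_right ENNReal.ofReal_ne_top one_ne_zero))]
      with n hnL hnR hnloss
    exact abs_lt.2
      ⟨neg_add_sqrt_lt_of_lintegral_sq_lt (hsupp n) (hf n) hxI
          (hN.le.trans (mul_le_mul_right hnL.le _)) hnloss,
        lt_add_sqrt_of_lintegral_sq_lt (hsupp n) (hf n) hxI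
          (hN.le.trans (mul_le_mul_right hnR.le _)) hnloss⟩
  calc limsup (fun n => ENNReal.ofReal |f n x|) atTop ≤ ENNReal.ofReal (K + √N) :=
        limsup_le_of_le (by isBoundedDefault)
          (hbound.mono fun n hn => ENNReal.ofReal_le_ofReal hn.le)
    _ < ENNReal.ofReal (K + √N + 1) := by
        rw [ENNReal.ofReal_lt_ofReal_iff (by positivity)]
        linarith

/-- Lemma S7 of the paper: for `x` interior to the convex support of `P^X` and
`ℓ ≥ 0`, there is a finite bound `B` such that any sequence of increasing
functions whose losses under `P_n` have limsup at most `ℓ` satisfies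
`limsup_n |f_n(x)| < B`, where `P_n → P` weakly. -/
theorem stmt18 (x ℓ : ℝ) (hx : x ∈ Set.Ioo (0 : ℝ) 1) (hℓ : 0 ≤ ℓ)
    (P : Measure (ℝ × ℝ)) (Pn : ℕ → Measure (ℝ × ℝ))
    [IsProbabilityMeasure P] [∀ n, IsProbabilityMeasure (Pn n)]
    (hPsupp : P {p : ℝ × ℝ | p.1 ∈ Set.Icc 0 1} = 1)
    (hPnsupp : ∀ n, Pn n {p : ℝ × ℝ | p.1 ∈ Set.Icc 0 1} = 1)
    (hP2 : Integrable (fun p : ℝ × ℝ => ‖p‖ ^ 2) P)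
    (hPn2 : ∀ n, Integrable (fun p : ℝ × ℝ => ‖p‖ ^ 2) (Pn n))
    (hxL : 0 < P {p : ℝ × ℝ | p.1 < x})
    (hxR : 0 < P {p : ℝ × ℝ | x < p.1})
    (hweak : ∀ g : ℝ × ℝ → ℝ, Continuous g → (∃ C, ∀ p, |g p| ≤ C) →
      Tendsto (fun n => ∫ p, g p ∂(Pn n)) atTop (nhds (∫ p, g p ∂P))) :
    ∃ B : ℝ, ∀ f : ℕ → ℝ → ℝ,
      (∀ n, MonotoneOn (f n) (Set.Icc (0 : ℝ) 1)) →
      limsup (fun n => ∫⁻ p, ENNReal.ofReal ((p.2 - f n p.1) ^ 2) ∂(Pn n)) atTop ≤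
        ENNReal.ofReal ℓ →
      limsup (fun n => ENNReal.ofReal |f n x|) atTop < ENNReal.ofReal B :=
  stmt18_general x ℓ hx P Pn hPnsupp hxL hxR hweak
end
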